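/- arXiv:2001.02603 — 7 statements merged into one kernel-verified Lean document; each statement's English description precedes it below -/
import Mathlib

section
/- Let X and Y be compact metrizable spaces, π : X → Y a continuous map, and 𝒰 a finite open cover of X. If there exists a finite open cover 𝒲 of X with ord(𝒲) ≤ k such that the cover {W ∩ π⁻¹(y) : W ∈ 𝒲, y ∈ Y} refines 𝒰 (i.e., for every W ∈ 𝒲 and y ∈ Y there is U ∈ 𝒰 with W ∩ π⁻¹(y) ⊆ U), then there exists a compact metrizable space P of covering dimension at most k and a continuous map f : X → P such that for every p ∈ P and y ∈ Y, the set f⁻¹(p) ∩ π⁻¹(y) is contained in some element of 𝒰. -/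
open scoped Classical
open Finset

/-- `𝒰` is a finite open cover of `X`. -/
def IsFinOpenCover {X : Type*} [TopologicalSpace X] (𝒰 : Finset (Set X)) : Prop :=
  (∀ U ∈ 𝒰, IsOpen U) ∧ ⋃₀ (𝒰 : Set (Set X)) = Set.univ

/-- The number of members of `𝒰` containing `x` (so `ord 𝒰 ≤ k` iff `mult 𝒰 x ≤ k + 1` for all `x`). -/
noncomputable def mult {X : Type*} (𝒰 : Finset (Set X)) (x : X) : ℕ :=
  (𝒰.filter fun U => x ∈ U).card

/-- The covering dimension of `P` is at most `k`. -/
def CovDimLE (P : Type*) [TopologicalSpace P] (k : ℕ) : Prop :=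
  ∀ 𝒰 : Finset (Set P), IsFinOpenCover 𝒰 →
    ∃ 𝒱 : Finset (Set P), IsFinOpenCover 𝒱 ∧ (∀ p : P, mult 𝒱 p ≤ k + 1) ∧
      ∀ V ∈ 𝒱, ∃ U ∈ 𝒰, V ⊆ U


namespace NerveAux

variable {m : ℕ}

/-- Star condition: `v` is (essentially) a vertex of the carrier of `x` in the scaled
Freudenthal triangulation; membership in the open star is given by strict inequalities. -/
def SC (x : Fin m → ℝ) (v : Fin m → ℤ) : Prop :=
  (∀ i, |(v i : ℝ) - x i| < 1) ∧ ∀ i j, ((v i : ℝ) - x i) - ((v j : ℝ) - x j) < 1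

lemma SC.shape {x : Fin m → ℝ} {v : Fin m → ℤ} (h : SC x v) (i : Fin m) :
    v i = ⌊x i⌋ ∨ (v i = ⌊x i⌋ + 1 ∧ Int.fract (x i) ≠ 0) := by
  have h1 := abs_lt.1 (h.1 i)
  have hfl := Int.floor_le (x i)
  have hfu := Int.lt_floor_add_one (x i)
  have hlb : ⌊x i⌋ ≤ v i := by
    have h2 : (⌊x i⌋ : ℝ) < (v i : ℝ) + 1 := by linarith
    have h3 : ⌊x i⌋ < v i + 1 := by exact_mod_cast h2
    omega
  have hub : v i ≤ ⌊x i⌋ + 1 := by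
    have h2 : (v i : ℝ) < ((⌊x i⌋ : ℝ) + 1) + 1 := by linarith
    have h3 : (v i : ℝ) < ((⌊x i⌋ + 1 + 1 : ℤ) : ℝ) := by push_cast; linarith
    have h4 : v i < ⌊x i⌋ + 1 + 1 := by exact_mod_cast h3
    omega
  rcases eq_or_lt_of_le hlb with heq | hlt
  · exact Or.inl heq.symm
  · have hv : v i = ⌊x i⌋ + 1 := by omega
    refine Or.inr ⟨hv, ?_⟩
    intro hfr
    have hx : x i = (⌊x i⌋ : ℝ) := by
      have h' := Int.self_sub_floor (x i)
      rw [hfr] at h'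
      linarith
    rw [hv] at h1
    push_cast at h1
    linarith [h1.2]

lemma SC.ceil (x : Fin m → ℝ) : SC x (fun i => ⌈x i⌉) := by
  constructor
  · intro i
    rw [abs_lt]
    constructor
    · show -1 < ((⌈x i⌉ : ℤ) : ℝ) - x i
      linarith [Int.le_ceil (x i)]
    · show ((⌈x i⌉ : ℤ) : ℝ) - x i < 1
      linarith [Int.ceil_lt_add_one (x i)]
  · intro i j
    have h1 := Int.ceil_lt_add_one (x i)
    have h2 := Int.le_ceil (x j)
    show ((⌈x i⌉ : ℤ) : ℝ) - x i - (((⌈x j⌉ : ℤ) : ℝ) - x j) < 1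
    linarith

/-- The finite set of nonzero fractional parts of coordinates of `x`. -/
noncomputable def Tset (x : Fin m → ℝ) : Finset ℝ :=
  (univ.filter fun i => Int.fract (x i) ≠ 0).image fun i => Int.fract (x i)

lemma sup_spec {x : Fin m → ℝ} {v : Fin m → ℤ} (ne : (univ : Finset (Fin m)).Nonempty)
    (hv : SC x v) (hnf : ¬ ∀ i, v i = ⌊x i⌋) :
    ∃ j, v j = ⌊x j⌋ + 1 ∧ Int.fract (x j) ≠ 0 ∧
      univ.sup' ne (fun i => (v i : ℝ) - x i) = (v j : ℝ) - x j := by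
  obtain ⟨j, -, hj⟩ := Finset.exists_mem_eq_sup' ne (fun i => (v i : ℝ) - x i)
  push_neg at hnf
  obtain ⟨i0, hi0⟩ := hnf
  rcases hv.shape i0 with h | ⟨h1, h2⟩
  · exact absurd h hi0
  have hpos : (0 : ℝ) < (v i0 : ℝ) - x i0 := by
    rw [h1]
    have hfr := Int.fract_lt_one (x i0)
    have := Int.self_sub_floor (x i0)
    push_cast
    linarith
  have hsup_pos : 0 < univ.sup' ne (fun i => (v i : ℝ) - x i) :=
    lt_of_lt_of_le hpos (Finset.le_sup' (fun i => (v i : ℝ) - x i) (mem_univ i0))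
  rcases hv.shape j with hj0 | ⟨hj1, hj2⟩
  · exfalso
    rw [hj] at hsup_pos
    rw [hj0] at hsup_pos
    have := Int.floor_le (x j)
    linarith
  · exact ⟨j, hj1, hj2, hj⟩

lemma asym {x : Fin m → ℝ} {v w : Fin m → ℤ} (ne : (univ : Finset (Fin m)).Nonempty)
    (hv : SC x v) (hw : SC x w)
    (hsup : univ.sup' ne (fun i => (v i : ℝ) - x i) = univ.sup' ne (fun i => (w i : ℝ) - x i))
    (hnw : ¬ ∀ i, w i = ⌊x i⌋) (i : Fin m)
    (hvi : v i = ⌊x i⌋ + 1) (hwi : w i = ⌊x i⌋) : False := by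
  obtain ⟨j, hj1, hj2, hj3⟩ := sup_spec ne hw hnw
  have h1 := hw.2 j i
  have h2 : ((v i : ℝ) - x i) ≤ (w j : ℝ) - x j := by
    calc (v i : ℝ) - x i ≤ univ.sup' ne (fun i => (v i : ℝ) - x i) :=
          Finset.le_sup' (fun i => (v i : ℝ) - x i) (mem_univ i)
      _ = (w j : ℝ) - x j := by rw [hsup, hj3]
  rw [hj1, hwi] at h1
  rw [hvi, hj1] at h2
  push_cast at h1 h2
  linarith

lemma card_SC_le (hm : 0 < m) (x : Fin m → ℝ) (S : Finset (Fin m → ℤ)) :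
    (S.filter fun v => SC x v).card ≤ (Tset x).card + 1 := by
  have ne : (univ : Finset (Fin m)).Nonempty := ⟨⟨0, hm⟩, mem_univ _⟩
  set f : (Fin m → ℤ) → ℝ := fun v =>
    if ∀ i, v i = ⌊x i⌋ then 2 else 1 - univ.sup' ne (fun i => (v i : ℝ) - x i) with hf
  have hval : ∀ v : Fin m → ℤ, SC x v → ¬ (∀ i, v i = ⌊x i⌋) →
      ∃ j, f v = Int.fract (x j) ∧ Int.fract (x j) ≠ 0 := by
    intro v hv hnf
    obtain ⟨j, hj1, hj2, hj3⟩ := sup_spec ne hv hnf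
    refine ⟨j, ?_, hj2⟩
    rw [hf]
    simp only [if_neg hnf, hj3, hj1]
    have := Int.self_sub_floor (x j)
    push_cast
    linarith
  have key : ∀ v ∈ S.filter (fun v => SC x v), f v ∈ insert (2 : ℝ) (Tset x) := by
    intro v hv
    rw [Finset.mem_filter] at hv
    by_cases hnf : ∀ i, v i = ⌊x i⌋
    · rw [hf]; simp only [if_pos hnf]; exact Finset.mem_insert_self _ _
    · obtain ⟨j, hj, hj2⟩ := hval v hv.2 hnf
      rw [hj]
      exact Finset.mem_insert_of_mem
        (Finset.mem_image_of_mem _ (Finset.mem_filter.2 ⟨mem_univ _, hj2⟩))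
  refine le_trans (Finset.card_le_card_of_injOn f key ?_) ?_
  · intro v hv w hw hvw
    simp only [Finset.coe_filter, Set.mem_setOf_eq] at hv hw
    by_cases hnv : ∀ i, v i = ⌊x i⌋ <;> by_cases hnw : ∀ i, w i = ⌊x i⌋
    · funext i; rw [hnv i, hnw i]
    · exfalso
      obtain ⟨j, hj, hj2⟩ := hval w hw.2 hnw
      have hfv : f v = 2 := by rw [hf]; simp only [if_pos hnv]
      rw [hfv, hj] at hvw
      have := Int.fract_lt_one (x j)
      linarith
    · exfalso
      obtain ⟨j, hj, hj2⟩ := hval v hv.2 hnv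
      have hfw : f w = 2 := by rw [hf]; simp only [if_pos hnw]
      rw [hfw, hj] at hvw
      have := Int.fract_lt_one (x j)
      linarith
    · have hsup : univ.sup' ne (fun i => (v i : ℝ) - x i)
          = univ.sup' ne (fun i => (w i : ℝ) - x i) := by
        rw [hf] at hvw
        simp only [if_neg hnv, if_neg hnw] at hvw
        linarith
      funext i
      rcases hv.2.shape i with h1 | ⟨h1, -⟩ <;> rcases hw.2.shape i with h2 | ⟨h2, -⟩
      · rw [h1, h2]
      · exact absurd (asym ne hw.2 hv.2 hsup.symm hnv i h2 h1) not_false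
      · exact absurd (asym ne hv.2 hw.2 hsup hnw i h1 h2) not_false
      · rw [h1, h2]
  · calc (insert (2 : ℝ) (Tset x)).card ≤ (Tset x).card + 1 := Finset.card_insert_le _ _

/-- Tail sums. -/
def tl (t : Fin m → ℝ) (n : ℕ) : ℝ :=
  ∑ j ∈ univ.filter (fun j : Fin m => n ≤ j.val), t j

/-- The scaled partial-sum coordinates. -/
def xv (N : ℕ) (t : Fin m → ℝ) : Fin m → ℝ := fun i => (N : ℝ) * tl t i.val

lemma tl_nonneg {t : Fin m → ℝ} (h0 : ∀ i, 0 ≤ t i) (n : ℕ) : 0 ≤ tl t n :=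
  Finset.sum_nonneg fun j _ => h0 j

lemma tl_le_one {t : Fin m → ℝ} (h0 : ∀ i, 0 ≤ t i) (h1 : ∑ i, t i = 1) (n : ℕ) :
    tl t n ≤ 1 := by
  rw [← h1]
  exact Finset.sum_le_sum_of_subset_of_nonneg (Finset.subset_univ _) fun j _ _ => h0 j

lemma tl_step (t : Fin m → ℝ) (i : Fin m) : tl t i.val = t i + tl t (i.val + 1) := by
  have hins : univ.filter (fun j : Fin m => i.val ≤ j.val)
      = insert i (univ.filter fun j : Fin m => i.val + 1 ≤ j.val) := by
    ext j
    simp only [Finset.mem_filter, Finset.mem_univ, true_and, Finset.mem_insert]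
    constructor
    · intro h
      rcases Nat.eq_or_lt_of_le h with h' | h'
      · exact Or.inl (Fin.ext h'.symm)
      · exact Or.inr h'
    · rintro (rfl | h)
      · exact le_refl _
      · omega
  rw [tl, hins, Finset.sum_insert (by simp)]
  rfl

lemma tl_of_le {t : Fin m → ℝ} {n : ℕ} (hn : m ≤ n) : tl t n = 0 := by
  rw [tl]
  apply Finset.sum_eq_zero
  intro j hj
  rw [Finset.mem_filter] at hj
  exfalso
  have := j.isLt
  omega

lemma Tset_card_le (N : ℕ) {k : ℕ} (t : Fin m → ℝ) (h0 : ∀ i, 0 ≤ t i)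
    (h1 : ∑ i, t i = 1) (hs : (univ.filter fun i => t i ≠ 0).card ≤ k + 1) :
    (Tset (xv N t)).card ≤ k := by
  set supp := univ.filter fun i : Fin m => t i ≠ 0 with hsupp
  have hne : supp.Nonempty := by
    rw [Finset.nonempty_iff_ne_empty]
    intro h
    have : ∑ i, t i = 0 := Finset.sum_eq_zero fun i _ => by
      by_contra ht
      have : i ∈ supp := Finset.mem_filter.2 ⟨mem_univ _, ht⟩
      rw [h] at this
      exact absurd this (Finset.notMem_empty i)
    rw [h1] at this
    norm_num at this
  set s1 := supp.min' hne with hs1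
  have hsurj : Set.SurjOn (fun s : Fin m => Int.fract (xv N t s))
      ↑(supp.erase s1) ↑(Tset (xv N t)) := by
    intro τ hτ
    rw [Finset.mem_coe, Tset, Finset.mem_image] at hτ
    obtain ⟨i, hi, hiτ⟩ := hτ
    rw [Finset.mem_filter] at hi
    have hfr := hi.2
    set A := supp.filter (fun j : Fin m => i.val ≤ j.val) with hA
    have hAne : A.Nonempty := by
      rw [Finset.nonempty_iff_ne_empty]
      intro h
      have htl : tl t i.val = 0 := by
        apply Finset.sum_eq_zero
        intro j hj
        rw [Finset.mem_filter] at hj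
        by_contra ht
        have : j ∈ A := Finset.mem_filter.2 ⟨Finset.mem_filter.2 ⟨mem_univ _, ht⟩, hj.2⟩
        rw [h] at this
        exact absurd this (Finset.notMem_empty j)
      rw [xv, htl, mul_zero] at hfr
      exact hfr Int.fract_zero
    set s := A.min' hAne with hsdef
    have hsA : s ∈ A := Finset.min'_mem _ _
    have hsm : s ∈ supp := (Finset.mem_filter.1 hsA).1
    have his : i.val ≤ s.val := (Finset.mem_filter.1 hsA).2
    have heq : tl t s.val = tl t i.val := by
      apply Finset.sum_subset
      · intro j hj
        rw [Finset.mem_filter] at hj ⊢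
        exact ⟨hj.1, le_trans his hj.2⟩
      · intro j hj hj2
        rw [Finset.mem_filter] at hj hj2
        by_contra ht
        have hjA : j ∈ A :=
          Finset.mem_filter.2 ⟨Finset.mem_filter.2 ⟨mem_univ _, ht⟩, hj.2⟩
        have := Finset.min'_le A j hjA
        rw [← hsdef] at this
        push_neg at hj2
        have := hj2 hj.1
        omega
    have hs_ne : s ≠ s1 := by
      intro h
      have htl : tl t i.val = 1 := by
        rw [← h1]
        apply Finset.sum_subset (Finset.subset_univ _)
        intro j _ hj2
        rw [Finset.mem_filter] at hj2
        by_contra ht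
        have hjs : j ∈ supp := Finset.mem_filter.2 ⟨mem_univ _, ht⟩
        have h3 := Finset.min'_le supp j hjs
        rw [← hs1, ← h] at h3
        push_neg at hj2
        have := hj2 (mem_univ j)
        have : j.val < i.val := by omega
        have : s.val ≤ j.val := by exact_mod_cast Fin.le_def.1 h3
        omega
      rw [xv, htl, mul_one] at hfr
      exact hfr (Int.fract_natCast N)
    refine ⟨s, ?_, ?_⟩
    · rw [Finset.mem_coe, Finset.mem_erase]
      exact ⟨hs_ne, hsm⟩
    · show Int.fract (xv N t s) = τ
      rw [← hiτ, xv, xv, heq]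
  have hcard := Finset.card_le_card_of_surjOn _ hsurj
  have herase : (supp.erase s1).card = supp.card - 1 :=
    Finset.card_erase_of_mem (Finset.min'_mem _ _)
  rw [herase] at hcard
  omega

end NerveAux

theorem stmt0 {X Y : Type*} [TopologicalSpace X] [CompactSpace X] [TopologicalSpace.MetrizableSpace X]
    [TopologicalSpace Y] [CompactSpace Y] [TopologicalSpace.MetrizableSpace Y]
    (π : X → Y) (hπ : Continuous π)
    (𝒰 : Finset (Set X)) (h𝒰 : IsFinOpenCover 𝒰)
    (k : ℕ) (𝒲 : Finset (Set X)) (h𝒲 : IsFinOpenCover 𝒲)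
    (hord : ∀ x : X, mult 𝒲 x ≤ k + 1)
    (href : ∀ W ∈ 𝒲, ∀ y : Y, ∃ U ∈ 𝒰, W ∩ π ⁻¹' {y} ⊆ U) :
    ∃ (P : Type) (_ : TopologicalSpace P) (_ : CompactSpace P)
      (_ : TopologicalSpace.MetrizableSpace P), CovDimLE P k ∧
        ∃ f : X → P, Continuous f ∧
          ∀ (p : P) (y : Y), ∃ U ∈ 𝒰, f ⁻¹' {p} ∩ π ⁻¹' {y} ⊆ U := by
  classical
  set m := 𝒲.card with hm
  set e : Fin m → Set X := fun i => ((𝒲.equivFin.symm i : {W // W ∈ 𝒲}) : Set X) with he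
  have heW : ∀ i, e i ∈ 𝒲 := fun i => (𝒲.equivFin.symm i).2
  have hopen : ∀ i, IsOpen (e i) := fun i => h𝒲.1 _ (heW i)
  have hcov : (Set.univ : Set X) ⊆ ⋃ i, e i := by
    intro x _
    have hx : x ∈ ⋃₀ (𝒲 : Set (Set X)) := by rw [h𝒲.2]; exact Set.mem_univ x
    obtain ⟨W, hW, hxW⟩ := hx
    refine Set.mem_iUnion.2 ⟨𝒲.equivFin ⟨W, hW⟩, ?_⟩
    show x ∈ ((𝒲.equivFin.symm (𝒲.equivFin ⟨W, hW⟩) : {W // W ∈ 𝒲}) : Set X)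
    rw [Equiv.symm_apply_apply]
    exact hxW
  obtain ⟨pou, hsub⟩ := PartitionOfUnity.exists_isSubordinate isClosed_univ e hopen hcov
  set F : X → (Fin m → ℝ) := fun x i => pou i x with hFdef
  have hFc : Continuous F := continuous_pi fun i => (pou i).continuous
  have hF0 : ∀ x i, 0 ≤ F x i := fun x i => pou.nonneg i x
  have hFsum : ∀ x, ∑ i, F x i = 1 := by
    intro x
    have h := pou.sum_eq_one (Set.mem_univ x)
    rwa [finsum_eq_sum_of_fintype] at h
  have hFmem : ∀ x i, F x i ≠ 0 → x ∈ e i := by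
    intro x i h
    exact hsub i (subset_closure (Function.mem_support.2 h))
  have hmultcard : ∀ x : X, (Finset.univ.filter fun i : Fin m => x ∈ e i).card = mult 𝒲 x := by
    intro x
    rw [mult]
    apply Finset.card_bij (fun i _ => e i)
    · intro i hi
      rw [Finset.mem_filter] at hi ⊢
      exact ⟨heW i, hi.2⟩
    · intro a _ b _ hab
      exact 𝒲.equivFin.symm.injective (Subtype.ext hab)
    · intro W hW
      rw [Finset.mem_filter] at hW
      refine ⟨𝒲.equivFin ⟨W, hW.1⟩, ?_, ?_⟩
      · rw [Finset.mem_filter]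
        refine ⟨Finset.mem_univ _, ?_⟩
        show x ∈ ((𝒲.equivFin.symm (𝒲.equivFin ⟨W, hW.1⟩) : {W // W ∈ 𝒲}) : Set X)
        rw [Equiv.symm_apply_apply]
        exact hW.2
      · show ((𝒲.equivFin.symm (𝒲.equivFin ⟨W, hW.1⟩) : {W // W ∈ 𝒲}) : Set X) = W
        rw [Equiv.symm_apply_apply]
  have hsuppcard : ∀ x : X, (Finset.univ.filter fun i : Fin m => F x i ≠ 0).card ≤ k + 1 := by
    intro x
    refine le_trans (Finset.card_le_card ?_) (le_trans (le_of_eq (hmultcard x)) (hord x))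
    intro i hi
    rw [Finset.mem_filter] at hi ⊢
    exact ⟨hi.1, hFmem x i hi.2⟩
  have hpt : ∀ p : ↥(Set.range F), (∀ i, 0 ≤ (p : Fin m → ℝ) i) ∧
      (∑ i, (p : Fin m → ℝ) i = 1) ∧
      (Finset.univ.filter fun i : Fin m => (p : Fin m → ℝ) i ≠ 0).card ≤ k + 1 := by
    rintro ⟨t, x, rfl⟩
    exact ⟨fun i => hF0 x i, hFsum x, hsuppcard x⟩
  haveI hPcompact : CompactSpace ↥(Set.range F) :=
    isCompact_iff_compactSpace.mp (isCompact_range hFc)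
  refine ⟨↥(Set.range F), inferInstance, hPcompact,
    inferInstance, ?_, Set.rangeFactorization F, hFc.subtype_mk _, ?_⟩
  · -- CovDimLE
    intro 𝒪 h𝒪
    by_cases hPne : Nonempty ↥(Set.range F)
    · obtain ⟨q0⟩ := hPne
      have hm0 : 0 < m := by
        obtain ⟨x0, -⟩ := q0.2
        obtain ⟨i, -⟩ := Set.mem_iUnion.1 (hcov (Set.mem_univ x0))
        exact i.pos
      have h𝒪ne : ∃ O, O ∈ 𝒪 := by
        have hq : (q0 : ↥(Set.range F)) ∈ ⋃₀ (𝒪 : Set (Set ↥(Set.range F))) := by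
          rw [h𝒪.2]; trivial
        obtain ⟨O, hO, -⟩ := hq
        exact ⟨O, hO⟩
      have hcov𝒪 : (Set.univ : Set ↥(Set.range F)) ⊆
          ⋃ O : {O // O ∈ 𝒪}, (O : Set ↥(Set.range F)) := by
        intro q _
        have hq : q ∈ ⋃₀ (𝒪 : Set (Set ↥(Set.range F))) := by rw [h𝒪.2]; trivial
        obtain ⟨O, hO, hqO⟩ := hq
        exact Set.mem_iUnion.2 ⟨⟨O, hO⟩, hqO⟩
      obtain ⟨δ, hδ, hball⟩ := lebesgue_number_lemma_of_metric isCompact_univ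
        (fun O : {O // O ∈ 𝒪} => h𝒪.1 O O.2) hcov𝒪
      obtain ⟨N, hN⟩ := exists_nat_gt (8 / δ)
      have hNR : (0 : ℝ) < N := lt_trans (by positivity) hN
      have hN0 : 0 < N := by exact_mod_cast hNR
      have hNd : 4 / (N : ℝ) < δ := by
        rw [div_lt_iff₀ hNR]
        rw [div_lt_iff₀ hδ] at hN
        nlinarith
      set St : (Fin m → ℤ) → Set ↥(Set.range F) :=
        fun v => {q | NerveAux.SC (NerveAux.xv N (q : Fin m → ℝ)) v} with hSt
      have hxvcont : ∀ i : Fin m,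
          Continuous fun q : ↥(Set.range F) => NerveAux.xv N (q : Fin m → ℝ) i := by
        intro i
        have hc : Continuous fun q : ↥(Set.range F) =>
            ∑ j ∈ Finset.univ.filter (fun j : Fin m => i.val ≤ j.val), (q : Fin m → ℝ) j :=
          continuous_finset_sum _ fun j _ => (continuous_apply j).comp continuous_subtype_val
        exact continuous_const.mul hc
      have hStopen : ∀ v, IsOpen (St v) := by
        intro v
        have h1 : St v = (⋂ i : Fin m,
              {q : ↥(Set.range F) | |(v i : ℝ) - NerveAux.xv N (q : Fin m → ℝ) i| < 1}) ∩
            ⋂ ij : Fin m × Fin m,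
              {q : ↥(Set.range F) | ((v ij.1 : ℝ) - NerveAux.xv N (q : Fin m → ℝ) ij.1) -
                ((v ij.2 : ℝ) - NerveAux.xv N (q : Fin m → ℝ) ij.2) < 1} := by
          ext q
          simp only [hSt, NerveAux.SC, Set.mem_setOf_eq, Set.mem_inter_iff, Set.mem_iInter,
            Prod.forall]
        rw [h1]
        apply IsOpen.inter
        · exact isOpen_iInter_of_finite fun i =>
            isOpen_lt (continuous_const.sub (hxvcont i)).abs continuous_const
        · exact isOpen_iInter_of_finite fun ij =>
            isOpen_lt ((continuous_const.sub (hxvcont ij.1)).sub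
              (continuous_const.sub (hxvcont ij.2))) continuous_const
      refine ⟨(Fintype.piFinset fun _ : Fin m => Finset.Icc (-1 : ℤ) ((N : ℤ) + 1)).image St,
        ⟨?_, ?_⟩, ?_, ?_⟩
      · intro V hV
        obtain ⟨v, -, rfl⟩ := Finset.mem_image.1 hV
        exact hStopen v
      · apply Set.eq_univ_of_univ_subset
        intro q _
        have hq := hpt q
        have hx0 : ∀ i : Fin m, 0 ≤ NerveAux.xv N (q : Fin m → ℝ) i ∧
            NerveAux.xv N (q : Fin m → ℝ) i ≤ N := by
          intro i
          constructor
          · exact mul_nonneg (le_of_lt hNR) (NerveAux.tl_nonneg hq.1 _)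
          · calc NerveAux.xv N (q : Fin m → ℝ) i
                = (N : ℝ) * NerveAux.tl (q : Fin m → ℝ) i.val := rfl
              _ ≤ (N : ℝ) * 1 := by
                  have := NerveAux.tl_le_one hq.1 hq.2.1 i.val
                  nlinarith
              _ = N := mul_one _
        refine Set.mem_sUnion.2 ⟨St (fun i => ⌈NerveAux.xv N (q : Fin m → ℝ) i⌉), ?_, ?_⟩
        · refine Finset.mem_coe.2 (Finset.mem_image_of_mem _ ?_)
          rw [Fintype.mem_piFinset]
          intro i
          rw [Finset.mem_Icc]
          constructor
          · have : (0 : ℤ) ≤ ⌈NerveAux.xv N (q : Fin m → ℝ) i⌉ := Int.ceil_nonneg (hx0 i).1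
            omega
          · have : ⌈NerveAux.xv N (q : Fin m → ℝ) i⌉ ≤ (N : ℤ) :=
              Int.ceil_le.2 (by exact_mod_cast (hx0 i).2)
            omega
        · exact NerveAux.SC.ceil _
      · intro q
        rw [mult]
        have hsub𝒱 : (((Fintype.piFinset fun _ : Fin m =>
              Finset.Icc (-1 : ℤ) ((N : ℤ) + 1)).image St).filter fun V => q ∈ V) ⊆
            ((Fintype.piFinset fun _ : Fin m => Finset.Icc (-1 : ℤ) ((N : ℤ) + 1)).filter
              fun v => NerveAux.SC (NerveAux.xv N (q : Fin m → ℝ)) v).image St := by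
          intro V hV
          rw [Finset.mem_filter] at hV
          obtain ⟨v, hv, rfl⟩ := Finset.mem_image.1 hV.1
          exact Finset.mem_image_of_mem _ (Finset.mem_filter.2 ⟨hv, hV.2⟩)
        calc (((Fintype.piFinset fun _ : Fin m =>
              Finset.Icc (-1 : ℤ) ((N : ℤ) + 1)).image St).filter fun V => q ∈ V).card
            ≤ _ := Finset.card_le_card hsub𝒱
          _ ≤ _ := Finset.card_image_le
          _ ≤ (NerveAux.Tset (NerveAux.xv N (q : Fin m → ℝ))).card + 1 :=
              NerveAux.card_SC_le hm0 _ _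
          _ ≤ k + 1 := by
              have hq := hpt q
              have := NerveAux.Tset_card_le N (q : Fin m → ℝ) hq.1 hq.2.1 hq.2.2
              omega
      · intro V hV
        obtain ⟨v, -, rfl⟩ := Finset.mem_image.1 hV
        rcases Set.eq_empty_or_nonempty (St v) with hemp | ⟨q0', hq0'⟩
        · obtain ⟨O, hO⟩ := h𝒪ne
          exact ⟨O, hO, by rw [hemp]; exact Set.empty_subset O⟩
        · obtain ⟨O, hOball⟩ := hball q0' (Set.mem_univ _)
          refine ⟨O, O.2, ?_⟩
          intro q hq
          apply hOball
          rw [Metric.mem_ball]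
          have hq' : NerveAux.SC (NerveAux.xv N (q : Fin m → ℝ)) v := hq
          have hq0'' : NerveAux.SC (NerveAux.xv N ((q0' : ↥(Set.range F)) : Fin m → ℝ)) v := hq0'
          have hD : ∀ n : ℕ, |(N : ℝ) * NerveAux.tl (q : Fin m → ℝ) n -
              (N : ℝ) * NerveAux.tl ((q0' : ↥(Set.range F)) : Fin m → ℝ) n| < 2 := by
            intro n
            by_cases hn : n < m
            · have h1 : |(v ⟨n, hn⟩ : ℝ) - (N : ℝ) * NerveAux.tl (q : Fin m → ℝ) n| < 1 :=
                hq'.1 ⟨n, hn⟩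
              have h2 : |(v ⟨n, hn⟩ : ℝ) -
                  (N : ℝ) * NerveAux.tl ((q0' : ↥(Set.range F)) : Fin m → ℝ) n| < 1 :=
                hq0''.1 ⟨n, hn⟩
              have h1' := abs_lt.1 h1
              have h2' := abs_lt.1 h2
              rw [abs_lt]
              constructor <;> linarith [h1'.1, h1'.2, h2'.1, h2'.2]
            · have hz1 : NerveAux.tl (q : Fin m → ℝ) n = 0 := NerveAux.tl_of_le (by omega)
              have hz2 : NerveAux.tl ((q0' : ↥(Set.range F)) : Fin m → ℝ) n = 0 :=
                NerveAux.tl_of_le (by omega)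
              rw [hz1, hz2]
              norm_num
          rw [Subtype.dist_eq, dist_pi_lt_iff hδ]
          intro i
          rw [Real.dist_eq]
          have hstep1 := NerveAux.tl_step (q : Fin m → ℝ) i
          have hstep2 := NerveAux.tl_step ((q0' : ↥(Set.range F)) : Fin m → ℝ) i
          have h1 := hD i.val
          have h2 := hD (i.val + 1)
          have hkey : (N : ℝ) * ((q : Fin m → ℝ) i - ((q0' : ↥(Set.range F)) : Fin m → ℝ) i) =
              ((N : ℝ) * NerveAux.tl (q : Fin m → ℝ) i.val -
                (N : ℝ) * NerveAux.tl ((q0' : ↥(Set.range F)) : Fin m → ℝ) i.val) -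
              ((N : ℝ) * NerveAux.tl (q : Fin m → ℝ) (i.val + 1) -
                (N : ℝ) * NerveAux.tl ((q0' : ↥(Set.range F)) : Fin m → ℝ) (i.val + 1)) := by
            rw [hstep1, hstep2]; ring
          have habs : |(N : ℝ) * ((q : Fin m → ℝ) i - ((q0' : ↥(Set.range F)) : Fin m → ℝ) i)| < 4 := by
            have h1' := abs_lt.1 h1
            have h2' := abs_lt.1 h2
            rw [hkey, abs_lt]
            constructor <;> linarith [h1'.1, h1'.2, h2'.1, h2'.2]
          rw [abs_mul, abs_of_pos hNR] at habs
          have : |(q : Fin m → ℝ) i - ((q0' : ↥(Set.range F)) : Fin m → ℝ) i| < 4 / N := by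
            rw [lt_div_iff₀ hNR]
            linarith
          linarith
    · refine ⟨∅, ⟨?_, ?_⟩, ?_, ?_⟩
      · intro V hV; exact absurd hV (Finset.notMem_empty V)
      · rw [Finset.coe_empty, Set.sUnion_empty]
        exact (Set.univ_eq_empty_iff.2 (not_nonempty_iff.1 hPne)).symm
      · intro p; exact absurd ⟨p⟩ hPne
      · intro V hV; exact absurd hV (Finset.notMem_empty V)
  · -- fibers
    intro p y
    obtain ⟨x0, hx0⟩ := p.2
    have hex : ∃ i, F x0 i ≠ 0 := by
      by_contra h
      push_neg at h
      have hs := hFsum x0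
      rw [Finset.sum_eq_zero (fun i _ => h i)] at hs
      norm_num at hs
    obtain ⟨i, hi⟩ := hex
    obtain ⟨U, hU, hUsub⟩ := href (e i) (heW i) y
    refine ⟨U, hU, ?_⟩
    rintro x ⟨hxp, hxy⟩
    have hFx : F x = F x0 := by
      have h1 : Set.rangeFactorization F x = p := hxp
      have h2 := congrArg Subtype.val h1
      exact h2.trans hx0.symm
    refine hUsub ⟨hFmem x i ?_, hxy⟩
    rw [hFx]; exact hi
end

section
/- Let X and Y be compact metrizable spaces, π : X → Y continuous, and 𝒰 a finite open cover of X. If there exist a compact metrizable space P with covering dimension k and a continuous map f : X → P such that for every (p,y) ∈ P × Y the set f⁻¹(p) ∩ π⁻¹(y) is contained in some member of 𝒰, then there exists a finite open cover 𝒲 of X with ord(𝒲) ≤ k such that for every W ∈ 𝒲 and y ∈ Y, W ∩ π⁻¹(y) is contained in some member of 𝒰. -/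
open scoped Classical

theorem stmt1 {X Y : Type*} [TopologicalSpace X] [CompactSpace X] [TopologicalSpace.MetrizableSpace X]
    [TopologicalSpace Y] [CompactSpace Y] [TopologicalSpace.MetrizableSpace Y]
    (π : X → Y) (hπ : Continuous π)
    (𝒰 : Finset (Set X)) (h𝒰 : IsFinOpenCover 𝒰)
    (P : Type*) [TopologicalSpace P] [CompactSpace P] [TopologicalSpace.MetrizableSpace P]
    (k : ℕ) (hdim : CovDimLE P k)
    (f : X → P) (hf : Continuous f)
    (href : ∀ (p : P) (y : Y), ∃ U ∈ 𝒰, f ⁻¹' {p} ∩ π ⁻¹' {y} ⊆ U) :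
    ∃ 𝒲 : Finset (Set X), IsFinOpenCover 𝒲 ∧ (∀ x : X, mult 𝒲 x ≤ k + 1) ∧
      ∀ W ∈ 𝒲, ∀ y : Y, ∃ U ∈ 𝒰, W ∩ π ⁻¹' {y} ⊆ U := by
  haveI : T2Space P := by
    letI := TopologicalSpace.metrizableSpaceMetric P
    infer_instance
  haveI : T2Space Y := by
    letI := TopologicalSpace.metrizableSpaceMetric Y
    infer_instance
  set g : X → P × Y := fun x => (f x, π x) with hgdef
  have hgc : Continuous g := hf.prodMk hπ
  have hgclosed : IsClosedMap g := hgc.isClosedMap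
  -- Step 1: tube lemma at each (p, y)
  have step1 : ∀ (p : P) (y : Y), ∃ V : Set P, ∃ W : Set Y, IsOpen V ∧ IsOpen W ∧
      p ∈ V ∧ y ∈ W ∧ ∃ U ∈ 𝒰, f ⁻¹' V ∩ π ⁻¹' W ⊆ U := by
    intro p y
    obtain ⟨U, hU𝒰, hU⟩ := href p y
    have hUopen : IsOpen U := h𝒰.1 U hU𝒰
    have hC : IsClosed (g '' Uᶜ) := hgclosed _ hUopen.isClosed_compl
    have hpy : (p, y) ∉ g '' Uᶜ := by
      rintro ⟨x, hx, hxg⟩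
      apply hx
      apply hU
      constructor
      · simpa using congrArg Prod.fst hxg
      · simpa using congrArg Prod.snd hxg
    have hmem : (g '' Uᶜ)ᶜ ∈ nhds (p, y) := hC.isOpen_compl.mem_nhds hpy
    rw [mem_nhds_prod_iff] at hmem
    obtain ⟨V, hV, W, hW, hVW⟩ := hmem
    obtain ⟨V', hV'sub, hV'open, hpV'⟩ := mem_nhds_iff.mp hV
    obtain ⟨W', hW'sub, hW'open, hyW'⟩ := mem_nhds_iff.mp hW
    refine ⟨V', W', hV'open, hW'open, hpV', hyW', U, hU𝒰, ?_⟩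
    rintro x ⟨hxV, hxW⟩
    by_contra hxU
    exact (hVW (Set.mk_mem_prod (hV'sub hxV) (hW'sub hxW))) ⟨x, hxU, rfl⟩
  -- Step 2: per p, an open V ∋ p good for all y
  have step2 : ∀ p : P, ∃ V : Set P, IsOpen V ∧ p ∈ V ∧
      ∀ y : Y, ∃ U ∈ 𝒰, f ⁻¹' V ∩ π ⁻¹' {y} ⊆ U := by
    intro p
    choose V W hVopen hWopen hpV hyW hUex using step1 p
    have hcover : (Set.univ : Set Y) ⊆ ⋃ y, W y :=
      fun y _ => Set.mem_iUnion.mpr ⟨y, hyW y⟩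
    obtain ⟨t, ht⟩ := isCompact_univ.elim_finite_subcover W hWopen hcover
    refine ⟨⋂ y ∈ t, V y, isOpen_biInter_finset fun y _ => hVopen y,
      Set.mem_biInter fun y _ => hpV y, ?_⟩
    intro y
    obtain ⟨z, hz, hyz⟩ := Set.mem_iUnion₂.mp (ht (Set.mem_univ y))
    obtain ⟨U, hU𝒰, hU⟩ := hUex z
    refine ⟨U, hU𝒰, ?_⟩
    rintro x ⟨hxV, hxy⟩
    refine hU ⟨Set.mem_iInter₂.mp hxV z hz, ?_⟩
    have : π x = y := hxy
    simpa [this] using hyz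
  choose V hVopen hpV hVU using step2
  have hcoverP : (Set.univ : Set P) ⊆ ⋃ p, V p :=
    fun p _ => Set.mem_iUnion.mpr ⟨p, hpV p⟩
  obtain ⟨t, ht⟩ := isCompact_univ.elim_finite_subcover V hVopen hcoverP
  set 𝒱₀ : Finset (Set P) := t.image V with h𝒱₀
  have h𝒱₀cover : IsFinOpenCover 𝒱₀ := by
    constructor
    · intro S hS
      obtain ⟨p, _, rfl⟩ := Finset.mem_image.mp hS
      exact hVopen p
    · apply Set.eq_univ_of_forall
      intro q
      obtain ⟨p, hp, hq⟩ := Set.mem_iUnion₂.mp (ht (Set.mem_univ q))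
      exact ⟨V p, Finset.mem_image_of_mem V hp, hq⟩
  obtain ⟨𝒱, h𝒱cover, h𝒱mult, h𝒱ref⟩ := hdim 𝒱₀ h𝒱₀cover
  refine ⟨𝒱.image (fun S => f ⁻¹' S), ⟨?_, ?_⟩, ?_, ?_⟩
  · intro W hW
    obtain ⟨S, hS, rfl⟩ := Finset.mem_image.mp hW
    exact (h𝒱cover.1 S hS).preimage hf
  · apply Set.eq_univ_of_forall
    intro x
    have : f x ∈ ⋃₀ (𝒱 : Set (Set P)) := by rw [h𝒱cover.2]; trivial
    obtain ⟨S, hS, hfx⟩ := this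
    exact ⟨f ⁻¹' S, Finset.mem_image_of_mem _ hS, hfx⟩
  · intro x
    have hsub : ((𝒱.image (fun S => f ⁻¹' S)).filter (fun W => x ∈ W)) ⊆
        (𝒱.filter (fun S => f x ∈ S)).image (fun S => f ⁻¹' S) := by
      intro W hW
      obtain ⟨hWmem, hxW⟩ := Finset.mem_filter.mp hW
      obtain ⟨S, hS, rfl⟩ := Finset.mem_image.mp hWmem
      exact Finset.mem_image_of_mem _ (Finset.mem_filter.mpr ⟨hS, hxW⟩)
    calc mult (𝒱.image (fun S => f ⁻¹' S)) x
        ≤ ((𝒱.filter (fun S => f x ∈ S)).image (fun S => f ⁻¹' S)).card :=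
          Finset.card_le_card hsub
      _ ≤ (𝒱.filter (fun S => f x ∈ S)).card := Finset.card_image_le
      _ ≤ k + 1 := h𝒱mult (f x)
  · intro W hW y
    obtain ⟨S, hS, rfl⟩ := Finset.mem_image.mp hW
    obtain ⟨S₀, hS₀, hSsub⟩ := h𝒱ref S hS
    obtain ⟨p, _, rfl⟩ := Finset.mem_image.mp hS₀
    obtain ⟨U, hU𝒰, hU⟩ := hVU p y
    exact ⟨U, hU𝒰, fun x ⟨hx1, hx2⟩ => hU ⟨hSsub hx1, hx2⟩⟩
end

section
/- Let φ : X → Y be a continuous map between compact metrizable spaces and let 𝒰 be a finite open cover of X. Define D(𝒰|_K) for a closed set K ⊆ X as the minimum of ord(𝒱|_K) over all finite open covers 𝒱 of X whose restriction to K refines the restriction of 𝒰 to K. Then the function Y → ℝ sending y to D(𝒰|_{φ⁻¹(y)}) is upper semicontinuous. -/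
open scoped Classical

/-- `D(𝒰|_K)`: the minimal `k` such that there is a finite open cover `𝒱` of `X` whose
restriction to `K` refines `𝒰|_K` and has order (= max multiplicity minus one) at most `k`. -/
noncomputable def Drestr {X : Type*} [TopologicalSpace X] (𝒰 : Finset (Set X)) (K : Set X) : ℕ :=
  sInf {k | ∃ 𝒱 : Finset (Set X), IsFinOpenCover 𝒱 ∧ (∀ x ∈ K, mult 𝒱 x ≤ k + 1) ∧
    ∀ V ∈ 𝒱, ∃ U ∈ 𝒰, V ∩ K ⊆ U ∩ K}

lemma Drestr_set_nonempty {X : Type*} [TopologicalSpace X] (𝒰 : Finset (Set X))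
    (h𝒰 : IsFinOpenCover 𝒰) (K : Set X) :
    {k | ∃ 𝒱 : Finset (Set X), IsFinOpenCover 𝒱 ∧ (∀ x ∈ K, mult 𝒱 x ≤ k + 1) ∧
      ∀ V ∈ 𝒱, ∃ U ∈ 𝒰, V ∩ K ⊆ U ∩ K}.Nonempty := by
  refine ⟨𝒰.card, 𝒰, h𝒰, fun x _ => ?_, fun V hV => ⟨V, hV, subset_rfl⟩⟩
  exact le_trans (Finset.card_filter_le _ _) (Nat.le_succ _)

theorem stmt2 {X Y : Type*} [TopologicalSpace X] [CompactSpace X] [TopologicalSpace.MetrizableSpace X]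
    [TopologicalSpace Y] [CompactSpace Y] [TopologicalSpace.MetrizableSpace Y]
    (φ : X → Y) (hφ : Continuous φ)
    (𝒰 : Finset (Set X)) (h𝒰 : IsFinOpenCover 𝒰) :
    UpperSemicontinuous fun y : Y => ((Drestr 𝒰 (φ ⁻¹' {y}) : ℕ) : ℝ) := by
  letI : MetricSpace X := TopologicalSpace.metrizableSpaceMetric X
  -- key claim: the ℕ-valued function is "locally ≤ its value"
  have key : ∀ y : Y, ∀ᶠ y' in nhds y, Drestr 𝒰 (φ ⁻¹' {y'}) ≤ Drestr 𝒰 (φ ⁻¹' {y}) := by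
    intro y
    by_cases hX : Nonempty X
    · obtain ⟨x0⟩ := hX
      have h𝒰ne : ∃ U0, U0 ∈ 𝒰 := by
        have : x0 ∈ ⋃₀ (𝒰 : Set (Set X)) := h𝒰.2 ▸ Set.mem_univ x0
        obtain ⟨U0, hU0, -⟩ := this
        exact ⟨U0, hU0⟩
      obtain ⟨U0, hU0⟩ := h𝒰ne
      set K := φ ⁻¹' {y} with hK
      set k := Drestr 𝒰 K with hk
      obtain ⟨𝒱, h𝒱cov, h𝒱mult, h𝒱ref⟩ :=
        Nat.sInf_mem (Drestr_set_nonempty 𝒰 h𝒰 K)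
      -- shrink the cover
      have hcovU : ⋃ i : {V // V ∈ 𝒱}, (i : Set X) = Set.univ := by
        rw [← h𝒱cov.2, Set.sUnion_eq_iUnion]; rfl
      obtain ⟨v, hvU, hvo, hvcl⟩ :=
        exists_iUnion_eq_closure_subset (fun i : {V // V ∈ 𝒱} => h𝒱cov.1 i.1 i.2)
          (fun x => Set.toFinite _) hcovU
      choose U hUmem hUsub using fun i : {V // V ∈ 𝒱} => h𝒱ref i.1 i.2
      set W : {V // V ∈ 𝒱} → Set X := fun i => v i ∩ U i with hW
      set G : Set X := {x | (Finset.univ.filter fun i : {V // V ∈ 𝒱} =>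
        x ∈ closure (v i)).card ≤ k + 1} with hG
      set O : Set X := ⋃ i, W i with hO
      have hGopen : IsOpen G := by
        rw [isOpen_iff_mem_nhds]
        intro x hx
        set N : Set X := ⋂ i ∈ (Finset.univ.filter fun i : {V // V ∈ 𝒱} =>
          x ∉ closure (v i)), (closure (v i))ᶜ with hN
        have hNopen : IsOpen N := isOpen_biInter_finset fun i _ => (isClosed_closure).isOpen_compl
        have hxN : x ∈ N := by
          simp only [hN, Set.mem_iInter]
          intro i hi
          simpa using (Finset.mem_filter.1 hi).2
        refine Filter.mem_of_superset (hNopen.mem_nhds hxN) ?_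
        intro x' hx'
        refine le_trans (Finset.card_le_card ?_) hx
        intro i hi
        simp only [Finset.mem_filter, Finset.mem_univ, true_and] at hi ⊢
        by_contra hcon
        have : i ∈ Finset.univ.filter fun i : {V // V ∈ 𝒱} => x ∉ closure (v i) := by
          simp [hcon]
        have := Set.mem_iInter₂.1 hx' i this
        exact this hi
      have hOopen : IsOpen O := isOpen_iUnion fun i =>
        (hvo i).inter (h𝒰.1 _ (hUmem i))
      have hKG : K ⊆ G := by
        intro x hxK
        have : (Finset.univ.filter fun i : {V // V ∈ 𝒱} => x ∈ closure (v i)).card ≤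
            mult 𝒱 x := by
          apply Finset.card_le_card_of_injOn (fun i => i.1)
          · intro i hi
            simp only [Finset.mem_coe, Finset.mem_filter, Finset.mem_univ, true_and] at hi
            exact Finset.mem_filter.2 ⟨i.2, hvcl i hi⟩
          · intro a _ b _ hab; exact Subtype.ext hab
        exact le_trans this (h𝒱mult x hxK)
      have hKO : K ⊆ O := by
        intro x hxK
        have : x ∈ ⋃ i, v i := hvU ▸ Set.mem_univ x
        obtain ⟨i, hi⟩ := Set.mem_iUnion.1 this
        have hxi : x ∈ (i : Set X) := hvcl i (subset_closure hi)
        have : x ∈ U i ∩ K := hUsub i ⟨hxi, hxK⟩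
        exact Set.mem_iUnion.2 ⟨i, hi, this.1⟩
      -- closed set avoiding the fiber
      set F : Set X := (G ∩ O)ᶜ with hF
      have hFclosed : IsClosed F := (hGopen.inter hOopen).isClosed_compl
      have hyim : y ∉ φ '' F := by
        rintro ⟨x, hxF, rfl⟩
        exact hxF ⟨hKG rfl, hKO rfl⟩
      have himclosed : IsClosed (φ '' F) := (hφ.isClosedMap) F hFclosed
      refine Filter.eventually_iff_exists_mem.2 ⟨(φ '' F)ᶜ,
        himclosed.isOpen_compl.mem_nhds hyim, fun y' hy' => ?_⟩
      -- build the witness cover for the fiber of y'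
      set K' : Set X := φ ⁻¹' {y'} with hK'
      have hK'sub : K' ⊆ G ∩ O := by
        intro x hx
        by_contra hcon
        exact hy' ⟨x, hcon, hx⟩
      have hK'closed : IsClosed K' := (isClosed_singleton).preimage hφ
      set 𝒲 : Finset (Set X) :=
        (Finset.univ.image fun i : {V // V ∈ 𝒱} => W i) ∪ {K'ᶜ} with h𝒲
      have hDle : Drestr 𝒰 K' ≤ k := by
        apply Nat.sInf_le
        refine ⟨𝒲, ⟨?_, ?_⟩, ?_, ?_⟩
        · intro S hS
          rcases Finset.mem_union.1 hS with h | h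
          · obtain ⟨i, -, rfl⟩ := Finset.mem_image.1 h
            exact (hvo i).inter (h𝒰.1 _ (hUmem i))
          · rw [Finset.mem_singleton.1 h]
            exact hK'closed.isOpen_compl
        · apply Set.eq_univ_of_forall
          intro x
          by_cases hx : x ∈ K'
          · obtain ⟨i, hi⟩ := Set.mem_iUnion.1 (hK'sub hx).2
            exact ⟨W i, Finset.mem_union_left _ (Finset.mem_image.2 ⟨i, Finset.mem_univ i, rfl⟩), hi⟩
          · exact ⟨K'ᶜ, Finset.mem_union_right _ (Finset.mem_singleton_self _), hx⟩
        · intro x hx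
          have hsub : 𝒲.filter (fun S => x ∈ S) ⊆
              (Finset.univ.filter fun i : {V // V ∈ 𝒱} => x ∈ closure (v i)).image
                (fun i => W i) := by
            intro S hS
            obtain ⟨hS𝒲, hxS⟩ := Finset.mem_filter.1 hS
            rcases Finset.mem_union.1 hS𝒲 with h | h
            · obtain ⟨i, -, rfl⟩ := Finset.mem_image.1 h
              exact Finset.mem_image.2 ⟨i, Finset.mem_filter.2
                ⟨Finset.mem_univ i, subset_closure hxS.1⟩, rfl⟩
            · rw [Finset.mem_singleton.1 h] at hxS
              exact absurd hx hxS
          calc mult 𝒲 x ≤ _ := Finset.card_le_card hsub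
            _ ≤ _ := Finset.card_image_le
            _ ≤ k + 1 := (hK'sub hx).1
        · intro S hS
          rcases Finset.mem_union.1 hS with h | h
          · obtain ⟨i, -, rfl⟩ := Finset.mem_image.1 h
            exact ⟨U i, hUmem i, fun x hx => ⟨hx.1.2, hx.2⟩⟩
          · rw [Finset.mem_singleton.1 h]
            exact ⟨U0, hU0, fun x hx => absurd hx.2 hx.1⟩
      exact hDle
    · -- X empty: the function is constant
      refine Filter.Eventually.of_forall fun y' => ?_
      have h0 : ∀ K : Set X, Drestr 𝒰 K = 0 := by
        intro K
        refine Nat.sInf_eq_zero.2 (Or.inl ⟨𝒰, h𝒰, fun x hx => (hX ⟨x⟩).elim,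
          fun V hV => ⟨V, hV, subset_rfl⟩⟩)
      simp [h0]
  intro y
  intro r hr
  filter_upwards [key y] with y' hy'
  exact lt_of_le_of_lt (Nat.cast_le.mpr hy') hr
end

section
/- Let π : X → Y be a continuous surjection of compact metric spaces, let ε > 0, and define Wdim_ε(X|Y, ρ) as the minimal covering dimension of a compact metrizable space P admitting a continuous map f : X → P such that diam(f⁻¹(p) ∩ π⁻¹(y), ρ) < ε for all (p,y) ∈ P × Y. If λ > 0 is a Lebesgue number of a finite open cover 𝒰 of X with respect to ρ, then D(𝒰 | π) ≤ Wdim_λ(X|Y, ρ), where D(𝒰|π) is the minimal order of a finite open cover 𝒲 of X such that {W ∩ π⁻¹(y)} refines 𝒰. -/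
open scoped Classical

lemma mult_image_le {P ι : Type*} (Z : Finset ι) (V : ι → Set P) (p : P) :
    mult (Z.image V) p ≤ (Z.filter fun z => p ∈ V z).card := by
  classical
  have hsub : (Z.image V).filter (fun U => p ∈ U) ⊆ (Z.filter fun z => p ∈ V z).image V := by
    intro W hW
    simp only [Finset.mem_filter, Finset.mem_image] at hW ⊢
    obtain ⟨⟨z, hz, rfl⟩, hp⟩ := hW
    exact ⟨z, ⟨hz, hp⟩, rfl⟩
  calc ((Z.image V).filter (fun U => p ∈ U)).card
      ≤ ((Z.filter fun z => p ∈ V z).image V).card := Finset.card_le_card hsub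
    _ ≤ _ := Finset.card_image_le

lemma covDimLE_of_compact_subset (n : ℕ) (S : Set (Fin n → ℝ)) (hS : IsCompact S) :
    CovDimLE S (2 ^ n - 1) := by
  classical
  intro 𝒰 h𝒰
  by_cases hne : Nonempty S
  case neg =>
    refine ⟨∅, ⟨by simp, ?_⟩, fun p => absurd ⟨p⟩ hne, by simp⟩
    · simp [Set.univ_eq_empty_iff.2 (not_nonempty_iff.1 hne)]
  haveI : CompactSpace S := isCompact_iff_compactSpace.1 hS
  -- a Lebesgue number δ for 𝒰
  obtain ⟨δ, hδ, hball⟩ := lebesgue_number_lemma_of_metric (s := (Set.univ : Set S))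
    (c := fun U : 𝒰 => (U : Set S)) isCompact_univ (fun U => h𝒰.1 U U.2)
    (by
      intro x _
      have hx : x ∈ ⋃₀ (𝒰 : Set (Set S)) := by rw [h𝒰.2]; trivial
      obtain ⟨U, hU, hxU⟩ := hx
      exact Set.mem_iUnion.2 ⟨⟨U, hU⟩, hxU⟩)
  obtain ⟨q₀⟩ := hne
  obtain ⟨U₀, hU₀⟩ : ∃ U, U ∈ 𝒰 := by
    have : q₀ ∈ ⋃₀ (𝒰 : Set (Set S)) := by rw [h𝒰.2]; trivial
    obtain ⟨U, hU, -⟩ := this; exact ⟨U, hU⟩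
  set s : ℝ := δ / 3 with hs
  have hspos : 0 < s := by positivity
  -- S is bounded
  obtain ⟨R, hR⟩ := (hS.isBounded).subset_closedBall 0
  have hRnn : 0 ≤ R := by
    have h := hR q₀.2
    simp only [Metric.mem_closedBall] at h
    exact le_trans dist_nonneg h
  set M : ℤ := ⌈R / s⌉ + 1 with hM
  set Z : Finset (Fin n → ℤ) := Fintype.piFinset fun _ => Finset.Icc (-M) M with hZ
  set V : (Fin n → ℤ) → Set S :=
    fun z => Subtype.val ⁻¹' Metric.ball (fun i => s * z i) (0.6 * s) with hV
  have hVopen : ∀ z, IsOpen (V z) := fun z =>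
    Metric.isOpen_ball.preimage continuous_subtype_val
  -- every point is in V z for z = rounded coordinates, and this z is in Z
  have hcov : ∀ q : S, ∃ z ∈ Z, q ∈ V z := by
    intro q
    have h1 : ∀ i, |q.val i / s - round (q.val i / s)| ≤ 1 / 2 := fun i => abs_sub_round _
    refine ⟨fun i => round (q.val i / s), ?_, ?_⟩
    · rw [hZ, Fintype.mem_piFinset]
      intro i
      rw [Finset.mem_Icc, ← abs_le, ← @Int.cast_le ℝ, Int.cast_abs]
      have h2 : |q.val i / s| ≤ R / s := by
        have hb : |q.val i| ≤ R := by
          have hq := hR q.2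
          simp only [Metric.mem_closedBall] at hq
          calc |q.val i| = dist (q.val i) ((0 : Fin n → ℝ) i) := by simp [Real.dist_eq]
            _ ≤ dist q.val (0 : Fin n → ℝ) := dist_le_pi_dist _ _ i
            _ ≤ R := hq
        rw [abs_div, abs_of_pos hspos]
        gcongr
      have h3 : |(round (q.val i / s) : ℝ)| - |q.val i / s| ≤
          |(round (q.val i / s) : ℝ) - q.val i / s| := abs_sub_abs_le_abs_sub _ _
      rw [abs_sub_comm] at h3
      have h4 := Int.le_ceil (R / s)
      have : |(round (q.val i / s) : ℝ)| ≤ (M : ℝ) := by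
        rw [hM]; push_cast
        linarith [h1 i]
      exact this
    · rw [hV]
      simp only [Set.mem_preimage, Metric.mem_ball]
      rw [dist_pi_lt_iff (by positivity)]
      intro i
      rw [Real.dist_eq]
      have h2 : |s * (q.val i / s - round (q.val i / s))| ≤ s * (1 / 2) := by
        rw [abs_mul, abs_of_pos hspos]
        exact mul_le_mul_of_nonneg_left (h1 i) hspos.le
      rw [mul_sub, mul_div_cancel₀ _ (ne_of_gt hspos)] at h2
      calc |q.val i - s * (round (q.val i / s) : ℝ)| ≤ s * (1 / 2) := h2
        _ < 0.6 * s := by nlinarith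
  refine ⟨Z.image V, ⟨?_, ?_⟩, ?_, ?_⟩
  · intro W hW
    obtain ⟨z, _, rfl⟩ := Finset.mem_image.1 hW
    exact hVopen z
  · apply Set.eq_univ_of_forall
    intro q
    obtain ⟨z, hz, hq⟩ := hcov q
    exact ⟨V z, Finset.mem_coe.2 (Finset.mem_image_of_mem V hz), hq⟩
  · -- multiplicity bound
    intro q
    refine le_trans (mult_image_le Z V q) ?_
    have h2n : (1:ℕ) ≤ 2 ^ n := Nat.one_le_two_pow
    rw [Nat.sub_add_cancel h2n]
    have hdiv : ∀ i : Fin n, q.val i / s * s = q.val i :=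
      fun i => div_mul_cancel₀ _ (ne_of_gt hspos)
    have hsub : (Z.filter fun z => q ∈ V z) ⊆
        Fintype.piFinset fun i => ({⌊q.val i / s - 0.6⌋ + 1, ⌊q.val i / s - 0.6⌋ + 2} : Finset ℤ) := by
      intro z hz
      rw [Finset.mem_filter] at hz
      obtain ⟨-, hq⟩ := hz
      rw [hV] at hq
      simp only [Set.mem_preimage, Metric.mem_ball] at hq
      rw [dist_pi_lt_iff (by positivity)] at hq
      rw [Fintype.mem_piFinset]
      intro i
      have hqi := hq i
      rw [Real.dist_eq, abs_sub_lt_iff] at hqi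
      have hlt1 : (q.val i / s - 0.6 : ℝ) < z i := by nlinarith [hqi.1, hdiv i, hspos]
      have hlt2 : (z i : ℝ) < q.val i / s + 0.6 := by nlinarith [hqi.2, hdiv i, hspos]
      have hge : ⌊q.val i / s - 0.6⌋ + 1 ≤ z i := by
        have h5 : (⌊q.val i / s - 0.6⌋ : ℝ) < z i := lt_of_le_of_lt (Int.floor_le _) hlt1
        exact_mod_cast Int.add_one_le_of_lt (by exact_mod_cast h5)
      have hle : z i ≤ ⌊q.val i / s - 0.6⌋ + 2 := by
        have h6 : (q.val i / s - 0.6 : ℝ) < ⌊q.val i / s - 0.6⌋ + 1 := Int.lt_floor_add_one _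
        have h7 : (z i : ℝ) < ((⌊q.val i / s - 0.6⌋ + 3 : ℤ) : ℝ) := by push_cast; linarith
        have h8 : z i < ⌊q.val i / s - 0.6⌋ + 3 := by exact_mod_cast h7
        omega
      simp only [Finset.mem_insert, Finset.mem_singleton]
      omega
    calc (Z.filter fun z => q ∈ V z).card
        ≤ (Fintype.piFinset fun i =>
            ({⌊q.val i / s - 0.6⌋ + 1, ⌊q.val i / s - 0.6⌋ + 2} : Finset ℤ)).card :=
          Finset.card_le_card hsub
      _ = ∏ i, ({⌊q.val i / s - 0.6⌋ + 1, ⌊q.val i / s - 0.6⌋ + 2} : Finset ℤ).card :=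
          Fintype.card_piFinset _
      _ ≤ ∏ _i : Fin n, 2 := Finset.prod_le_prod (fun _ _ => Nat.zero_le _)
          (fun i _ => le_trans (Finset.card_insert_le _ _) (by simp))
      _ = 2 ^ n := by simp
  · -- refinement
    intro W hW
    obtain ⟨z, -, rfl⟩ := Finset.mem_image.1 hW
    by_cases hVz : (V z).Nonempty
    · obtain ⟨q, hq⟩ := hVz
      obtain ⟨U, hU⟩ := hball q (Set.mem_univ q)
      refine ⟨U, U.2, ?_⟩
      intro q' hq'
      apply hU
      rw [Metric.mem_ball]
      rw [hV] at hq hq'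
      simp only [Set.mem_preimage, Metric.mem_ball] at hq hq'
      calc dist q' q = dist q'.val q.val := rfl
        _ ≤ dist q'.val (fun i => s * z i) + dist (fun i => s * z i) q.val :=
            dist_triangle _ _ _
        _ < 0.6 * s + 0.6 * s := by
            rw [dist_comm (fun i => s * (z i : ℝ)) q.val]; exact add_lt_add hq' hq
        _ = 1.2 * s := by ring
        _ < δ := by rw [hs]; linarith
    · exact ⟨U₀, hU₀, by rw [Set.not_nonempty_iff_eq_empty.1 hVz]; exact Set.empty_subset _⟩

lemma key_refinement {X Y : Type*} [MetricSpace X] [CompactSpace X]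
    [MetricSpace Y] [CompactSpace Y]
    (π : X → Y) (hπc : Continuous π)
    (𝒰 : Finset (Set X)) (h𝒰 : IsFinOpenCover 𝒰)
    (lam : ℝ)
    (hLeb : ∀ S : Set X, Metric.diam S < lam → ∃ U ∈ 𝒰, S ⊆ U)
    (k : ℕ) (P : Type) [TopologicalSpace P] [CompactSpace P]
    [TopologicalSpace.MetrizableSpace P]
    (hP : CovDimLE P k) (f : X → P) (hf : Continuous f)
    (hfib : ∀ (p : P) (y : Y), Metric.diam (f ⁻¹' {p} ∩ π ⁻¹' {y}) < lam) :
    ∃ 𝒲 : Finset (Set X), IsFinOpenCover 𝒲 ∧ (∀ x : X, mult 𝒲 x ≤ k + 1) ∧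
      ∀ W ∈ 𝒲, ∀ y : Y, ∃ U ∈ 𝒰, W ∩ π ⁻¹' {y} ⊆ U := by
  classical
  haveI : T2Space P := TopologicalSpace.t2Space_of_metrizableSpace
  -- Step A: for each (p, y) there are neighborhoods whose combined preimage is inside some U
  have stepA : ∀ (p : P) (y : Y), ∃ U ∈ 𝒰, ∃ O W : Set _,
      IsOpen O ∧ p ∈ O ∧ IsOpen W ∧ y ∈ W ∧ f ⁻¹' O ∩ π ⁻¹' W ⊆ U := by
    intro p y
    obtain ⟨U, hU𝒰, hUsub⟩ := hLeb _ (hfib p y)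
    refine ⟨U, hU𝒰, ?_⟩
    have hUopen : IsOpen U := h𝒰.1 U hU𝒰
    set C : Set X := Uᶜ with hC
    have hCcpt : IsCompact C := hUopen.isClosed_compl.isCompact
    set g : X → P × Y := fun x => (f x, π x) with hg
    have hgc : Continuous g := hf.prodMk hπc
    have hK : IsCompact (g '' C) := hCcpt.image hgc
    have hpy : (p, y) ∉ g '' C := by
      rintro ⟨x, hxC, hx⟩
      rw [hg] at hx
      have h1 : f x = p := congrArg Prod.fst hx
      have h2 : π x = y := congrArg Prod.snd hx
      exact hxC (hUsub ⟨by simp [h1], by simp [h2]⟩)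
    have hmem : (g '' C)ᶜ ∈ nhds (p, y) := hK.isClosed.isOpen_compl.mem_nhds hpy
    obtain ⟨O, W, hO, hpO, hW, hyW, hOW⟩ := mem_nhds_prod_iff'.1 hmem
    refine ⟨O, W, hO, hpO, hW, hyW, ?_⟩
    intro x ⟨hxO, hxW⟩
    by_contra hxU
    exact hOW (Set.mk_mem_prod hxO hxW) ⟨x, hxU, rfl⟩
  -- Step B: for each p an open neighborhood working for all y
  have stepB : ∀ p : P, ∃ O : Set P, IsOpen O ∧ p ∈ O ∧
      ∀ y : Y, ∃ U ∈ 𝒰, f ⁻¹' O ∩ π ⁻¹' {y} ⊆ U := by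
    intro p
    choose U hU O W hO hpO hW hyW hsub using stepA p
    obtain ⟨t, ht⟩ := IsCompact.elim_finite_subcover isCompact_univ W hW
      (fun y _ => Set.mem_iUnion.2 ⟨y, hyW y⟩)
    refine ⟨⋂ y ∈ t, O y, isOpen_biInter_finset (fun y _ => hO y), Set.mem_biInter (fun y _ => hpO y), ?_⟩
    intro y
    obtain ⟨y', hy't, hyW'⟩ := Set.mem_iUnion₂.1 (ht (Set.mem_univ y))
    refine ⟨U y', hU y', ?_⟩
    intro x ⟨hxO, hxy⟩
    refine hsub y' ⟨Set.mem_iInter₂.1 hxO y' hy't, ?_⟩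
    have : π x = y := hxy
    rw [Set.mem_preimage, this]
    exact hyW'
  -- Step C: finite cover of P by such neighborhoods
  choose O hOopen hpO hOgood using stepB
  obtain ⟨t, ht⟩ := IsCompact.elim_finite_subcover isCompact_univ O hOopen
    (fun p _ => Set.mem_iUnion.2 ⟨p, hpO p⟩)
  set 𝒪 : Finset (Set P) := t.image O with h𝒪
  have h𝒪cov : IsFinOpenCover 𝒪 := by
    constructor
    · intro O' hO'
      obtain ⟨p, -, rfl⟩ := Finset.mem_image.1 hO'
      exact hOopen p
    · apply Set.eq_univ_of_forall
      intro q
      obtain ⟨p, hpt, hq⟩ := Set.mem_iUnion₂.1 (ht (Set.mem_univ q))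
      exact ⟨O p, Finset.mem_coe.2 (Finset.mem_image_of_mem O hpt), hq⟩
  -- Step D: apply CovDimLE and pull back
  obtain ⟨𝒱, h𝒱cov, h𝒱mult, h𝒱ref⟩ := hP 𝒪 h𝒪cov
  refine ⟨𝒱.image (fun V => f ⁻¹' V), ⟨?_, ?_⟩, ?_, ?_⟩
  · intro W hW
    obtain ⟨V, hV, rfl⟩ := Finset.mem_image.1 hW
    exact (h𝒱cov.1 V hV).preimage hf
  · apply Set.eq_univ_of_forall
    intro x
    have : f x ∈ ⋃₀ (𝒱 : Set (Set P)) := by rw [h𝒱cov.2]; trivial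
    obtain ⟨V, hV, hfx⟩ := this
    exact ⟨f ⁻¹' V, Finset.mem_coe.2 (Finset.mem_image_of_mem _ hV), hfx⟩
  · intro x
    refine le_trans (mult_image_le 𝒱 (fun V => f ⁻¹' V) x) (le_trans ?_ (h𝒱mult (f x)))
    apply le_of_eq
    unfold mult
    congr 1
  · intro W hW y
    obtain ⟨V, hV, rfl⟩ := Finset.mem_image.1 hW
    obtain ⟨O', hO'𝒪, hVO'⟩ := h𝒱ref V hV
    obtain ⟨p, -, rfl⟩ := Finset.mem_image.1 hO'𝒪
    obtain ⟨U, hU, hsub⟩ := hOgood p y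
    exact ⟨U, hU, fun x hx => hsub ⟨hVO' hx.1, hx.2⟩⟩

lemma wdim_set_nonempty {X Y : Type*} [MetricSpace X] [CompactSpace X]
    (π : X → Y) (lam : ℝ) (hlam : 0 < lam) :
    {k | ∃ (P : Type) (_ : TopologicalSpace P) (_ : CompactSpace P)
      (_ : TopologicalSpace.MetrizableSpace P), CovDimLE P k ∧
        ∃ f : X → P, Continuous f ∧
          ∀ (p : P) (y : Y), Metric.diam (f ⁻¹' {p} ∩ π ⁻¹' {y}) < lam}.Nonempty := by
  classical
  obtain ⟨t, ht⟩ := IsCompact.elim_finite_subcover (isCompact_univ (X := X))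
    (fun x : X => Metric.ball x (lam / 10)) (fun _ => Metric.isOpen_ball)
    (fun x _ => Set.mem_iUnion.2 ⟨x, Metric.mem_ball_self (by linarith)⟩)
  set n : ℕ := Fintype.card ↥t with hn
  set e : ↥t ≃ Fin n := Fintype.equivFin ↥t with he
  set c : Fin n → X := fun i => (e.symm i : X) with hc
  set f0 : X → (Fin n → ℝ) := fun x i => max 0 (lam / 10 - dist x (c i)) with hf0
  have hf0c : Continuous f0 := continuous_pi fun i =>
    continuous_const.max (continuous_const.sub (continuous_id.dist continuous_const))
  have hnear : ∀ x : X, ∃ i, dist x (c i) < lam / 10 := by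
    intro x
    obtain ⟨x', hx't, hx'⟩ := Set.mem_iUnion₂.1 (ht (Set.mem_univ x))
    refine ⟨e ⟨x', hx't⟩, ?_⟩
    rw [hc]
    simp only [Equiv.symm_apply_apply]
    exact Metric.mem_ball.1 hx'
  have hrangecpt : IsCompact (Set.range f0) := isCompact_range hf0c
  set P : Type := ↥(Set.range f0) with hP
  haveI : CompactSpace P := isCompact_iff_compactSpace.1 hrangecpt
  set f : X → P := fun x => ⟨f0 x, Set.mem_range_self x⟩ with hf
  have hfc : Continuous f := hf0c.subtype_mk _
  have hdim : CovDimLE P (2 ^ n - 1) := covDimLE_of_compact_subset n _ hrangecpt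
  refine ⟨2 ^ n - 1, P, inferInstance, inferInstance, inferInstance, hdim, f, hfc, ?_⟩
  intro p y
  have hdiam : Metric.diam (f ⁻¹' {p} ∩ π ⁻¹' {y}) ≤ lam / 5 := by
    apply Metric.diam_le_of_forall_dist_le (by linarith)
    intro x hx x' hx'
    have hxx' : f0 x = f0 x' := by
      have h1 : f x = p := hx.1
      have h2 : f x' = p := hx'.1
      have := h1.trans h2.symm
      exact Subtype.ext_iff.1 this
    obtain ⟨i, hi⟩ := hnear x
    have hpos : 0 < f0 x i := by
      rw [hf0]
      exact lt_of_lt_of_le (by linarith) (le_max_right _ _)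
    have hpos' : 0 < f0 x' i := hxx' ▸ hpos
    have hi' : dist x' (c i) < lam / 10 := by
      rw [hf0] at hpos'
      rcases lt_max_iff.1 hpos' with h | h
      · exact absurd h (lt_irrefl 0)
      · linarith
    calc dist x x' ≤ dist x (c i) + dist (c i) x' := dist_triangle _ _ _
      _ ≤ lam / 10 + lam / 10 := by
          rw [dist_comm (c i) x']
          exact add_le_add hi.le hi'.le
      _ = lam / 5 := by ring
  linarith

/-- `D(𝒰|π)`: the minimal order of a finite open cover `𝒲` of `X` such that
`{W ∩ π⁻¹(y)}` refines `𝒰`. -/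
noncomputable def Drel {X Y : Type*} [TopologicalSpace X] (π : X → Y)
    (𝒰 : Finset (Set X)) : ℕ :=
  sInf {k | ∃ 𝒲 : Finset (Set X), IsFinOpenCover 𝒲 ∧ (∀ x : X, mult 𝒲 x ≤ k + 1) ∧
    ∀ W ∈ 𝒲, ∀ y : Y, ∃ U ∈ 𝒰, W ∩ π ⁻¹' {y} ⊆ U}

/-- `Wdim_ε(X|Y, ρ)`: the minimal covering dimension of a compact metrizable `P`
admitting a continuous `f : X → P` with `diam (f⁻¹(p) ∩ π⁻¹(y)) < ε` for all `(p,y)`. -/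
noncomputable def WdimRel {X Y : Type*} [MetricSpace X] (π : X → Y) (ε : ℝ) : ℕ :=
  sInf {k | ∃ (P : Type) (_ : TopologicalSpace P) (_ : CompactSpace P)
    (_ : TopologicalSpace.MetrizableSpace P), CovDimLE P k ∧
      ∃ f : X → P, Continuous f ∧
        ∀ (p : P) (y : Y), Metric.diam (f ⁻¹' {p} ∩ π ⁻¹' {y}) < ε}

theorem stmt9 {X Y : Type*} [MetricSpace X] [CompactSpace X]
    [MetricSpace Y] [CompactSpace Y]
    (π : X → Y) (hπc : Continuous π) (hπs : Function.Surjective π)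
    (𝒰 : Finset (Set X)) (h𝒰 : IsFinOpenCover 𝒰)
    (lam : ℝ) (hlam : 0 < lam)
    (hLeb : ∀ S : Set X, Metric.diam S < lam → ∃ U ∈ 𝒰, S ⊆ U) :
    Drel π 𝒰 ≤ WdimRel π lam := by
  have hne := wdim_set_nonempty π lam hlam
  have hmem : WdimRel π lam ∈ {k | ∃ (P : Type) (_ : TopologicalSpace P) (_ : CompactSpace P)
      (_ : TopologicalSpace.MetrizableSpace P), CovDimLE P k ∧
        ∃ f : X → P, Continuous f ∧
          ∀ (p : P) (y : Y), Metric.diam (f ⁻¹' {p} ∩ π ⁻¹' {y}) < lam} := Nat.sInf_mem hne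
  obtain ⟨P, tP, cP, mP, hP, f, hfc, hfib⟩ := hmem
  letI := tP; letI := cP; letI := mP
  exact Nat.sInf_le (key_refinement π hπc 𝒰 h𝒰 lam hLeb (WdimRel π lam) P hP f hfc hfib)
end

section
/- Let π : X → Y be a continuous surjection of compact metric spaces and ε > 0. Let 𝒰 be a finite open cover of X all of whose members have ρ-diameter less than ε. Then Wdim_ε(X|Y, ρ) ≤ D(𝒰|π), where Wdim_ε(X|Y, ρ) is the minimal dimension of a compact metrizable P admitting a continuous f : X → P with diam(f⁻¹(p) ∩ π⁻¹(y), ρ) < ε for all (p,y) ∈ P × Y, and D(𝒰|π) is the minimal order of a finite open cover 𝒲 of X such that {W ∩ π⁻¹(y) : W ∈ 𝒲, y ∈ Y} refines 𝒰. -/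
open scoped Classical

noncomputable section
namespace Stmt10Aux

abbrev enc : Finset ℕ → ℕ := Encodable.encode

lemma enc_inj : Function.Injective enc := Encodable.encode_injective

/-- `C` is a finite simplicial complex with faces of size at most `K`. -/
def Gd (C : Finset (Finset ℕ)) (K : ℕ) : Prop :=
  ∀ s ∈ C, s.Nonempty ∧ s.card ≤ K ∧ ∀ s' : Finset ℕ, s' ⊆ s → s'.Nonempty → s' ∈ C

/-- geometric realization, inside `ℕ → ℝ`. -/
def Rl (C : Finset (Finset ℕ)) : Set (ℕ → ℝ) :=
  {t | (∀ i, 0 ≤ t i) ∧ ∃ s ∈ C, (∀ i, t i ≠ 0 ↔ i ∈ s) ∧ ∑ i ∈ s, t i = 1}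

lemma supp_unique {t : ℕ → ℝ} {s s' : Finset ℕ} (h : ∀ i, t i ≠ 0 ↔ i ∈ s)
    (h' : ∀ i, t i ≠ 0 ↔ i ∈ s') : s = s' := by
  ext i; rw [← h i, h' i]

/-- barycentric subdivision. -/
def sd (C : Finset (Finset ℕ)) : Finset (Finset ℕ) :=
  (C.powerset.filter fun c => c.Nonempty ∧ ∀ a ∈ c, ∀ b ∈ c, a ⊆ b ∨ b ⊆ a).image
    (Finset.image enc)

lemma mem_sd {C : Finset (Finset ℕ)} {S : Finset ℕ} :
    S ∈ sd C ↔ ∃ c : Finset (Finset ℕ), c ⊆ C ∧ c.Nonempty ∧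
      (∀ a ∈ c, ∀ b ∈ c, a ⊆ b ∨ b ⊆ a) ∧ S = c.image enc := by
  simp only [sd, Finset.mem_image, Finset.mem_filter, Finset.mem_powerset]
  constructor
  · rintro ⟨c, ⟨h1, h2, h3⟩, h4⟩; exact ⟨c, h1, h2, h3, h4.symm⟩
  · rintro ⟨c, h1, h2, h3, h4⟩; exact ⟨c, ⟨h1, h2, h3⟩, h4.symm⟩

lemma chain_card_le {K : ℕ} {c : Finset (Finset ℕ)} (hne : c.Nonempty)
    (hch : ∀ a ∈ c, ∀ b ∈ c, a ⊆ b ∨ b ⊆ a)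
    (hcard : ∀ a ∈ c, a.Nonempty ∧ a.card ≤ K) : c.card ≤ K := by
  have hinj : Set.InjOn Finset.card (c : Set (Finset ℕ)) := by
    intro a ha b hb hab
    rcases hch a ha b hb with h | h
    · exact Finset.eq_of_subset_of_card_le h hab.ge
    · exact (Finset.eq_of_subset_of_card_le h hab.le).symm
  have h1 : c.card = (c.image Finset.card).card := (Finset.card_image_of_injOn hinj).symm
  have h2 : c.image Finset.card ⊆ Finset.Icc 1 K := by
    intro m hm
    rcases Finset.mem_image.mp hm with ⟨a, ha, rfl⟩
    rcases hcard a ha with ⟨h3, h4⟩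
    exact Finset.mem_Icc.mpr ⟨Finset.card_pos.mpr h3, h4⟩
  calc c.card = (c.image Finset.card).card := h1
    _ ≤ (Finset.Icc 1 K).card := Finset.card_le_card h2
    _ = K := by simp

lemma Gd_sd {C : Finset (Finset ℕ)} {K : ℕ} (hC : Gd C K) : Gd (sd C) K := by
  intro S hS
  rcases mem_sd.mp hS with ⟨c, hc1, hc2, hc3, rfl⟩
  refine ⟨hc2.image enc, ?_, ?_⟩
  · rw [Finset.card_image_of_injective _ enc_inj]
    exact chain_card_le hc2 hc3 (fun a ha => ⟨(hC a (hc1 ha)).1, (hC a (hc1 ha)).2.1⟩)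
  · intro S' hS' hS'ne
    rcases hS'ne with ⟨m, hm⟩
    set c' := c.filter (fun a => enc a ∈ S') with hc'
    have himg : S' = c'.image enc := by
      ext m'
      simp only [hc', Finset.mem_image, Finset.mem_filter]
      constructor
      · intro hm'
        rcases Finset.mem_image.mp (hS' hm') with ⟨a, ha, rfl⟩
        exact ⟨a, ⟨ha, hm'⟩, rfl⟩
      · rintro ⟨a, ⟨_, h⟩, rfl⟩; exact h
    rw [himg]
    apply mem_sd.mpr
    refine ⟨c', fun a ha => hc1 (Finset.mem_filter.mp ha).1, ?_,
      fun a ha b hb => hc3 a (Finset.mem_filter.mp ha).1 b (Finset.mem_filter.mp hb).1, rfl⟩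
    rcases Finset.mem_image.mp (hS' hm) with ⟨a, ha, rfl⟩
    exact ⟨a, Finset.mem_filter.mpr ⟨ha, hm⟩⟩

/-- closed cell -/
def Cell (s : Finset ℕ) : Set (ℕ → ℝ) :=
  {t | (∀ i, 0 ≤ t i) ∧ (∀ i, i ∉ s → t i = 0) ∧ ∑ i ∈ s, t i = 1}

lemma Rl_eq_union {C : Finset (Finset ℕ)} {K : ℕ} (hC : Gd C K) :
    Rl C = ⋃ s ∈ C, Cell s := by
  ext t
  simp only [Rl, Cell, Set.mem_setOf_eq, Set.mem_iUnion, exists_prop]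
  constructor
  · rintro ⟨h0, s, hs, hsupp, hsum⟩
    exact ⟨s, hs, h0, fun i hi => by_contra fun h => hi ((hsupp i).mp h), hsum⟩
  · rintro ⟨s, hs, h0, hz, hsum⟩
    refine ⟨h0, s.filter (fun i => t i ≠ 0), ?_, ?_, ?_⟩
    · refine (hC s hs).2.2 _ (Finset.filter_subset _ _) ?_
      by_contra h
      rw [Finset.not_nonempty_iff_eq_empty] at h
      have hz2 : ∑ i ∈ s, t i = 0 := by
        apply Finset.sum_eq_zero
        intro i hi
        by_contra h2
        have : i ∈ s.filter (fun i => t i ≠ 0) := Finset.mem_filter.mpr ⟨hi, h2⟩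
        rw [h] at this
        exact absurd this (Finset.notMem_empty i)
      rw [hz2] at hsum; norm_num at hsum
    · intro i
      simp only [Finset.mem_filter]
      constructor
      · intro hi; exact ⟨by_contra fun h => hi (hz i h), hi⟩
      · tauto
    · rw [Finset.sum_filter_ne_zero]; exact hsum

lemma Cell_isClosed (s : Finset ℕ) : IsClosed (Cell s) := by
  have heq : Cell s = {t : ℕ → ℝ | ∀ i, 0 ≤ t i} ∩
      ({t | ∀ i, i ∉ s → t i = 0} ∩ {t | ∑ i ∈ s, t i = 1}) := by
    ext t; simp only [Cell, Set.mem_setOf_eq, Set.mem_inter_iff]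
  have h1 : IsClosed {t : ℕ → ℝ | ∀ i, 0 ≤ t i} := by
    have h : {t : ℕ → ℝ | ∀ i, 0 ≤ t i} = ⋂ i, {t | 0 ≤ t i} := by ext; simp [Set.mem_iInter]
    rw [h]
    exact isClosed_iInter fun i => isClosed_le continuous_const (continuous_apply i)
  have h2 : IsClosed {t : ℕ → ℝ | ∀ i, i ∉ s → t i = 0} := by
    have h : {t : ℕ → ℝ | ∀ i, i ∉ s → t i = 0} = ⋂ i ∈ {i | i ∉ s}, {t | t i = 0} := by
      ext; simp [Set.mem_iInter]
    rw [h]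
    exact isClosed_biInter fun i _ => isClosed_eq (continuous_apply i) continuous_const
  have h3 : IsClosed {t : ℕ → ℝ | ∑ i ∈ s, t i = 1} :=
    isClosed_eq (by continuity) continuous_const
  rw [heq]; exact h1.inter (h2.inter h3)

lemma Rl_isCompact {C : Finset (Finset ℕ)} {K : ℕ} (hC : Gd C K) : IsCompact (Rl C) := by
  have hsub : Rl C ⊆ Set.pi Set.univ (fun _ : ℕ => Set.Icc (0:ℝ) 1) := by
    rintro t ⟨h0, s, hs, hsupp, hsum⟩ i _
    refine ⟨h0 i, ?_⟩
    by_cases hi : i ∈ s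
    · rw [← hsum]
      exact Finset.single_le_sum (fun j _ => h0 j) hi
    · have : t i = 0 := by_contra fun h => hi ((hsupp i).mp h)
      rw [this]; norm_num
  have hcl : IsClosed (Rl C) := by
    rw [Rl_eq_union hC]
    exact Set.Finite.isClosed_biUnion C.finite_toSet (fun s _ => Cell_isClosed s)
  exact IsCompact.of_isClosed_subset (isCompact_univ_pi (fun _ => isCompact_Icc)) hcl hsub

/-- barycenter vector of a face -/
def bv (σ : Finset ℕ) : ℕ → ℝ := fun i => if i ∈ σ then ((σ.card : ℝ))⁻¹ else 0

lemma bv_nonneg (σ : Finset ℕ) (i : ℕ) : 0 ≤ bv σ i := by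
  unfold bv; split <;> positivity

/-- the linear "subdivision" map sending `|sd C|` to `|C|`. -/
def LmL (C : Finset (Finset ℕ)) : (ℕ → ℝ) →ₗ[ℝ] (ℕ → ℝ) where
  toFun w := fun i => ∑ σ ∈ C, w (enc σ) * bv σ i
  map_add' w v := by funext i; simp [add_mul, Finset.sum_add_distrib]
  map_smul' a w := by funext i; simp [Finset.mul_sum, mul_assoc]

lemma LmL_cont (C : Finset (Finset ℕ)) : Continuous (LmL C) := by
  apply continuous_pi
  intro i
  exact continuous_finset_sum _ fun σ _ => (continuous_apply (enc σ)).mul continuous_const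

/-- canonical data of a point of `|sd C|`: support chain and its top. -/
lemma chain_data {C : Finset (Finset ℕ)} {w : ℕ → ℝ} (hw : w ∈ Rl (sd C)) :
    ∃ c τ, c ⊆ C ∧ c.Nonempty ∧ (∀ a ∈ c, ∀ b ∈ c, a ⊆ b ∨ b ⊆ a) ∧
      (∀ m, w m ≠ 0 ↔ m ∈ c.image enc) ∧ (∑ σ ∈ c, w (enc σ)) = 1 ∧
      τ ∈ c ∧ ∀ a ∈ c, a ⊆ τ := by
  obtain ⟨h0, S, hS, hsupp, hsum⟩ := hw
  obtain ⟨c, hc1, hc2, hc3, rfl⟩ := mem_sd.mp hS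
  have htop : ∃ τ ∈ c, ∀ a ∈ c, a ⊆ τ := by
    obtain ⟨τ, hτ, hmax⟩ := Finset.exists_max_image c Finset.card hc2
    refine ⟨τ, hτ, fun a ha => ?_⟩
    rcases hc3 a ha τ hτ with h | h
    · exact h
    · have he := Finset.eq_of_subset_of_card_le h (hmax a ha)
      rw [he]
  obtain ⟨τ, hτ, hmax⟩ := htop
  refine ⟨c, τ, hc1, hc2, hc3, hsupp, ?_, hτ, hmax⟩
  rw [← Finset.sum_image (f := w) (g := enc) (fun a _ b _ h => enc_inj h)]
  exact hsum

section ChainData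

variable {C : Finset (Finset ℕ)} {K : ℕ} {w : ℕ → ℝ} {c : Finset (Finset ℕ)} {τ : Finset ℕ}

/-- restricted sum formula -/
lemma L_eq_sum_chain (hc1 : c ⊆ C) (hsupp : ∀ m, w m ≠ 0 ↔ m ∈ c.image enc) (i : ℕ) :
    LmL C w i = ∑ σ ∈ c, w (enc σ) * bv σ i := by
  show (∑ σ ∈ C, w (enc σ) * bv σ i) = _
  rw [Finset.sum_subset hc1]
  intro σ _ hσ
  have : w (enc σ) = 0 := by
    by_contra h
    obtain ⟨a, ha, hae⟩ := Finset.mem_image.mp ((hsupp _).mp h)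
    exact hσ (enc_inj hae ▸ ha)
  rw [this, zero_mul]

variable (hC : Gd C K) (hw0 : ∀ i, 0 ≤ w i) (hc1 : c ⊆ C)
  (hc3 : ∀ a ∈ c, ∀ b ∈ c, a ⊆ b ∨ b ⊆ a)
  (hsupp : ∀ m, w m ≠ 0 ↔ m ∈ c.image enc) (hτc : τ ∈ c) (hmax : ∀ a ∈ c, a ⊆ τ)

include hc1 hsupp

include hw0 hτc in
lemma L_lower {i : ℕ} (hi : i ∈ τ) : w (enc τ) * bv τ i ≤ LmL C w i := by
  rw [L_eq_sum_chain hc1 hsupp]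
  exact Finset.single_le_sum (f := fun σ => w (enc σ) * bv σ i)
    (fun σ _ => mul_nonneg (hw0 _) (bv_nonneg _ _)) hτc

include hC hc3 hτc hmax in
lemma L_exists_eq : ∃ i₀ ∈ τ, LmL C w i₀ = w (enc τ) * bv τ i₀ := by
  have hτne : τ.Nonempty := (hC τ (hc1 hτc)).1
  have hsmall : ∃ i₀ ∈ τ, ∀ a ∈ c.erase τ, i₀ ∉ a := by
    rcases Finset.eq_empty_or_nonempty (c.erase τ) with he | he
    · obtain ⟨i₀, hi₀⟩ := hτne
      exact ⟨i₀, hi₀, fun a ha => absurd ha (by simp [he])⟩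
    · obtain ⟨a', ha', hmax'⟩ := Finset.exists_max_image (c.erase τ) Finset.card he
      have ha'c := Finset.mem_of_mem_erase ha'
      have ha'ne : a' ≠ τ := Finset.ne_of_mem_erase ha'
      have ha'ss : a' ⊂ τ := (hmax a' ha'c).ssubset_of_ne ha'ne
      obtain ⟨i₀, hi₀τ, hi₀a⟩ := Finset.exists_of_ssubset ha'ss
      refine ⟨i₀, hi₀τ, fun a ha => ?_⟩
      have hsub : a ⊆ a' := by
        rcases hc3 a (Finset.mem_of_mem_erase ha) a' ha'c with h | h
        · exact h
        · have he := Finset.eq_of_subset_of_card_le h (hmax' a ha)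
          rw [he]
      exact fun h => hi₀a (hsub h)
  obtain ⟨i₀, hi₀, hni⟩ := hsmall
  refine ⟨i₀, hi₀, ?_⟩
  rw [L_eq_sum_chain hc1 hsupp]
  apply Finset.sum_eq_single_of_mem τ hτc
  intro σ hσ hne
  have : i₀ ∉ σ := hni σ (Finset.mem_erase.mpr ⟨hne, hσ⟩)
  simp [bv, this]

include hC hw0 hc3 hτc hmax in
lemma L_supp : ∀ i, LmL C w i ≠ 0 ↔ i ∈ τ := by
  intro i
  constructor
  · intro h
    by_contra hi
    apply h
    rw [L_eq_sum_chain hc1 hsupp]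
    apply Finset.sum_eq_zero
    intro σ hσ
    have : i ∉ σ := fun hh => hi (hmax σ hσ hh)
    simp [bv, this]
  · intro hi
    have h1 : w (enc τ) * bv τ i ≤ LmL C w i := L_lower hw0 hc1 hsupp hτc hi
    have h2 : 0 < w (enc τ) * bv τ i := by
      apply mul_pos
      · exact lt_of_le_of_ne (hw0 _) (Ne.symm ((hsupp _).mpr
          (Finset.mem_image_of_mem enc hτc)))
      · have : (0:ℝ) < τ.card := by
          exact_mod_cast Finset.card_pos.mpr (hC τ (hc1 hτc)).1
        show (0:ℝ) < if i ∈ τ then ((τ.card : ℝ))⁻¹ else 0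
        rw [if_pos hi]
        exact inv_pos.mpr this
    exact ne_of_gt (lt_of_lt_of_le h2 h1)

include hC hw0 hc3 hτc hmax in
lemma LmL_mem (hsum : (∑ σ ∈ c, w (enc σ)) = 1) : LmL C w ∈ Rl C := by
  refine ⟨fun i => Finset.sum_nonneg fun σ _ => mul_nonneg (hw0 _) (bv_nonneg _ _),
    τ, hc1 hτc, L_supp hC hw0 hc1 hc3 hsupp hτc hmax, ?_⟩
  have : ∀ i ∈ τ, LmL C w i = ∑ σ ∈ c, w (enc σ) * bv σ i :=
    fun i _ => L_eq_sum_chain hc1 hsupp i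
  rw [Finset.sum_congr rfl this, Finset.sum_comm]
  rw [← hsum]
  apply Finset.sum_congr rfl
  intro σ hσ
  rw [← Finset.mul_sum]
  have hsub : σ ⊆ τ := hmax σ hσ
  have hcard : (0:ℝ) < σ.card := by
    exact_mod_cast Finset.card_pos.mpr (hC σ (hc1 hσ)).1
  have : ∑ i ∈ τ, bv σ i = 1 := by
    unfold bv
    rw [Finset.sum_ite_mem, Finset.inter_eq_right.mpr hsub, Finset.sum_const, nsmul_eq_mul]
    field_simp
  rw [this, mul_one]

end ChainData

lemma LmL_mapsTo {C : Finset (Finset ℕ)} {K : ℕ} (hC : Gd C K) :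
    Set.MapsTo (LmL C) (Rl (sd C)) (Rl C) := by
  intro w hw
  obtain ⟨c, τ, hc1, hc2, hc3, hsupp, hsum, hτc, hmax⟩ := chain_data hw
  exact LmL_mem hC hw.1 hc1 hc3 hsupp hτc hmax hsum

lemma eq_indicator {w : ℕ → ℝ} {c : Finset (Finset ℕ)} {τ : Finset ℕ}
    (hw0 : ∀ i, 0 ≤ w i)
    (hsupp : ∀ m, w m ≠ 0 ↔ m ∈ c.image enc) (hsum : (∑ σ ∈ c, w (enc σ)) = 1)
    (hτc : τ ∈ c) (hμ : w (enc τ) = 1) :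
    w = fun m => if m = enc τ then 1 else 0 := by
  have hinj : ∀ a ∈ c, ∀ b ∈ c, enc a = enc b → a = b := fun a _ b _ h => enc_inj h
  have herase : ∀ σ ∈ c.erase τ, w (enc σ) = 0 := by
    have h1 : w (enc τ) + ∑ σ ∈ c.erase τ, w (enc σ) = 1 := by
      have h0 := Finset.add_sum_erase c (fun σ => w (enc σ)) hτc
      rw [hsum] at h0
      exact h0
    rw [hμ] at h1
    have h2 : ∑ σ ∈ c.erase τ, w (enc σ) = 0 := by linarith
    intro σ hσ
    exact (Finset.sum_eq_zero_iff_of_nonneg (fun a _ => hw0 _)).mp h2 σ hσ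
  funext m
  by_cases hm : m = enc τ
  · rw [hm, hμ, if_pos rfl]
  · rw [if_neg hm]
    by_contra h
    obtain ⟨a, ha, hae⟩ := Finset.mem_image.mp ((hsupp m).mp h)
    have haτ : a ≠ τ := fun he => hm (by rw [← hae, he])
    have : w (enc a) = 0 := herase a (Finset.mem_erase.mpr ⟨haτ, ha⟩)
    rw [hae] at this
    exact h this

lemma peel {C : Finset (Finset ℕ)} {K : ℕ} (hC : Gd C K) {w : ℕ → ℝ}
    {c : Finset (Finset ℕ)} {τ : Finset ℕ}
    (hw0 : ∀ i, 0 ≤ w i) (hc1 : c ⊆ C)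
    (hc3 : ∀ a ∈ c, ∀ b ∈ c, a ⊆ b ∨ b ⊆ a)
    (hsupp : ∀ m, w m ≠ 0 ↔ m ∈ c.image enc)
    (hsum : (∑ σ ∈ c, w (enc σ)) = 1)
    (hτc : τ ∈ c) (hμlt : w (enc τ) < 1) :
    (fun m => if m = enc τ then 0 else (1 - w (enc τ))⁻¹ * w m) ∈ Rl (sd C) ∧
    (∀ m, (if m = enc τ then (0:ℝ) else (1 - w (enc τ))⁻¹ * w m) ≠ 0 ↔
        m ∈ (c.erase τ).image enc) ∧
    (∀ i, LmL C w i = w (enc τ) * bv τ i +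
      (1 - w (enc τ)) * LmL C (fun m => if m = enc τ then 0 else (1 - w (enc τ))⁻¹ * w m) i) := by
  set v : ℕ → ℝ := fun m => if m = enc τ then 0 else (1 - w (enc τ))⁻¹ * w m with hvdef
  have h1μ : 0 < 1 - w (enc τ) := by linarith
  have hβ : (1 - w (enc τ))⁻¹ ≠ 0 := inv_ne_zero (ne_of_gt h1μ)
  have herase_sum : ∑ σ ∈ c.erase τ, w (enc σ) = 1 - w (enc τ) := by
    have h0 := Finset.add_sum_erase c (fun σ => w (enc σ)) hτc
    rw [hsum] at h0
    linarith
  have hv0 : ∀ i, 0 ≤ v i := by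
    intro i
    rw [hvdef]
    dsimp only
    split
    · exact le_refl 0
    · exact mul_nonneg (le_of_lt (inv_pos.mpr h1μ)) (hw0 i)
  have hvsupp : ∀ m, v m ≠ 0 ↔ m ∈ (c.erase τ).image enc := by
    intro m
    rw [Finset.image_erase enc_inj]
    by_cases hm : m = enc τ
    · subst hm
      simp only [hvdef, if_pos rfl]
      simp
    · simp only [hvdef, if_neg hm]
      rw [Finset.mem_erase]
      constructor
      · intro h
        have hw : w m ≠ 0 := fun hz => h (by rw [hz, mul_zero])
        exact ⟨hm, (hsupp m).mp hw⟩
      · rintro ⟨-, hmem⟩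
        exact mul_ne_zero hβ ((hsupp m).mpr hmem)
  have herasene : (c.erase τ).Nonempty := by
    by_contra h
    rw [Finset.not_nonempty_iff_eq_empty] at h
    have hc : c = {τ} := by
      ext a
      simp only [Finset.mem_singleton]
      constructor
      · intro ha
        by_contra hne
        exact absurd (Finset.mem_erase.mpr ⟨hne, ha⟩) (by simp [h])
      · rintro rfl; exact hτc
    rw [hc, Finset.sum_singleton] at hsum
    linarith
  have hveq : ∀ σ ∈ c.erase τ, v (enc σ) = (1 - w (enc τ))⁻¹ * w (enc σ) := by
    intro σ hσ
    have : enc σ ≠ enc τ := fun h => (Finset.ne_of_mem_erase hσ) (enc_inj h)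
    simp only [hvdef, if_neg this]
  have hvmem : v ∈ Rl (sd C) := by
    refine ⟨hv0, (c.erase τ).image enc, ?_, hvsupp, ?_⟩
    · exact mem_sd.mpr ⟨c.erase τ, fun a ha => hc1 (Finset.mem_of_mem_erase ha), herasene,
        fun a ha b hb => hc3 a (Finset.mem_of_mem_erase ha) b (Finset.mem_of_mem_erase hb), rfl⟩
    · rw [Finset.sum_image (fun a _ b _ h => enc_inj h)]
      rw [Finset.sum_congr rfl hveq, ← Finset.mul_sum, herase_sum]
      exact inv_mul_cancel₀ (ne_of_gt h1μ)
  refine ⟨hvmem, hvsupp, ?_⟩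
  intro i
  have hx : ∀ σ ∈ C, (1 - w (enc τ)) * (v (enc σ) * bv σ i) =
      w (enc σ) * bv σ i - (if σ = τ then w (enc σ) * bv σ i else 0) := by
    intro σ _
    by_cases hστ : σ = τ
    · subst hστ
      simp [hvdef]
    · have hne : enc σ ≠ enc τ := fun h => hστ (enc_inj h)
      simp only [hvdef, if_neg hne, if_neg hστ, sub_zero]
      field_simp
  have hLv : (1 - w (enc τ)) * LmL C v i = LmL C w i - w (enc τ) * bv τ i := by
    show (1 - w (enc τ)) * ∑ σ ∈ C, v (enc σ) * bv σ i = _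
    rw [Finset.mul_sum, Finset.sum_congr rfl hx, Finset.sum_sub_distrib]
    rw [Finset.sum_ite_eq' C τ (fun σ => w (enc σ) * bv σ i), if_pos (hc1 hτc)]
    rfl
  linarith

lemma LmL_injOn_aux {C : Finset (Finset ℕ)} {K : ℕ} (hC : Gd C K) :
    ∀ n : ℕ, ∀ w ∈ Rl (sd C), ∀ w' ∈ Rl (sd C),
      ∀ c : Finset (Finset ℕ), (∀ m, w m ≠ 0 ↔ m ∈ c.image enc) → c.card ≤ n →
        LmL C w = LmL C w' → w = w' := by
  intro n
  induction n with
  | zero =>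
    intro w hw w' hw' c hsupp hcard _
    obtain ⟨c₀, τ, hc1, hc2, hc3, hsupp₀, hsum, hτc, hmax⟩ := chain_data hw
    have hcc : c₀ = c := Finset.image_injective enc_inj (supp_unique hsupp₀ hsupp)
    rw [hcc] at hc2
    obtain ⟨a, ha⟩ := hc2
    have : 0 < c.card := Finset.card_pos.mpr ⟨a, ha⟩
    omega
  | succ n ih =>
    intro w hw w' hw' c hsupp hcard heq
    obtain ⟨c₀, τ, hc1, hc2, hc3, hsupp₀, hsum, hτc, hmax⟩ := chain_data hw
    have hcc : c₀ = c := Finset.image_injective enc_inj (supp_unique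
      (s := c₀.image enc) (s' := c.image enc) hsupp₀ hsupp)
    subst hcc
    obtain ⟨c', τ', hc1', hc2', hc3', hsupp', hsum', hτc', hmax'⟩ := chain_data hw'
    -- the tops agree
    have hττ : τ = τ' := by
      apply supp_unique (t := LmL C w)
      · exact L_supp hC hw.1 hc1 hc3 hsupp₀ hτc hmax
      · rw [heq]
        exact L_supp hC hw'.1 hc1' hc3' hsupp' hτc' hmax'
    subst hττ
    -- top weights agree
    have hbvpos : ∀ i ∈ τ, 0 < bv τ i := by
      intro i hi
      show (0:ℝ) < if i ∈ τ then ((τ.card : ℝ))⁻¹ else 0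
      rw [if_pos hi]
      have : (0:ℝ) < τ.card := by
        exact_mod_cast Finset.card_pos.mpr (hC τ (hc1 hτc)).1
      exact inv_pos.mpr this
    have hwτ : w (enc τ) = w' (enc τ) := by
      obtain ⟨i₀, hi₀, he₀⟩ := L_exists_eq hC hc1 hc3 hsupp₀ hτc hmax
      obtain ⟨i₁, hi₁, he₁⟩ := L_exists_eq hC hc1' hc3' hsupp' hτc' hmax'
      have h1 : w' (enc τ) * bv τ i₀ ≤ w (enc τ) * bv τ i₀ := by
        rw [← he₀, heq]
        exact L_lower hw'.1 hc1' hsupp' hτc' hi₀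
      have h2 : w (enc τ) * bv τ i₁ ≤ w' (enc τ) * bv τ i₁ := by
        rw [← he₁, ← heq]
        exact L_lower hw.1 hc1 hsupp₀ hτc hi₁
      have g1 := le_of_mul_le_mul_right h1 (hbvpos i₀ hi₀)
      have g2 := le_of_mul_le_mul_right h2 (hbvpos i₁ hi₁)
      linarith
    have hμ1 : w (enc τ) ≤ 1 := by
      rw [← hsum]
      exact Finset.single_le_sum (fun σ _ => hw.1 (enc σ)) hτc
    rcases eq_or_lt_of_le hμ1 with hμe | hμlt
    · have e1 : w = fun m => if m = enc τ then 1 else 0 :=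
        eq_indicator hw.1 hsupp₀ hsum hτc hμe
      have e2 : w' = fun m => if m = enc τ then 1 else 0 :=
        eq_indicator hw'.1 hsupp' hsum' hτc' (by rw [← hwτ]; exact hμe)
      rw [e1, e2]
    · -- peel off the top and use the induction hypothesis
      obtain ⟨hvmem, hvsupp, hvid⟩ :=
        peel hC hw.1 hc1 hc3 hsupp₀ hsum hτc hμlt
      have hμlt' : w' (enc τ) < 1 := by rw [← hwτ]; exact hμlt
      obtain ⟨hvmem', hvsupp', hvid'⟩ :=
        peel hC hw'.1 hc1' hc3' hsupp' hsum' hτc' hμlt'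
      set v : ℕ → ℝ := fun m => if m = enc τ then 0 else (1 - w (enc τ))⁻¹ * w m with hvdef
      set v' : ℕ → ℝ := fun m => if m = enc τ then 0 else (1 - w' (enc τ))⁻¹ * w' m with hvdef'
      have h1μ : 0 < 1 - w (enc τ) := by linarith
      have hLvv : LmL C v = LmL C v' := by
        funext i
        have e1 := hvid i
        have e2 := hvid' i
        rw [← hwτ] at e2
        rw [heq] at e1
        have : (1 - w (enc τ)) * LmL C v i = (1 - w (enc τ)) * LmL C v' i := by linarith
        exact mul_left_cancel₀ (ne_of_gt h1μ) this
      have hcard' : (c₀.erase τ).card ≤ n := by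
        have := Finset.card_erase_of_mem hτc
        omega
      have hvv : v = v' := ih v hvmem v' hvmem' (c₀.erase τ) hvsupp hcard' hLvv
      funext m
      by_cases hm : m = enc τ
      · rw [hm, hwτ]
      · have g1 : v m = v' m := by rw [hvv]
        simp only [hvdef, hvdef', if_neg hm] at g1
        have g2 : w m = (1 - w (enc τ)) * ((1 - w (enc τ))⁻¹ * w m) := by
          field_simp
        rw [g2, g1, ← hwτ]
        field_simp

lemma LmL_surjOn_aux {C : Finset (Finset ℕ)} {K : ℕ} (hC : Gd C K) :
    ∀ n : ℕ, ∀ t : ℕ → ℝ, ∀ s ∈ C, (∀ i, 0 ≤ t i) → (∀ i, t i ≠ 0 ↔ i ∈ s) →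
      (∑ i ∈ s, t i = 1) → s.card ≤ n →
      ∃ w ∈ Rl (sd C), LmL C w = t ∧ ∀ m, w m ≠ 0 → ∃ σ, σ ⊆ s ∧ enc σ = m := by
  intro n
  induction n with
  | zero =>
    intro t s hsC _ _ _ hcard
    have : 0 < s.card := Finset.card_pos.mpr (hC s hsC).1
    omega
  | succ n ih =>
    intro t s hsC ht0 hts hsum hcard
    have hsne : s.Nonempty := (hC s hsC).1
    have hscard : (0:ℝ) < s.card := by exact_mod_cast Finset.card_pos.mpr hsne
    obtain ⟨i₀, hi₀s, hmin⟩ := Finset.exists_min_image s t hsne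
    have hm0 : 0 < t i₀ := lt_of_le_of_ne (ht0 i₀) (Ne.symm ((hts i₀).mpr hi₀s))
    have hc₀le : t i₀ * s.card ≤ 1 := by
      have h := Finset.card_nsmul_le_sum s t (t i₀) (fun i hi => hmin i hi)
      rw [hsum, nsmul_eq_mul] at h
      calc t i₀ * s.card = s.card * t i₀ := by ring
        _ ≤ 1 := h
    rcases eq_or_lt_of_le hc₀le with heq1 | hlt1
    · -- constant case : t is the barycenter of s
      have hconst : ∀ i ∈ s, t i = t i₀ := by
        by_contra h
        push_neg at h
        obtain ⟨j, hjs, hj⟩ := h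
        have hjgt : t i₀ < t j := lt_of_le_of_ne (hmin j hjs) (Ne.symm hj)
        have hlt : ∑ _i ∈ s, t i₀ < ∑ i ∈ s, t i :=
          Finset.sum_lt_sum (fun i hi => hmin i hi) ⟨j, hjs, hjgt⟩
        rw [Finset.sum_const, nsmul_eq_mul, hsum] at hlt
        nlinarith
      refine ⟨fun mm => if mm = enc s then 1 else 0, ?_, ?_, ?_⟩
      · refine ⟨fun i => by dsimp only; split <;> norm_num, {enc s}, ?_, ?_, ?_⟩
        · apply mem_sd.mpr
          exact ⟨{s}, by simpa using hsC, Finset.singleton_nonempty s,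
            by simp, by simp⟩
        · intro mm
          dsimp only
          constructor
          · intro h
            by_cases hmm : mm = enc s
            · simp [hmm]
            · rw [if_neg hmm] at h; exact absurd rfl h
          · intro h
            rw [Finset.mem_singleton] at h
            rw [if_pos h]; norm_num
        · simp
      · funext i
        show (∑ σ ∈ C, (if enc σ = enc s then (1:ℝ) else 0) * bv σ i) = t i
        have hrw : ∀ σ ∈ C, (if enc σ = enc s then (1:ℝ) else 0) * bv σ i =
            if σ = s then bv σ i else 0 := by
          intro σ _
          by_cases hσ : σ = s
          · subst hσ; simp
          · rw [if_neg (fun h => hσ (enc_inj h)), if_neg hσ, zero_mul]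
        rw [Finset.sum_congr rfl hrw, Finset.sum_ite_eq' C s (fun σ => bv σ i), if_pos hsC]
        by_cases hi : i ∈ s
        · show (if i ∈ s then ((s.card:ℝ))⁻¹ else 0) = t i
          rw [if_pos hi, hconst i hi]
          have : t i₀ * s.card = 1 := heq1
          field_simp
          linarith [this]
        · show (if i ∈ s then ((s.card:ℝ))⁻¹ else 0) = t i
          rw [if_neg hi]
          by_contra h
          exact hi ((hts i).mp (Ne.symm h))
      · intro mm h
        dsimp only at h
        by_cases hmm : mm = enc s
        · exact ⟨s, le_refl _, hmm.symm⟩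
        · rw [if_neg hmm] at h; exact absurd rfl h
    · -- peel off the minimum
      set c₀ := t i₀ * s.card with hc₀def
      have hc₀pos : 0 < c₀ := mul_pos hm0 hscard
      have h1c : 0 < 1 - c₀ := by linarith
      set s' := s.filter (fun i => t i ≠ t i₀) with hs'def
      have hs'sub : s' ⊆ s := Finset.filter_subset _ _
      have hi₀n : i₀ ∉ s' := by simp [hs'def]
      have hs'ne : s'.Nonempty := by
        by_contra h
        rw [Finset.not_nonempty_iff_eq_empty] at h
        have hconst : ∀ i ∈ s, t i = t i₀ := by
          intro i hi
          by_contra hne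
          have hmem : i ∈ s.filter (fun i => t i ≠ t i₀) := Finset.mem_filter.mpr ⟨hi, hne⟩
          rw [← hs'def, h] at hmem
          exact absurd hmem (Finset.notMem_empty i)
        have : ∑ i ∈ s, t i = s.card * t i₀ := by
          rw [Finset.sum_congr rfl hconst, Finset.sum_const, nsmul_eq_mul]
        rw [hsum] at this
        rw [hc₀def] at hlt1
        nlinarith
      have hs'C : s' ∈ C := (hC s hsC).2.2 s' hs'sub hs'ne
      set t' : ℕ → ℝ := fun i => if i ∈ s then (1-c₀)⁻¹ * (t i - t i₀) else 0 with ht'def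
      have ht'0 : ∀ i, 0 ≤ t' i := by
        intro i
        rw [ht'def]
        dsimp only
        split
        · next hi => exact mul_nonneg (le_of_lt (inv_pos.mpr h1c)) (by linarith [hmin i hi])
        · exact le_refl 0
      have ht's : ∀ i, t' i ≠ 0 ↔ i ∈ s' := by
        intro i
        rw [ht'def]
        dsimp only
        by_cases hi : i ∈ s
        · rw [if_pos hi, hs'def, Finset.mem_filter]
          constructor
          · intro h
            refine ⟨hi, fun he => h ?_⟩
            rw [he]; ring
          · rintro ⟨-, hne⟩
            exact mul_ne_zero (inv_ne_zero (ne_of_gt h1c)) (sub_ne_zero_of_ne hne)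
        · rw [if_neg hi]
          simp only [ne_eq, not_true_eq_false, iff_false, not_not, hs'def, Finset.mem_filter]
          tauto
      have ht'sum : ∑ i ∈ s', t' i = 1 := by
        have hss : ∑ i ∈ s, t' i = ∑ i ∈ s', t' i := by
          symm
          apply Finset.sum_subset hs'sub
          intro i hi hni
          have : t i = t i₀ := by
            by_contra hne
            exact hni (Finset.mem_filter.mpr ⟨hi, hne⟩)
          rw [ht'def]
          dsimp only
          rw [if_pos hi, this]
          ring
        rw [← hss]
        have : ∀ i ∈ s, t' i = (1-c₀)⁻¹ * (t i - t i₀) := by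
          intro i hi
          rw [ht'def]; dsimp only; rw [if_pos hi]
        rw [Finset.sum_congr rfl this, ← Finset.mul_sum, Finset.sum_sub_distrib,
          hsum, Finset.sum_const, nsmul_eq_mul, hc₀def]
        rw [inv_mul_eq_one₀ (ne_of_gt h1c)]
        ring
      have hs'card : s'.card ≤ n := by
        have h1 : s'.card < s.card := Finset.card_lt_card ⟨hs'sub, fun h => hi₀n (h hi₀s)⟩
        omega
      obtain ⟨w', hw'mem, hw'L, hw'side⟩ := ih t' s' hs'C ht'0 ht's ht'sum hs'card
      have hw's : w' (enc s) = 0 := by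
        by_contra h
        obtain ⟨σ, hσsub, hσe⟩ := hw'side _ h
        have : σ = s := enc_inj hσe
        subst this
        exact hi₀n (hσsub hi₀s)
      obtain ⟨c', τ', hc1', hc2', hc3', hsupp', hsum', hτ'c, hmax'⟩ := chain_data hw'mem
      have hc'sub : ∀ a ∈ c', a ⊆ s' := by
        intro a ha
        have : w' (enc a) ≠ 0 := (hsupp' _).mpr (Finset.mem_image_of_mem enc ha)
        obtain ⟨σ, hσsub, hσe⟩ := hw'side _ this
        rw [← enc_inj hσe]
        exact hσsub
      have hsnc' : s ∉ c' := fun h => hi₀n (hc'sub s h hi₀s)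
      set w : ℕ → ℝ := fun mm => if mm = enc s then c₀ else (1-c₀) * w' mm with hwdef
      have hwsupp : ∀ mm, w mm ≠ 0 ↔ mm ∈ (insert s c').image enc := by
        intro mm
        rw [Finset.image_insert, Finset.mem_insert]
        rw [hwdef]
        dsimp only
        by_cases hmm : mm = enc s
        · rw [if_pos hmm]
          simp [hmm, ne_of_gt hc₀pos]
        · rw [if_neg hmm]
          constructor
          · intro h
            right
            have : w' mm ≠ 0 := fun hz => h (by rw [hz, mul_zero])
            exact (hsupp' mm).mp this
          · intro h
            rcases h with h | h
            · exact absurd h hmm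
            · exact mul_ne_zero (ne_of_gt h1c) ((hsupp' mm).mpr h)
      refine ⟨w, ?_, ?_, ?_⟩
      · refine ⟨?_, (insert s c').image enc, ?_, hwsupp, ?_⟩
        · intro i
          rw [hwdef]
          dsimp only
          split
          · exact le_of_lt hc₀pos
          · exact mul_nonneg (le_of_lt h1c) (hw'mem.1 i)
        · apply mem_sd.mpr
          refine ⟨insert s c', ?_, ⟨s, Finset.mem_insert_self s c'⟩, ?_, rfl⟩
          · intro a ha
            rcases Finset.mem_insert.mp ha with rfl | ha
            · exact hsC
            · exact hc1' ha
          · intro a ha b hb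
            rcases Finset.mem_insert.mp ha with ha' | ha'
            · rcases Finset.mem_insert.mp hb with hb' | hb'
              · subst ha'; subst hb'; left; exact Finset.Subset.refl _
              · subst ha'; right; exact (hc'sub b hb').trans hs'sub
            · rcases Finset.mem_insert.mp hb with hb' | hb'
              · subst hb'; left; exact (hc'sub a ha').trans hs'sub
              · exact hc3' a ha' b hb'
        · rw [Finset.sum_image (fun a _ b _ h => enc_inj h)]
          rw [Finset.sum_insert hsnc']
          have hterm : ∀ σ ∈ c', w (enc σ) = (1-c₀) * w' (enc σ) := by
            intro σ hσ
            have hne : enc σ ≠ enc s := fun h => hsnc' (enc_inj h ▸ hσ)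
            rw [hwdef]
            dsimp only
            rw [if_neg hne]
          rw [Finset.sum_congr rfl hterm, ← Finset.mul_sum, hsum']
          rw [hwdef]
          dsimp only
          rw [if_pos rfl]
          ring
      · funext i
        have hdec : ∀ σ ∈ C, w (enc σ) * bv σ i =
            c₀ * (if σ = s then bv σ i else 0) + (1-c₀) * (w' (enc σ) * bv σ i) := by
          intro σ _
          by_cases hσ : σ = s
          · subst hσ
            rw [hwdef]
            dsimp only
            rw [if_pos rfl, if_pos rfl, hw's]
            ring
          · have hne : enc σ ≠ enc s := fun h => hσ (enc_inj h)
            rw [hwdef]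
            dsimp only
            rw [if_neg hne, if_neg hσ]
            ring
        show (∑ σ ∈ C, w (enc σ) * bv σ i) = t i
        rw [Finset.sum_congr rfl hdec, Finset.sum_add_distrib, ← Finset.mul_sum,
          ← Finset.mul_sum, Finset.sum_ite_eq' C s (fun σ => bv σ i), if_pos hsC]
        have : (∑ σ ∈ C, w' (enc σ) * bv σ i) = t' i := by
          rw [← hw'L]; rfl
        rw [this]
        by_cases hi : i ∈ s
        · show c₀ * (if i ∈ s then ((s.card:ℝ))⁻¹ else 0) + (1-c₀) * t' i = t i
          rw [if_pos hi, ht'def]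
          dsimp only
          rw [if_pos hi, hc₀def]
          field_simp
          rw [mul_div_cancel_left₀ _ (show (1 - t i₀ * (s.card:ℝ)) ≠ 0 from ne_of_gt h1c)]
          ring
        · show c₀ * (if i ∈ s then ((s.card:ℝ))⁻¹ else 0) + (1-c₀) * t' i = t i
          rw [if_neg hi, ht'def]
          dsimp only
          rw [if_neg hi]
          have : t i = 0 := by
            by_contra h
            exact hi ((hts i).mp h)
          rw [this]
          ring
      · intro mm h
        rw [hwdef] at h
        dsimp only at h
        by_cases hmm : mm = enc s
        · exact ⟨s, le_refl _, hmm.symm⟩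
        · rw [if_neg hmm] at h
          have : w' mm ≠ 0 := fun hz => h (by rw [hz, mul_zero])
          obtain ⟨σ, hσsub, hσe⟩ := hw'side _ this
          exact ⟨σ, hσsub.trans hs'sub, hσe⟩

lemma LmL_bijOn {C : Finset (Finset ℕ)} {K : ℕ} (hC : Gd C K) :
    Set.BijOn (LmL C) (Rl (sd C)) (Rl C) := by
  refine ⟨LmL_mapsTo hC, ?_, ?_⟩
  · intro w hw w' hw' heq
    obtain ⟨c, τ, hc1, hc2, hc3, hsupp, hsum, hτc, hmax⟩ := chain_data hw
    exact LmL_injOn_aux hC c.card w hw w' hw' c hsupp le_rfl heq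
  · intro t ht
    obtain ⟨ht0, sf, hsC, hts, hsum⟩ := ht
    obtain ⟨w, hwmem, hwL, -⟩ :=
      LmL_surjOn_aux hC sf.card t sf hsC ht0 hts hsum le_rfl
    exact ⟨w, hwmem, hwL⟩

/-- the tower of iterated subdivisions -/
def Tw (K0 : Finset (Finset ℕ)) : ℕ → Finset (Finset ℕ)
  | 0 => K0
  | N+1 => sd (Tw K0 N)

lemma Gd_Tw {K0 : Finset (Finset ℕ)} {K : ℕ} (hK0 : Gd K0 K) :
    ∀ N, Gd (Tw K0 N) K
  | 0 => hK0
  | N+1 => Gd_sd (Gd_Tw hK0 N)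

/-- iterated subdivision maps -/
def PhL (K0 : Finset (Finset ℕ)) : ℕ → ((ℕ → ℝ) →ₗ[ℝ] (ℕ → ℝ))
  | 0 => LinearMap.id
  | N+1 => (PhL K0 N).comp (LmL (Tw K0 N))

lemma PhL_cont (K0 : Finset (Finset ℕ)) : ∀ N, Continuous (PhL K0 N)
  | 0 => continuous_id
  | N+1 => (PhL_cont K0 N).comp (LmL_cont _)

lemma PhL_bijOn {K0 : Finset (Finset ℕ)} {K : ℕ} (hK0 : Gd K0 K) :
    ∀ N, Set.BijOn (PhL K0 N) (Rl (Tw K0 N)) (Rl K0)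
  | 0 => Set.bijOn_id _
  | N+1 => by
    have h1 := LmL_bijOn (Gd_Tw hK0 N)
    have h2 := PhL_bijOn hK0 N
    have : ⇑(PhL K0 (N+1)) = ⇑(PhL K0 N) ∘ ⇑(LmL (Tw K0 N)) := rfl
    rw [this]
    exact h2.comp h1

/-- vertex indicator -/
def em (m : ℕ) : ℕ → ℝ := fun m' => if m' = m then 1 else 0

lemma em_mem {C : Finset (Finset ℕ)} {K : ℕ} (hC : Gd C K) {sf : Finset ℕ}
    (hs : sf ∈ C) {v : ℕ} (hv : v ∈ sf) : em v ∈ Rl C := by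
  have hvC : {v} ∈ C := (hC sf hs).2.2 {v} (Finset.singleton_subset_iff.mpr hv)
    (Finset.singleton_nonempty v)
  refine ⟨fun i => by simp only [em]; split <;> norm_num, {v}, hvC, ?_, by simp [em]⟩
  intro i
  simp only [em]
  rcases eq_or_ne i v with rfl | h
  · simp
  · simp [h]

lemma expand_basis {w : ℕ → ℝ} {sf : Finset ℕ}
    (hsupp : ∀ i, w i ≠ 0 ↔ i ∈ sf) : w = ∑ m ∈ sf, w m • em m := by
  funext m'
  rw [Finset.sum_apply]
  have : ∀ m ∈ sf, (w m • em m) m' = if m' = m then w m else 0 := by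
    intro m _
    unfold em
    rcases eq_or_ne m' m with rfl | h
    · simp
    · simp [h]
  rw [Finset.sum_congr rfl this, Finset.sum_ite_eq sf m' (fun m => w m)]
  by_cases h : m' ∈ sf
  · rw [if_pos h]
  · rw [if_neg h]
    by_contra hne
    exact h ((hsupp m').mp hne)

lemma L_em {C : Finset (Finset ℕ)} {τ : Finset ℕ} (hτC : τ ∈ C) :
    LmL C (em (enc τ)) = bv τ := by
  funext i
  show (∑ σ ∈ C, em (enc τ) (enc σ) * bv σ i) = bv τ i
  have : ∀ σ ∈ C, em (enc τ) (enc σ) * bv σ i = if σ = τ then bv σ i else 0 := by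
    intro σ _
    unfold em
    rcases eq_or_ne σ τ with rfl | h
    · simp
    · have : enc τ ≠ enc σ := fun he => h (enc_inj he).symm
      simp [this.symm, h]
  rw [Finset.sum_congr rfl this, Finset.sum_ite_eq' C τ (fun σ => bv σ i), if_pos hτC]

lemma bv_expand (τ : Finset ℕ) : bv τ = ∑ u ∈ τ, ((τ.card:ℝ))⁻¹ • em u := by
  funext i
  rw [Finset.sum_apply]
  have : ∀ u ∈ τ, (((τ.card:ℝ))⁻¹ • em u) i = if i = u then ((τ.card:ℝ))⁻¹ else 0 := by
    intro u _
    unfold em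
    rcases eq_or_ne i u with rfl | h
    · simp
    · simp [h]
  rw [Finset.sum_congr rfl this, Finset.sum_ite_eq τ i (fun _ => ((τ.card:ℝ))⁻¹)]
  unfold bv
  rfl

/-- barycenter estimate in a normed space -/
lemma bary_est {ι : Type*} {E : Type*} [NormedAddCommGroup E] [NormedSpace ℝ E]
    {s s' : Finset ι} (hss : s ⊆ s') (hs : s.Nonempty)
    {g : ι → E} {D : ℝ}
    (hD : ∀ u ∈ s', ∀ v ∈ s', ‖g u - g v‖ ≤ D) :
    ‖(s.card:ℝ)⁻¹ • ∑ u ∈ s, g u - (s'.card:ℝ)⁻¹ • ∑ u ∈ s', g u‖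
      ≤ (1 - ((s'.card:ℝ))⁻¹) * D := by
  have hs' : s'.Nonempty := hs.mono hss
  have hn' : (0:ℝ) < s'.card := by exact_mod_cast Finset.card_pos.mpr hs'
  have hn : (0:ℝ) < s.card := by exact_mod_cast Finset.card_pos.mpr hs
  set b' : E := (s'.card:ℝ)⁻¹ • ∑ u ∈ s', g u with hb'
  have avg_eq : ∀ (r : Finset ι), r.Nonempty → ∀ x : E,
      (r.card:ℝ)⁻¹ • ∑ u ∈ r, g u - x = (r.card:ℝ)⁻¹ • ∑ u ∈ r, (g u - x) := by
    intro r hr x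
    have hrc : (0:ℝ) < r.card := by exact_mod_cast Finset.card_pos.mpr hr
    rw [Finset.sum_sub_distrib, Finset.sum_const, smul_sub]
    congr 1
    rw [← Nat.cast_smul_eq_nsmul ℝ, smul_smul, inv_mul_cancel₀ (ne_of_gt hrc), one_smul]
  have key : ∀ u₀ ∈ s', ‖g u₀ - b'‖ ≤ (1 - ((s'.card:ℝ))⁻¹) * D := by
    intro u₀ hu₀
    have e1 : g u₀ - b' = (s'.card:ℝ)⁻¹ • ∑ u ∈ s', (g u₀ - g u) := by
      have := avg_eq s' hs' (g u₀)
      have e2 : ∑ u ∈ s', (g u₀ - g u) = -(∑ u ∈ s', (g u - g u₀)) := by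
        rw [← Finset.sum_neg_distrib]
        apply Finset.sum_congr rfl
        intro u _
        abel
      rw [e2, smul_neg, ← this]
      abel
    rw [e1, norm_smul]
    have hsum : ‖∑ u ∈ s', (g u₀ - g u)‖ ≤ ((s'.card:ℝ) - 1) * D := by
      have e3 : ∑ u ∈ s', (g u₀ - g u) = ∑ u ∈ s'.erase u₀, (g u₀ - g u) := by
        symm
        apply Finset.sum_erase
        abel
      rw [e3]
      calc ‖∑ u ∈ s'.erase u₀, (g u₀ - g u)‖ ≤ ∑ u ∈ s'.erase u₀, ‖g u₀ - g u‖ :=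
            norm_sum_le _ _
        _ ≤ ∑ _u ∈ s'.erase u₀, D := by
            apply Finset.sum_le_sum
            intro u hu
            exact hD u₀ hu₀ u (Finset.mem_of_mem_erase hu)
        _ = ((s'.card:ℝ) - 1) * D := by
            rw [Finset.sum_const, Finset.card_erase_of_mem hu₀, nsmul_eq_mul]
            congr 1
            have : 1 ≤ s'.card := Finset.card_pos.mpr hs'
            push_cast [Nat.cast_sub this]
            ring
    have hnorm : ‖((s'.card:ℝ))⁻¹‖ = ((s'.card:ℝ))⁻¹ := by
      rw [Real.norm_eq_abs, abs_of_pos (inv_pos.mpr hn')]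
    rw [hnorm]
    calc ((s'.card:ℝ))⁻¹ * ‖∑ u ∈ s', (g u₀ - g u)‖
        ≤ ((s'.card:ℝ))⁻¹ * (((s'.card:ℝ) - 1) * D) := by
          apply mul_le_mul_of_nonneg_left hsum (le_of_lt (inv_pos.mpr hn'))
      _ = (1 - ((s'.card:ℝ))⁻¹) * D := by field_simp
  rw [avg_eq s hs b', norm_smul]
  have hnorm : ‖((s.card:ℝ))⁻¹‖ = ((s.card:ℝ))⁻¹ := by
    rw [Real.norm_eq_abs, abs_of_pos (inv_pos.mpr hn)]
  rw [hnorm]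
  calc ((s.card:ℝ))⁻¹ * ‖∑ u ∈ s, (g u - b')‖
      ≤ ((s.card:ℝ))⁻¹ * ∑ u ∈ s, ‖g u - b'‖ := by
        apply mul_le_mul_of_nonneg_left (norm_sum_le _ _) (le_of_lt (inv_pos.mpr hn))
    _ ≤ ((s.card:ℝ))⁻¹ * ∑ _u ∈ s, ((1 - ((s'.card:ℝ))⁻¹) * D) := by
        apply mul_le_mul_of_nonneg_left _ (le_of_lt (inv_pos.mpr hn))
        apply Finset.sum_le_sum
        intro u hu
        exact key u (hss hu)
    _ = (1 - ((s'.card:ℝ))⁻¹) * D := by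
        rw [Finset.sum_const, nsmul_eq_mul]
        field_simp

/-- truncation to the first `n` coordinates -/
def Tr (n : ℕ) : (ℕ → ℝ) →ₗ[ℝ] (Fin n → ℝ) := LinearMap.funLeft ℝ ℝ Fin.val

lemma Tr_cont (n : ℕ) : Continuous (Tr n) := by
  apply continuous_pi
  intro i
  exact continuous_apply (i : ℕ)

/-- geometric position of the stage-`N` vertex `m` -/
def Gv (K0 : Finset (Finset ℕ)) (n N m : ℕ) : Fin n → ℝ := Tr n (PhL K0 N (em m))

lemma chain_top {c : Finset (Finset ℕ)} (hc2 : c.Nonempty)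
    (hc3 : ∀ a ∈ c, ∀ b ∈ c, a ⊆ b ∨ b ⊆ a) : ∃ τ ∈ c, ∀ a ∈ c, a ⊆ τ := by
  obtain ⟨τ, hτ, hmax⟩ := Finset.exists_max_image c Finset.card hc2
  refine ⟨τ, hτ, fun a ha => ?_⟩
  rcases hc3 a ha τ hτ with h | h
  · exact h
  · have he := Finset.eq_of_subset_of_card_le h (hmax a ha)
    rw [he]

lemma mesh_est {K0 : Finset (Finset ℕ)} {d n : ℕ} (hK0 : Gd K0 (d+1)) :
    ∀ N, ∀ S ∈ Tw K0 N, ∀ m ∈ S, ∀ m' ∈ S,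
      ‖Gv K0 n N m - Gv K0 n N m'‖ ≤ ((d:ℝ) / (d+1)) ^ N := by
  have hr0 : (0:ℝ) ≤ (d:ℝ) / (d+1) := by positivity
  intro N
  induction N with
  | zero =>
    intro S hS m hm m' hm'
    rw [pow_zero]
    have hco : ∀ i : Fin n, ‖(Gv K0 n 0 m - Gv K0 n 0 m') i‖ ≤ 1 := by
      intro i
      show ‖em m (i : ℕ) - em m' (i : ℕ)‖ ≤ 1
      unfold em
      rw [Real.norm_eq_abs]
      split <;> split <;> simp
    exact pi_norm_le_iff_of_nonneg zero_le_one |>.mpr hco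
  | succ N ih =>
    intro S hS m hm m' hm'
    obtain ⟨c, hc1, hc2, hc3, rfl⟩ := mem_sd.mp hS
    obtain ⟨σ, hσc, rfl⟩ := Finset.mem_image.mp hm
    obtain ⟨σ', hσ'c, rfl⟩ := Finset.mem_image.mp hm'
    have hGrw : ∀ ρ : Finset ℕ, ρ ∈ Tw K0 N →
        Gv K0 n (N+1) (enc ρ) = (ρ.card:ℝ)⁻¹ • ∑ u ∈ ρ, Gv K0 n N u := by
      intro ρ hρ
      show Tr n (PhL K0 N (LmL (Tw K0 N) (em (enc ρ)))) = _
      rw [L_em hρ, bv_expand, map_sum, map_sum, Finset.smul_sum]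
      apply Finset.sum_congr rfl
      intro u _
      rw [map_smul, map_smul]
      rfl
    have key : ∀ σ₁, σ₁ ∈ c → ∀ σ₂, σ₂ ∈ c → σ₁ ⊆ σ₂ →
        ‖Gv K0 n (N+1) (enc σ₁) - Gv K0 n (N+1) (enc σ₂)‖ ≤ ((d:ℝ)/(d+1))^(N+1) := by
      intro σ₁ h₁ σ₂ h₂ hsub
      have hσ₁T : σ₁ ∈ Tw K0 N := hc1 h₁
      have hσ₂T : σ₂ ∈ Tw K0 N := hc1 h₂
      have hne₁ : σ₁.Nonempty := (Gd_Tw hK0 N σ₁ hσ₁T).1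
      rw [hGrw σ₁ hσ₁T, hGrw σ₂ hσ₂T]
      have hDbound : ∀ u ∈ σ₂, ∀ v ∈ σ₂, ‖Gv K0 n N u - Gv K0 n N v‖ ≤ ((d:ℝ)/(d+1))^N :=
        fun u hu v hv => ih σ₂ hσ₂T u hu v hv
      have hb := bary_est hsub hne₁ hDbound
      apply le_trans hb
      rw [pow_succ]
      rw [mul_comm (((d:ℝ)/(d+1))^N) ((d:ℝ)/(d+1))]
      apply mul_le_mul_of_nonneg_right _ (pow_nonneg hr0 N)
      have hcard2 : σ₂.card ≤ d + 1 := (Gd_Tw hK0 N σ₂ hσ₂T).2.1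
      have hcard2' : 1 ≤ σ₂.card := Finset.card_pos.mpr (hne₁.mono hsub)
      have h1 : ((d:ℝ)+1)⁻¹ ≤ ((σ₂.card:ℝ))⁻¹ := by
        apply inv_anti₀
        · exact_mod_cast Nat.succ_le_iff.mp hcard2'  -- 0 < card
        · exact_mod_cast hcard2
      have h2 : (d:ℝ)/(d+1) = 1 - ((d:ℝ)+1)⁻¹ := by
        have : ((d:ℝ)+1) ≠ 0 := by positivity
        field_simp
        ring
      rw [h2]
      linarith
    rcases hc3 σ hσc σ' hσ'c with hsub | hsub
    · exact key σ hσc σ' hσ'c hsub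
    · rw [norm_sub_rev]
      exact key σ' hσ'c σ hσc hsub

lemma star_diam {K0 : Finset (Finset ℕ)} {d n : ℕ} (hK0 : Gd K0 (d+1)) (N : ℕ)
    {w : ℕ → ℝ} (hw : w ∈ Rl (Tw K0 N)) {v : ℕ} (hv : w v ≠ 0) :
    ‖Tr n (PhL K0 N w) - Gv K0 n N v‖ ≤ ((d:ℝ)/(d+1))^N := by
  obtain ⟨h0, sf, hsC, hsupp, hsum⟩ := hw
  have hvs : v ∈ sf := (hsupp v).mp hv
  have e1 : Tr n (PhL K0 N w) = ∑ m ∈ sf, w m • Gv K0 n N m := by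
    conv_lhs => rw [expand_basis hsupp]
    rw [map_sum, map_sum]
    apply Finset.sum_congr rfl
    intro u _
    rw [map_smul, map_smul]
    rfl
  have e2 : Gv K0 n N v = ∑ m ∈ sf, w m • Gv K0 n N v := by
    rw [← Finset.sum_smul, hsum, one_smul]
  rw [e1, e2, ← Finset.sum_sub_distrib]
  have e3 : ∀ m ∈ sf, w m • Gv K0 n N m - w m • Gv K0 n N v
      = w m • (Gv K0 n N m - Gv K0 n N v) := fun m _ => (smul_sub _ _ _).symm
  rw [Finset.sum_congr rfl e3]
  calc ‖∑ m ∈ sf, w m • (Gv K0 n N m - Gv K0 n N v)‖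
      ≤ ∑ m ∈ sf, ‖w m • (Gv K0 n N m - Gv K0 n N v)‖ := norm_sum_le _ _
    _ ≤ ∑ m ∈ sf, w m * ((d:ℝ)/(d+1))^N := by
        apply Finset.sum_le_sum
        intro m hm
        rw [norm_smul, Real.norm_eq_abs, abs_of_nonneg (h0 m)]
        exact mul_le_mul_of_nonneg_left (mesh_est hK0 N sf hsC m hm v hvs) (h0 m)
    _ = ((d:ℝ)/(d+1))^N := by rw [← Finset.sum_mul, hsum, one_mul]

lemma Rl_vanish {K0 : Finset (Finset ℕ)} {n : ℕ}
    (hrange : ∀ s ∈ K0, s ⊆ Finset.range n) {t : ℕ → ℝ} (ht : t ∈ Rl K0) :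
    ∀ i, n ≤ i → t i = 0 := by
  obtain ⟨h0, sf, hsC, hsupp, hsum⟩ := ht
  intro i hi
  by_contra h
  have : i ∈ sf := (hsupp i).mp h
  have := hrange sf hsC this
  rw [Finset.mem_range] at this
  omega

lemma Tr_bijOn {K0 : Finset (Finset ℕ)} {n : ℕ}
    (hrange : ∀ s ∈ K0, s ⊆ Finset.range n) :
    Set.BijOn (Tr n) (Rl K0) ((Tr n) '' (Rl K0)) := by
  refine ⟨Set.mapsTo_image _ _, ?_, Set.surjOn_image _ _⟩
  intro t ht t' ht' heq
  funext i
  by_cases hi : i < n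
  · have : Tr n t ⟨i, hi⟩ = Tr n t' ⟨i, hi⟩ := by rw [heq]
    exact this
  · rw [Rl_vanish hrange ht i (le_of_not_gt hi), Rl_vanish hrange ht' i (le_of_not_gt hi)]

/-- the geometric skeleton, inside `Fin n → ℝ`. -/
def PsetD (K0 : Finset (Finset ℕ)) (n : ℕ) : Set (Fin n → ℝ) := (Tr n) '' (Rl K0)

lemma covdim_P {K0 : Finset (Finset ℕ)} {n d : ℕ} (hK0 : Gd K0 (d+1))
    (hrange : ∀ s ∈ K0, s ⊆ Finset.range n) :
    CovDimLE ↥(PsetD K0 n) d := by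
  set Pset : Set (Fin n → ℝ) := PsetD K0 n with hPdef
  have hPim : Pset = (Tr n) '' (Rl K0) := rfl
  intro 𝒪 h𝒪
  by_cases hPe : Nonempty ↥Pset
  swap
  · refine ⟨∅, ⟨fun U hU => absurd hU (Finset.notMem_empty U), ?_⟩, ?_, ?_⟩
    · rw [Finset.coe_empty, Set.sUnion_empty]
      exact (Set.univ_eq_empty_iff.mpr (not_nonempty_iff.mp hPe)).symm
    · intro p; exact absurd ⟨p⟩ hPe
    · intro V hV; exact absurd hV (Finset.notMem_empty V)
  -- Lebesgue number
  haveI : CompactSpace ↥Pset := isCompact_iff_compactSpace.mp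
    (((Rl_isCompact hK0).image (Tr_cont n)))
  obtain ⟨δ, hδ, hball⟩ := lebesgue_number_lemma_of_metric_sUnion
    (isCompact_univ (X := ↥Pset)) (fun t ht => h𝒪.1 t ht)
    (by
      intro p _
      have hp : p ∈ ⋃₀ (𝒪 : Set (Set ↥Pset)) := by rw [h𝒪.2]; trivial
      exact hp)
  -- choose the subdivision depth
  have hd1 : (0:ℝ) < (d:ℝ) + 1 := by positivity
  have hrlt : (d:ℝ)/((d:ℝ)+1) < 1 := by
    rw [div_lt_one hd1]; linarith
  have hr0 : (0:ℝ) ≤ (d:ℝ) / ((d:ℝ)+1) := by positivity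
  obtain ⟨N, hN⟩ := exists_pow_lt_of_lt_one (half_pos hδ) hrlt
  -- the homeomorphism from the N-th subdivision
  set S : Set (ℕ → ℝ) := Rl (Tw K0 N) with hSdef
  have hScomp : IsCompact S := Rl_isCompact (Gd_Tw hK0 N)
  haveI : CompactSpace ↥S := isCompact_iff_compactSpace.mp hScomp
  have hbij : Set.BijOn ((Tr n) ∘ (PhL K0 N)) S Pset :=
    (Tr_bijOn hrange).comp (PhL_bijOn hK0 N)
  set θ : ↥S → ↥Pset := fun w => ⟨Tr n (PhL K0 N w.1), hbij.mapsTo w.2⟩ with hθdef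
  have hθbij : Function.Bijective θ := by
    constructor
    · intro w w' h
      apply Subtype.ext
      exact hbij.injOn w.2 w'.2 (congrArg Subtype.val h)
    · intro p
      obtain ⟨w, hwS, hwp⟩ := hbij.surjOn p.2
      exact ⟨⟨w, hwS⟩, Subtype.ext hwp⟩
  set e : ↥S ≃ ↥Pset := Equiv.ofBijective θ hθbij with hedef
  have hθcont : Continuous θ := Continuous.subtype_mk
    ((Tr_cont n).comp ((PhL_cont K0 N).comp continuous_subtype_val)) _
  have hecont : Continuous e := hθcont
  set hom : ↥S ≃ₜ ↥Pset := hecont.homeoOfEquivCompactToT2 with hhdef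
  have homeq : ∀ w : ↥S, hom w = θ w := fun w => rfl
  -- the star cover
  set VN : Finset ℕ := (Tw K0 N).biUnion id with hVNdef
  set star : ℕ → Set ↥S := fun v => {w : ↥S | w.1 v ≠ 0} with hstardef
  have hstaropen : ∀ v, IsOpen (star v) := by
    intro v
    have : star v = (fun w : ↥S => w.1 v) ⁻¹' {x | x ≠ 0} := rfl
    rw [this]
    exact (isOpen_ne).preimage ((continuous_apply v).comp continuous_subtype_val)
  set 𝒱 : Finset (Set ↥Pset) := VN.image (fun v => hom '' (star v)) with h𝒱def
  have hsupp_of : ∀ p : ↥Pset, ∀ v, p ∈ hom '' (star v) ↔ ((hom.symm p) : ↥S).1 v ≠ 0 := by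
    intro p v
    constructor
    · rintro ⟨u, hu, hup⟩
      have : u = hom.symm p := by rw [← hup]; simp
      rw [← this]
      exact hu
    · intro h
      exact ⟨hom.symm p, h, by simp⟩
  have hcover : ∀ p : ↥Pset, ∃ v ∈ VN, p ∈ hom '' (star v) := by
    intro p
    obtain ⟨h0, sf, hsC, hsupp, hsum⟩ := (hom.symm p : ↥S).2
    have hsne : sf.Nonempty := (Gd_Tw hK0 N sf hsC).1
    obtain ⟨v, hv⟩ := hsne
    refine ⟨v, Finset.mem_biUnion.mpr ⟨sf, hsC, hv⟩, ?_⟩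
    rw [hsupp_of p v]
    exact (hsupp v).mpr hv
  refine ⟨𝒱, ⟨?_, ?_⟩, ?_, ?_⟩
  · intro V hV
    obtain ⟨v, hv, rfl⟩ := Finset.mem_image.mp hV
    exact hom.isOpenMap _ (hstaropen v)
  · apply Set.eq_univ_of_forall
    intro p
    obtain ⟨v, hvVN, hpv⟩ := hcover p
    exact ⟨hom '' star v, Finset.mem_coe.mpr (Finset.mem_image_of_mem _ hvVN), hpv⟩
  · -- multiplicity
    intro p
    unfold mult
    set w : ↥S := hom.symm p with hwdef
    obtain ⟨h0, sf, hsC, hsupp, hsum⟩ := w.2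
    have hsub : 𝒱.filter (fun U => p ∈ U) ⊆
        (VN.filter (fun v => (w : ↥S).1 v ≠ 0)).image (fun v => hom '' (star v)) := by
      intro V hV
      obtain ⟨hV𝒱, hpV⟩ := Finset.mem_filter.mp hV
      obtain ⟨v, hv, rfl⟩ := Finset.mem_image.mp hV𝒱
      apply Finset.mem_image_of_mem
      apply Finset.mem_filter.mpr
      exact ⟨hv, (hsupp_of p v).mp hpV⟩
    calc (𝒱.filter (fun U => p ∈ U)).card
        ≤ ((VN.filter (fun v => (w : ↥S).1 v ≠ 0)).image (fun v => hom '' (star v))).card :=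
          Finset.card_le_card hsub
      _ ≤ (VN.filter (fun v => (w : ↥S).1 v ≠ 0)).card := Finset.card_image_le
      _ ≤ sf.card := by
          apply Finset.card_le_card
          intro v hv
          exact (hsupp v).mp (Finset.mem_filter.mp hv).2
      _ ≤ d + 1 := (Gd_Tw hK0 N sf hsC).2.1
  · -- refinement via the Lebesgue number
    intro V hV
    obtain ⟨v, hvVN, rfl⟩ := Finset.mem_image.mp hV
    -- the vertex point
    obtain ⟨sf₀, hsf₀, hvsf₀⟩ := Finset.mem_biUnion.mp hvVN
    have hemS : em v ∈ S := em_mem (Gd_Tw hK0 N) hsf₀ hvsf₀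
    have hemv : (em v) v = 1 := by simp [em]
    set w₀ : ↥S := ⟨em v, hemS⟩ with hw₀def
    set p₀ : ↥Pset := hom w₀ with hp₀def
    obtain ⟨O, hO𝒪, hOball⟩ := hball p₀ (Set.mem_univ p₀)
    refine ⟨O, hO𝒪, ?_⟩
    intro p hp
    apply hOball
    rw [Metric.mem_ball]
    obtain ⟨u, hu, rfl⟩ := hp
    have hdists : dist (hom u) p₀ = dist ((hom u) : Fin n → ℝ) ((p₀ : Fin n → ℝ)) :=
      Subtype.dist_eq _ _
    rw [hdists]
    have h1 : ((hom u) : Fin n → ℝ) = Tr n (PhL K0 N u.1) := rfl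
    have h2 : ((p₀ : Fin n → ℝ)) = Gv K0 n N v := rfl
    rw [h1, h2, dist_eq_norm]
    calc ‖Tr n (PhL K0 N u.1) - Gv K0 n N v‖ ≤ ((d:ℝ)/((d:ℝ)+1))^N :=
          star_diam hK0 N u.2 hu
      _ < δ/2 := hN
      _ < δ := by linarith

lemma main_construction {X Y : Type*} [MetricSpace X] [CompactSpace X]
    (π : X → Y) (𝒰 : Finset (Set X)) (ε : ℝ)
    (hsmall : ∀ U ∈ 𝒰, Metric.diam U < ε)
    (d : ℕ) (𝒲 : Finset (Set X)) (h𝒲 : IsFinOpenCover 𝒲)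
    (hmult : ∀ x : X, mult 𝒲 x ≤ d + 1)
    (href : ∀ W ∈ 𝒲, ∀ y : Y, ∃ U ∈ 𝒰, W ∩ π ⁻¹' {y} ⊆ U) :
    ∃ (P : Type) (_ : TopologicalSpace P) (_ : CompactSpace P)
      (_ : TopologicalSpace.MetrizableSpace P), CovDimLE P d ∧
        ∃ f : X → P, Continuous f ∧
          ∀ (p : P) (y : Y), Metric.diam (f ⁻¹' {p} ∩ π ⁻¹' {y}) < ε := by
  set n := 𝒲.card with hndef
  have hwl : 𝒲.toList.length = n := Finset.length_toList 𝒲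
  set w : Fin n → Set X := fun i => 𝒲.toList.get (Fin.cast hwl.symm i) with hwdef
  have hwmem : ∀ i, w i ∈ 𝒲 := fun i => Finset.mem_toList.mp (List.get_mem _ _)
  have hwinj : Function.Injective w := by
    intro i j h
    have h2 := (Finset.nodup_toList 𝒲).get_inj_iff.mp h
    have h3 : (Fin.cast hwl.symm i).val = (Fin.cast hwl.symm j).val := congrArg Fin.val h2
    exact Fin.ext h3
  have hwcov : ∀ x : X, ∃ i, x ∈ w i := by
    intro x
    have : x ∈ ⋃₀ (𝒲 : Set (Set X)) := by rw [h𝒲.2]; trivial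
    obtain ⟨W, hW𝒲, hxW⟩ := this
    obtain ⟨i, hi⟩ := List.mem_iff_get.mp (Finset.mem_toList.mpr hW𝒲)
    refine ⟨Fin.cast hwl i, ?_⟩
    show x ∈ 𝒲.toList.get _
    have : Fin.cast hwl.symm (Fin.cast hwl i) = i := rfl
    rw [this, hi]
    exact hxW
  -- bump functions
  set φ : Fin n → X → ℝ := fun i x =>
    if ((w i)ᶜ : Set X) = ∅ then 1 else Metric.infDist x (w i)ᶜ with hφdef
  have hφcont : ∀ i, Continuous (φ i) := by
    intro i
    rw [hφdef]
    dsimp only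
    split
    · exact continuous_const
    · exact Metric.continuous_infDist_pt _
  have hφ0 : ∀ i x, 0 ≤ φ i x := by
    intro i x
    rw [hφdef]
    dsimp only
    split
    · norm_num
    · exact Metric.infDist_nonneg
  have hφpos : ∀ i x, x ∈ w i → 0 < φ i x := by
    intro i x hx
    rw [hφdef]
    dsimp only
    split
    · norm_num
    · next h =>
      have hcl : IsClosed ((w i)ᶜ : Set X) := (h𝒲.1 _ (hwmem i)).isClosed_compl
      have hne : ((w i)ᶜ : Set X).Nonempty := Set.nonempty_iff_ne_empty.mpr h
      exact (hcl.notMem_iff_infDist_pos hne).mp (fun hc => hc hx)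
  have hφzero : ∀ i x, x ∉ w i → φ i x = 0 := by
    intro i x hx
    rw [hφdef]
    dsimp only
    split
    · next h =>
      exfalso
      have hmem2 : x ∈ ((w i)ᶜ : Set X) := hx
      rw [h] at hmem2
      simpa using hmem2
    · exact Metric.infDist_zero_of_mem hx
  set total : X → ℝ := fun x => ∑ i, φ i x with htotaldef
  have htotalcont : Continuous total := continuous_finset_sum _ fun i _ => hφcont i
  have htotalpos : ∀ x, 0 < total x := by
    intro x
    obtain ⟨i, hi⟩ := hwcov x
    exact Finset.sum_pos' (fun j _ => hφ0 j x) ⟨i, Finset.mem_univ i, hφpos i x hi⟩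
  set ψ : X → Fin n → ℝ := fun x i => φ i x / total x with hψdef
  set tmap : X → (ℕ → ℝ) := fun x m => if h : m < n then ψ x ⟨m, h⟩ else 0 with htmapdef
  set K0 : Finset (Finset ℕ) :=
    (Finset.range n).powerset.filter (fun s => s.Nonempty ∧ s.card ≤ d+1) with hK0def
  have hK0mem : ∀ s : Finset ℕ, s ∈ K0 ↔ s ⊆ Finset.range n ∧ s.Nonempty ∧ s.card ≤ d+1 := by
    intro s
    rw [hK0def, Finset.mem_filter, Finset.mem_powerset]
  have hK0 : Gd K0 (d+1) := by
    intro s hs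
    rw [hK0mem] at hs
    exact ⟨hs.2.1, hs.2.2, fun s' hsub hne => (hK0mem s').mpr
      ⟨hsub.trans hs.1, hne, le_trans (Finset.card_le_card hsub) hs.2.2⟩⟩
  have hrange : ∀ s ∈ K0, s ⊆ Finset.range n := fun s hs => ((hK0mem s).mp hs).1
  -- membership of the normalized bump vector
  have hsuppiff : ∀ x m, tmap x m ≠ 0 ↔ m ∈ (Finset.range n).filter (fun m => tmap x m ≠ 0) := by
    intro x m
    rw [Finset.mem_filter, Finset.mem_range]
    constructor
    · intro h
      refine ⟨?_, h⟩
      by_contra hn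
      rw [htmapdef] at h
      dsimp only at h
      rw [dif_neg hn] at h
      exact h rfl
    · tauto
  have hmemw : ∀ x m (h : m < n), tmap x m ≠ 0 → x ∈ w ⟨m, h⟩ := by
    intro x m h hne
    rw [htmapdef] at hne
    dsimp only at hne
    rw [dif_pos h] at hne
    by_contra hx
    apply hne
    rw [hψdef]
    dsimp only
    rw [hφzero _ _ hx, zero_div]
  have htmem : ∀ x, tmap x ∈ Rl K0 := by
    intro x
    refine ⟨?_, (Finset.range n).filter (fun m => tmap x m ≠ 0), ?_, fun m => hsuppiff x m, ?_⟩
    · intro m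
      rw [htmapdef]
      dsimp only
      split
      · exact div_nonneg (hφ0 _ _) (le_of_lt (htotalpos x))
      · exact le_refl 0
    · rw [hK0mem]
      refine ⟨Finset.filter_subset _ _, ?_, ?_⟩
      · obtain ⟨i, hi⟩ := hwcov x
        refine ⟨(i : ℕ), ?_⟩
        rw [Finset.mem_filter, Finset.mem_range]
        refine ⟨i.isLt, ?_⟩
        rw [htmapdef]
        dsimp only
        rw [dif_pos i.isLt]
        rw [hψdef]
        dsimp only
        have : (⟨(i : ℕ), i.isLt⟩ : Fin n) = i := rfl
        rw [this]
        exact ne_of_gt (div_pos (hφpos i x hi) (htotalpos x))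
      · -- cardinality bound via multiplicity of 𝒲
        have hinj1 : Set.InjOn (fun m => if h : m < n then w ⟨m, h⟩ else ∅)
            ↑((Finset.range n).filter (fun m => tmap x m ≠ 0)) := by
          intro a ha b hb hab
          simp only [Finset.coe_filter, Set.mem_setOf_eq, Finset.mem_range] at ha hb
          dsimp only at hab
          rw [dif_pos ha.1, dif_pos hb.1] at hab
          have := hwinj hab
          exact congrArg Fin.val this
        have hsub1 : ∀ m ∈ (Finset.range n).filter (fun m => tmap x m ≠ 0),
            (if h : m < n then w ⟨m, h⟩ else ∅) ∈ 𝒲.filter (fun U => x ∈ U) := by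
          intro m hm
          rw [Finset.mem_filter, Finset.mem_range] at hm
          rw [dif_pos hm.1]
          exact Finset.mem_filter.mpr ⟨hwmem _, hmemw x m hm.1 hm.2⟩
        calc ((Finset.range n).filter (fun m => tmap x m ≠ 0)).card
            ≤ (𝒲.filter (fun U => x ∈ U)).card :=
              Finset.card_le_card_of_injOn _ hsub1 hinj1
          _ ≤ d + 1 := hmult x
    · rw [Finset.sum_filter_ne_zero]
      have e1 : ∑ m ∈ Finset.range n, tmap x m = ∑ i : Fin n, ψ x i := by
        rw [← Fin.sum_univ_eq_sum_range (fun m => tmap x m) n]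
        apply Finset.sum_congr rfl
        intro i _
        rw [htmapdef]
        dsimp only
        rw [dif_pos i.isLt]
      rw [e1, hψdef]
      dsimp only
      rw [← Finset.sum_div]
      exact div_self (ne_of_gt (htotalpos x))
  -- the space and the map
  refine ⟨↥(PsetD K0 n), inferInstance, ?_, inferInstance, covdim_P hK0 hrange, ?_⟩
  · exact isCompact_iff_compactSpace.mp ((Rl_isCompact hK0).image (Tr_cont n))
  set f : X → ↥(PsetD K0 n) := fun x => ⟨Tr n (tmap x), ⟨tmap x, htmem x, rfl⟩⟩ with hfdef
  have hfcont : Continuous f := by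
    apply Continuous.subtype_mk
    apply continuous_pi
    intro i
    have e : (fun x => (Tr n (tmap x)) i) = fun x => φ i x / total x := by
      funext x
      show tmap x (i : ℕ) = _
      rw [htmapdef]
      dsimp only
      rw [dif_pos i.isLt]
    rw [e]
    exact (hφcont i).div htotalcont (fun x => ne_of_gt (htotalpos x))
  refine ⟨f, hfcont, ?_⟩
  intro p y
  obtain ⟨t, htRl, htp⟩ := p.2
  obtain ⟨h0, sf, hsfK0, hsfsupp, hsfsum⟩ := htRl
  obtain ⟨m₀, hm₀⟩ := ((hK0mem sf).mp hsfK0).2.1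
  have hm₀n : m₀ < n := Finset.mem_range.mp (hrange sf hsfK0 hm₀)
  set i₀ : Fin n := ⟨m₀, hm₀n⟩ with hi₀def
  obtain ⟨U, hU𝒰, hWU⟩ := href (w i₀) (hwmem i₀) y
  have hfib : f ⁻¹' {p} ∩ π ⁻¹' {y} ⊆ U := by
    intro x ⟨hxf, hxy⟩
    apply hWU
    refine ⟨?_, hxy⟩
    have hfx : f x = p := hxf
    have hval : Tr n (tmap x) = (p : Fin n → ℝ) := congrArg Subtype.val hfx
    have h1 : tmap x m₀ = t m₀ := by
      have e1 : Tr n (tmap x) i₀ = Tr n t i₀ := by rw [hval, ← htp]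
      exact e1
    have h2 : t m₀ ≠ 0 := (hsfsupp m₀).mpr hm₀
    have h3 : tmap x m₀ ≠ 0 := by rw [h1]; exact h2
    exact hmemw x m₀ hm₀n h3
  have hUb : Bornology.IsBounded U := (isCompact_univ.isBounded).subset (Set.subset_univ U)
  calc Metric.diam (f ⁻¹' {p} ∩ π ⁻¹' {y}) ≤ Metric.diam U := Metric.diam_mono hfib hUb
    _ < ε := hsmall U hU𝒰

lemma covdim_punit (k : ℕ) : CovDimLE PUnit k := by
  intro 𝒪 h𝒪
  have hmem : PUnit.unit ∈ ⋃₀ (𝒪 : Set (Set PUnit)) := by rw [h𝒪.2]; trivial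
  obtain ⟨U, hU, hxU⟩ := hmem
  refine ⟨{U}, ⟨?_, ?_⟩, ?_, ?_⟩
  · intro V hV
    rw [Finset.mem_singleton] at hV
    rw [hV]
    exact h𝒪.1 U hU
  · apply Set.eq_univ_of_forall
    intro p
    have hp : p = PUnit.unit := rfl
    exact ⟨U, by simp, hp ▸ hxU⟩
  · intro p
    unfold mult
    calc (({U} : Finset (Set PUnit)).filter (fun V => p ∈ V)).card
        ≤ ({U} : Finset (Set PUnit)).card := Finset.card_filter_le _ _
      _ = 1 := Finset.card_singleton U
      _ ≤ k + 1 := by omega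
  · intro V hV
    rw [Finset.mem_singleton] at hV
    exact ⟨U, hU, hV ▸ subset_rfl⟩

end Stmt10Aux


theorem stmt10 {X Y : Type*} [MetricSpace X] [CompactSpace X]
    [MetricSpace Y] [CompactSpace Y]
    (π : X → Y) (hπc : Continuous π) (hπs : Function.Surjective π)
    (𝒰 : Finset (Set X)) (h𝒰 : IsFinOpenCover 𝒰)
    (ε : ℝ) (hε : 0 < ε)
    (hsmall : ∀ U ∈ 𝒰, Metric.diam U < ε) :
    WdimRel π ε ≤ Drel π 𝒰 := by
  rcases isEmpty_or_nonempty X with hXe | hXn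
  · apply Nat.sInf_le
    refine ⟨PUnit, inferInstance, inferInstance, inferInstance,
      Stmt10Aux.covdim_punit _, fun _ => PUnit.unit, continuous_const, ?_⟩
    intro p y
    have he : (((fun _ => PUnit.unit) : X → PUnit) ⁻¹' {p} ∩ π ⁻¹' {y}) = ∅ :=
      Set.eq_empty_of_isEmpty _
    rw [he, Metric.diam_empty]
    exact hε
  · have hSne : {k | ∃ 𝒲 : Finset (Set X), IsFinOpenCover 𝒲 ∧
        (∀ x : X, mult 𝒲 x ≤ k + 1) ∧
        ∀ W ∈ 𝒲, ∀ y : Y, ∃ U ∈ 𝒰, W ∩ π ⁻¹' {y} ⊆ U}.Nonempty := by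
      refine ⟨𝒰.card, 𝒰, h𝒰, ?_, ?_⟩
      · intro x
        exact le_trans (Finset.card_filter_le _ _) (Nat.le_succ _)
      · intro W hW y
        exact ⟨W, hW, Set.inter_subset_left⟩
    have hmem := Nat.sInf_mem hSne
    obtain ⟨𝒲, h1, h2, h3⟩ := hmem
    obtain ⟨P, i1, i2, i3, hcd, f, hf, hfib⟩ :=
      Stmt10Aux.main_construction π 𝒰 ε hsmall (Drel π 𝒰) 𝒲 h1 h2 h3
    exact Nat.sInf_le ⟨P, i1, i2, i3, hcd, f, hf, hfib⟩
end
end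

section
/- Let Γ be a countable amenable group and let φ : F(Γ) → [0, ∞) (F(Γ) the nonempty finite subsets of Γ) satisfy: (1) φ(Fs) = φ(F) for all F and s ∈ Γ; (2) φ(E) ≤ φ(F) whenever E ⊆ F; (3) φ(F₁ ∪ F₂) ≤ φ(F₁) + φ(F₂). Then the limit of φ(F)/|F| exists as F becomes more and more invariant; i.e., there exists c ∈ ℝ such that for every ε > 0 there exist a finite K ⊆ Γ and δ > 0 with |φ(F)/|F| − c| < ε for all F ∈ B(K, δ). -/
set_option maxHeartbeats 1000000

open scoped Classical
open scoped Pointwise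

/-- `F ∈ B(K, δ)`: `F` is a nonempty finite subset of `Γ` with
`|{t ∈ F : Kt ⊆ F}| ≥ (1 - δ)|F|`. -/
def memB {Γ : Type*} [Group Γ] (K : Finset Γ) (δ : ℝ) (F : Finset Γ) : Prop :=
  F.Nonempty ∧ (1 - δ) * F.card ≤ (F.filter fun t => ∀ k ∈ K, k * t ∈ F).card

section OWAux

variable {Γ : Type*} [Group Γ]

noncomputable def rt (A : Finset Γ) (c : Γ) : Finset Γ := A.image (fun a => a * c)

lemma mem_rt {A : Finset Γ} {c x : Γ} : x ∈ rt A c ↔ ∃ a ∈ A, a * c = x := Finset.mem_image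

lemma card_rt (A : Finset Γ) (c : Γ) : (rt A c).card = A.card :=
  Finset.card_image_of_injective _ (mul_left_injective c)

lemma rt_mono {A B : Finset Γ} (h : A ⊆ B) (c : Γ) : rt A c ⊆ rt B c :=
  Finset.image_subset_image h

noncomputable def intr (K F : Finset Γ) : Finset Γ := F.filter (fun t => ∀ k ∈ K, k * t ∈ F)

lemma intr_subset (K F : Finset Γ) : intr K F ⊆ F := Finset.filter_subset _ _

lemma mem_intr {K F : Finset Γ} {c : Γ} : c ∈ intr K F ↔ c ∈ F ∧ ∀ k ∈ K, k * c ∈ F :=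
  Finset.mem_filter

lemma intr_anti {K K' : Finset Γ} (h : K ⊆ K') (F : Finset Γ) : intr K' F ⊆ intr K F := by
  intro c hc; rw [mem_intr] at hc ⊢; exact ⟨hc.1, fun k hk => hc.2 k (h hk)⟩

lemma memB_def {K : Finset Γ} {δ : ℝ} {F : Finset Γ} :
    memB K δ F ↔ F.Nonempty ∧ (1 - δ) * F.card ≤ (intr K F).card := Iff.rfl

lemma foldr_union_subset : ∀ (L : List (Finset Γ)) (T : Finset Γ), T ∈ L →
    T ⊆ L.foldr (fun T acc => T ∪ acc) ∅ := by
  intro L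
  induction L with
  | nil => simp
  | cons A L ih =>
    intro T hT
    rcases List.mem_cons.mp hT with rfl | h
    · exact Finset.subset_union_left
    · exact (ih T h).trans Finset.subset_union_right

lemma memB_mono {K K' : Finset Γ} {δ δ' : ℝ} (hK : K ⊆ K') (hδ : δ' ≤ δ) {F : Finset Γ}
    (h : memB K' δ' F) : memB K δ F := by
  rw [memB_def] at h ⊢
  refine ⟨h.1, le_trans (le_trans ?_ h.2) ?_⟩
  · have : (0:ℝ) ≤ F.card := Nat.cast_nonneg _
    nlinarith
  · exact_mod_cast Nat.cast_le.mpr (Finset.card_le_card (intr_anti hK F))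

lemma memB_rt {K : Finset Γ} {δ : ℝ} {F : Finset Γ} (h : memB K δ F) (t : Γ) :
    memB K δ (rt F t) := by
  rw [memB_def] at h ⊢
  constructor
  · obtain ⟨a, ha⟩ := h.1; exact ⟨a * t, mem_rt.mpr ⟨a, ha, rfl⟩⟩
  · rw [card_rt]
    refine le_trans h.2 ?_
    have : (intr K F).card ≤ (intr K (rt F t)).card := by
      apply Finset.card_le_card_of_injOn (fun c => c * t)
      · intro c hc
        simp only [Finset.mem_coe, mem_intr] at hc ⊢
        refine ⟨mem_rt.mpr ⟨c, hc.1, rfl⟩, fun k hk => ?_⟩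
        have : k * (c * t) = (k * c) * t := by group
        rw [this]; exact mem_rt.mpr ⟨k * c, hc.2 k hk, rfl⟩
      · exact fun a _ b _ hab => mul_left_injective t hab
    exact_mod_cast this

lemma phi_le_card (φ : Finset Γ → ℝ) (hpos : ∀ F, 0 ≤ φ F)
    (hsub : ∀ F₁ F₂ : Finset Γ, φ (F₁ ∪ F₂) ≤ φ F₁ + φ F₂)
    (hinv : ∀ (F : Finset Γ) (s : Γ), φ (F.image fun t => t * s) = φ F)
    {F : Finset Γ} (hF : F.Nonempty) : φ F ≤ F.card * φ {1} := by
  induction F using Finset.induction_on with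
  | empty => exact absurd hF (by simp)
  | @insert a s ha ih =>
    have hsingle : φ {a} = φ {1} := by
      have : ({a} : Finset Γ) = ({1} : Finset Γ).image (fun t => t * a) := by simp
      rw [this, hinv]
    rcases s.eq_empty_or_nonempty with rfl | hs
    · simp [hsingle]
    · have h1 : φ (insert a s) ≤ φ {a} + φ s := by
        have h1' : insert a s = {a} ∪ s := rfl
        rw [h1']; exact hsub {a} s
      have hcard : ((insert a s).card : ℝ) = s.card + 1 := by
        rw [Finset.card_insert_of_notMem ha]; push_cast; ring
      have h2 := ih hs
      rw [hsingle] at h1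
      rw [hcard]
      nlinarith

lemma phi_diff (φ : Finset Γ → ℝ) (hpos : ∀ F, 0 ≤ φ F)
    (hsub : ∀ F₁ F₂ : Finset Γ, φ (F₁ ∪ F₂) ≤ φ F₁ + φ F₂)
    (hinv : ∀ (F : Finset Γ) (s : Γ), φ (F.image fun t => t * s) = φ F)
    {E F : Finset Γ} (hEF : E ⊆ F) (hE : E.Nonempty) :
    φ F ≤ φ E + (F \ E).card * φ {1} := by
  rcases (F \ E).eq_empty_or_nonempty with h | h
  · have : F = E := Finset.Subset.antisymm (fun x hx => by
      by_contra hxE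
      exact absurd (Finset.mem_sdiff.mpr ⟨hx, hxE⟩) (by rw [h]; simp)) hEF
    simp [this]
  · have hu : E ∪ (F \ E) = F := Finset.union_sdiff_of_subset hEF
    calc φ F = φ (E ∪ (F \ E)) := by rw [hu]
    _ ≤ φ E + φ (F \ E) := hsub _ _
    _ ≤ φ E + (F \ E).card * φ {1} := by
        linarith [phi_le_card φ hpos hsub hinv h]

lemma phi_biUnion (φ : Finset Γ → ℝ) (hsub : ∀ F₁ F₂ : Finset Γ, φ (F₁ ∪ F₂) ≤ φ F₁ + φ F₂)
    (C : Finset Γ) (hC : C.Nonempty) (g : Γ → Finset Γ) :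
    φ (C.biUnion g) ≤ ∑ c ∈ C, φ (g c) := by
  induction C using Finset.induction_on with
  | empty => exact absurd hC (by simp)
  | @insert a s ha ih =>
    rcases s.eq_empty_or_nonempty with rfl | hs
    · simp
    · rw [Finset.biUnion_insert, Finset.sum_insert ha]
      calc φ (g a ∪ s.biUnion g) ≤ φ (g a) + φ (s.biUnion g) := hsub _ _
      _ ≤ φ (g a) + ∑ c ∈ s, φ (g c) := by linarith [ih hs]

lemma round_lemma (T G : Finset Γ) (hT : (1:Γ) ∈ T) {ε : ℝ} (hε : 0 < ε) (hε1 : ε < 1) :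
    ∃ C : Finset Γ, C ⊆ intr T G ∧
      (1 - ε) * (T.card * C.card) ≤ ((C.biUnion (rt T)).card : ℝ) ∧
      ε * ((intr T G).card : ℝ) ≤ ((C.biUnion (rt T)).card : ℝ) := by
  have hT0 : (0:ℝ) < T.card := by exact_mod_cast Finset.card_pos.mpr ⟨1, hT⟩
  set D := intr T G with hD
  set P := D.powerset.filter
    (fun C => (1 - ε) * (T.card * C.card) ≤ ((C.biUnion (rt T)).card : ℝ)) with hP
  have hPne : P.Nonempty := ⟨∅, by simp [hP]⟩
  obtain ⟨C, hCP, hCmax⟩ := Finset.exists_max_image P (fun C => (C.biUnion (rt T)).card) hPne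
  rw [hP, Finset.mem_filter, Finset.mem_powerset] at hCP
  obtain ⟨hCD, hCb⟩ := hCP
  refine ⟨C, hCD, hCb, ?_⟩
  set U := C.biUnion (rt T) with hU
  -- per-center bound: each translate of a center in D meets U in ≥ ε|T| points
  have key : ∀ c ∈ D, ε * (T.card : ℝ) ≤ ((rt T c ∩ U).card : ℝ) := by
    intro c hc
    by_cases hcC : c ∈ C
    · have : rt T c ⊆ U := Finset.subset_biUnion_of_mem (rt T) hcC
      have h1 : rt T c ∩ U = rt T c := Finset.inter_eq_left.mpr this
      rw [h1, card_rt]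
      nlinarith
    · by_contra hlt
      push_neg at hlt
      have hsplit : ((rt T c).card : ℝ) = ((rt T c ∩ U).card : ℝ) + ((rt T c \ U).card : ℝ) := by
        have := Finset.card_inter_add_card_sdiff (rt T c) U
        exact_mod_cast congrArg (Nat.cast (R := ℝ)) this.symm
      have hnew : (1 - ε) * (T.card : ℝ) < ((rt T c \ U).card : ℝ) := by
        have : ((rt T c).card : ℝ) = T.card := by exact_mod_cast card_rt T c
        nlinarith
      have hins : (insert c C).biUnion (rt T) = (rt T c \ U) ∪ U := by
        rw [Finset.biUnion_insert, Finset.sdiff_union_self_eq_union]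
      have hcardins : (((insert c C).biUnion (rt T)).card : ℝ)
          = ((rt T c \ U).card : ℝ) + (U.card : ℝ) := by
        rw [hins, Finset.card_union_of_disjoint (Finset.sdiff_disjoint)]
        push_cast; ring
      have hCins : insert c C ∈ P := by
        rw [hP, Finset.mem_filter, Finset.mem_powerset]
        refine ⟨Finset.insert_subset hc hCD, ?_⟩
        rw [Finset.card_insert_of_notMem hcC, hcardins]
        push_cast
        nlinarith
      have hle : (((insert c C).biUnion (rt T)).card : ℝ) ≤ (U.card : ℝ) := by
        exact_mod_cast hCmax _ hCins
      rw [hcardins] at hle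
      nlinarith
  -- double counting
  have hsum : ∑ c ∈ D, ((rt T c ∩ U).card : ℕ) ≤ U.card * T.card := by
    have h1 : ∀ c ∈ D, (rt T c ∩ U).card = ∑ u ∈ U, if u ∈ rt T c then 1 else 0 := by
      intro c _
      have h2 : rt T c ∩ U = U.filter (fun u => u ∈ rt T c) := by
        ext x; simp [Finset.mem_inter, Finset.mem_filter, and_comm]
      rw [h2, Finset.card_filter]
    rw [Finset.sum_congr rfl h1, Finset.sum_comm]
    have h3 : ∀ u ∈ U, (∑ c ∈ D, if u ∈ rt T c then 1 else 0) ≤ T.card := by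
      intro u _
      have h4 : (∑ c ∈ D, if u ∈ rt T c then 1 else 0) = (D.filter (fun c => u ∈ rt T c)).card := by
        rw [Finset.card_filter]
      rw [h4]
      apply Finset.card_le_card_of_injOn (fun c => u * c⁻¹)
      · intro c hc
        rw [Finset.mem_coe, Finset.mem_filter] at hc
        obtain ⟨a, ha, hac⟩ := mem_rt.mp hc.2
        have : u * c⁻¹ = a := by rw [← hac]; group
        show u * c⁻¹ ∈ T
        rw [this]; exact ha
      · intro a _ b _ h
        have := mul_left_cancel h
        exact inv_injective this
    calc ∑ u ∈ U, ∑ c ∈ D, (if u ∈ rt T c then 1 else 0)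
        ≤ ∑ _u ∈ U, T.card := Finset.sum_le_sum h3
      _ = U.card * T.card := by rw [Finset.sum_const, smul_eq_mul]
  have hsum' : (∑ c ∈ D, ((rt T c ∩ U).card : ℝ)) ≤ (U.card : ℝ) * T.card := by
    have := hsum
    push_cast
    exact_mod_cast this
  have hsum2 : ε * ((D.card : ℝ) * T.card) ≤ ∑ c ∈ D, ((rt T c ∩ U).card : ℝ) := by
    calc ε * ((D.card : ℝ) * T.card) = ∑ _c ∈ D, ε * (T.card : ℝ) := by
          rw [Finset.sum_const]; push_cast; ring
    _ ≤ _ := Finset.sum_le_sum key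
  nlinarith [hsum', hsum2]

lemma QTind (φ : Finset Γ → ℝ)
    (hpos : ∀ F, 0 ≤ φ F)
    (hsub : ∀ F₁ F₂ : Finset Γ, φ (F₁ ∪ F₂) ≤ φ F₁ + φ F₂)
    (hinv : ∀ (F : Finset Γ) (s : Γ), φ (F.image fun t => t * s) = φ F)
    {ε δ β ρ : ℝ} (hε : 0 < ε) (hε2 : ε ≤ 1/2) (hδ : 0 ≤ δ) (hβ : 0 ≤ β)
    (hη : δ + 2*β ≤ ε/2) (hρ : 0 ≤ ρ) (F : Finset Γ) :
    ∀ (L : List (Finset Γ)) (G : Finset Γ) (s : ℝ),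
    (∀ T ∈ L, (1:Γ) ∈ T) → (∀ T ∈ L, φ T ≤ ρ * T.card) →
    List.Pairwise (fun A B => (((B⁻¹ * A : Finset Γ)).card : ℝ) ≤ (1+β) * A.card) L →
    (∀ T ∈ L, (1-δ) * F.card ≤ ((intr T F).card : ℝ)) →
    G ⊆ F → 0 ≤ s →
    (1-ε) * s ≤ ((F \ G).card : ℝ) →
    (∀ T ∈ L, ((((T⁻¹ * (F \ G) : Finset Γ)) \ (F \ G)).card : ℝ) ≤ β * s) →
    ((F \ G).Nonempty → φ (F \ G) ≤ ρ * s) →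
    ∃ (G' : Finset Γ) (s' : ℝ), G' ⊆ G ∧ 0 ≤ s' ∧
      (1-ε) * s' ≤ ((F \ G').card : ℝ) ∧
      ((F \ G').Nonempty → φ (F \ G') ≤ ρ * s') ∧
      ((G'.card : ℝ) ≤ max (ε * F.card) ((1-ε/2)^(L.length) * G.card)) := by
  intro L
  induction L with
  | nil =>
    intro G s _ _ _ _ hGF hs0 hWs hWbad hWφ
    exact ⟨G, s, Finset.Subset.refl _, hs0, hWs, hWφ, by simp⟩
  | cons T L' ih =>
    intro G s hones hφT hpw hint hGF hs0 hWs hWbad hWφ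
    have h1T : (1:Γ) ∈ T := hones T (List.mem_cons_self)
    by_cases hstop : (G.card : ℝ) ≤ ε * F.card
    · exact ⟨G, s, Finset.Subset.refl _, hs0, hWs, hWφ, le_trans hstop (le_max_left _ _)⟩
    push_neg at hstop
    have hF0 : (0:ℝ) ≤ F.card := Nat.cast_nonneg _
    have hG0 : (0:ℝ) < G.card := lt_of_le_of_lt (by positivity) hstop
    have hWF : (F \ G) ⊆ F := Finset.sdiff_subset
    have hWcard : ((F \ G).card : ℝ) = F.card - G.card := Finset.cast_card_sdiff hGF
    have hs2F : s ≤ 2 * F.card := by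
      have h1 : ((F \ G).card : ℝ) ≤ F.card := by
        exact_mod_cast Finset.card_le_card hWF
      nlinarith
    obtain ⟨C, hCD, hCb, hCU⟩ := round_lemma T G h1T hε (by linarith)
    set U := C.biUnion (rt T) with hU
    have hrtG : ∀ c ∈ C, rt T c ⊆ G := by
      intro c hc x hx
      obtain ⟨a, ha, rfl⟩ := mem_rt.mp hx
      exact (mem_intr.mp (hCD hc)).2 a ha
    have hUG : U ⊆ G := Finset.biUnion_subset.mpr hrtG
    -- lower bound on |intr T G|
    have hincl : intr T F ⊆ (intr T G ∪ (F \ G)) ∪ ((T⁻¹ * (F \ G)) \ (F \ G)) := by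
      intro c hc
      obtain ⟨hcF, hcT⟩ := mem_intr.mp hc
      by_cases hcW : c ∈ F \ G
      · exact Finset.mem_union_left _ (Finset.mem_union_right _ hcW)
      by_cases hbad : c ∈ (T⁻¹ * (F \ G)) \ (F \ G)
      · exact Finset.mem_union_right _ hbad
      refine Finset.mem_union_left _ (Finset.mem_union_left _ (mem_intr.mpr ⟨?_, ?_⟩))
      · by_contra hcG
        exact hcW (Finset.mem_sdiff.mpr ⟨hcF, hcG⟩)
      · intro k hk
        by_contra hkG
        have hkW : k * c ∈ F \ G := Finset.mem_sdiff.mpr ⟨hcT k hk, hkG⟩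
        have : c ∈ T⁻¹ * (F \ G) := by
          have : k⁻¹ * (k * c) ∈ T⁻¹ * (F \ G) :=
            Finset.mul_mem_mul (Finset.inv_mem_inv hk) hkW
          simpa using this
        exact hbad (Finset.mem_sdiff.mpr ⟨this, hcW⟩)
    have hintG : (G.card : ℝ) / 2 ≤ ((intr T G).card : ℝ) := by
      have h1 : (intr T F).card ≤ (intr T G).card + (F \ G).card
          + ((T⁻¹ * (F \ G)) \ (F \ G)).card := by
        calc (intr T F).card
            ≤ ((intr T G ∪ (F \ G)) ∪ ((T⁻¹ * (F \ G)) \ (F \ G))).card :=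
              Finset.card_le_card hincl
          _ ≤ (intr T G ∪ (F \ G)).card + ((T⁻¹ * (F \ G)) \ (F \ G)).card :=
              Finset.card_union_le _ _
          _ ≤ (intr T G).card + (F \ G).card + ((T⁻¹ * (F \ G)) \ (F \ G)).card := by
              have := Finset.card_union_le (intr T G) (F \ G)
              omega
      have h1' : ((intr T F).card : ℝ) ≤ ((intr T G).card : ℝ) + ((F \ G).card : ℝ)
          + (((T⁻¹ * (F \ G)) \ (F \ G)).card : ℝ) := by exact_mod_cast h1
      have hbadb := hWbad T (List.mem_cons_self)
      have hintF := hint T (List.mem_cons_self)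
      nlinarith
    have hU2 : ε * ((G.card : ℝ) / 2) ≤ (U.card : ℝ) := by
      have := hCU
      nlinarith
    have hUne : U.Nonempty := by
      rw [← Finset.card_pos]
      have h0 : (0:ℝ) < (U.card : ℝ) := lt_of_lt_of_le (by positivity) hU2
      exact_mod_cast h0
    obtain ⟨x0, hx0⟩ := hUne
    obtain ⟨c0, hc0, _⟩ := Finset.mem_biUnion.mp hx0
    have hCne : C.Nonempty := ⟨c0, hc0⟩
    set G₁ := G \ U with hG₁
    set s₁ := s + (T.card : ℝ) * C.card with hs₁def
    have hUF : U ⊆ F := hUG.trans hGF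
    have hG₁G : G₁ ⊆ G := Finset.sdiff_subset
    have hG₁F : G₁ ⊆ F := hG₁G.trans hGF
    have hFG₁ : F \ G₁ = (F \ G) ∪ U := by
      ext x
      simp only [hG₁, Finset.mem_sdiff, Finset.mem_union]
      constructor
      · rintro ⟨hxF, hx⟩
        by_cases hxU : x ∈ U
        · exact Or.inr hxU
        · exact Or.inl ⟨hxF, fun hxG => hx ⟨hxG, hxU⟩⟩
      · rintro (⟨hxF, hxG⟩ | hxU)
        · exact ⟨hxF, fun h => hxG h.1⟩
        · exact ⟨hUF hxU, fun h => h.2 hxU⟩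
    have hdisj : Disjoint (F \ G) U := by
      rw [Finset.disjoint_left]
      intro x hx hxU
      exact (Finset.mem_sdiff.mp hx).2 (hUG hxU)
    have hW₁card : ((F \ G₁).card : ℝ) = ((F \ G).card : ℝ) + (U.card : ℝ) := by
      rw [hFG₁, Finset.card_union_of_disjoint hdisj]; push_cast; ring
    have hTc0 : (0:ℝ) ≤ T.card := Nat.cast_nonneg _
    have hCc0 : (0:ℝ) ≤ C.card := Nat.cast_nonneg _
    have hs₁0 : 0 ≤ s₁ := by positivity
    have hs₁W : (1-ε) * s₁ ≤ ((F \ G₁).card : ℝ) := by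
      rw [hW₁card]
      have : (1-ε) * s₁ = (1-ε)*s + (1-ε)*((T.card:ℝ)*C.card) := by ring
      rw [this]
      exact add_le_add hWs hCb
    -- φ bound for the new covered region
    have hφU : φ U ≤ ρ * ((T.card : ℝ) * C.card) := by
      calc φ U ≤ ∑ c ∈ C, φ (rt T c) := phi_biUnion φ hsub C hCne (rt T)
        _ = ∑ _c ∈ C, φ T := by
            apply Finset.sum_congr rfl
            intro c _
            exact hinv T c
        _ = (C.card : ℝ) * φ T := by rw [Finset.sum_const]; push_cast; ring
        _ ≤ ρ * ((T.card : ℝ) * C.card) := by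
            have h1 := hφT T (List.mem_cons_self)
            have h2 : (0:ℝ) ≤ φ T := hpos T
            nlinarith
    have hφ₁ : (F \ G₁).Nonempty → φ (F \ G₁) ≤ ρ * s₁ := by
      intro _
      rw [hFG₁]
      rcases (F \ G).eq_empty_or_nonempty with hWe | hWne
      · rw [hWe, Finset.empty_union]
        have h9 : 0 ≤ ρ * s := mul_nonneg hρ hs0
        rw [hs₁def, mul_add]
        linarith
      · calc φ ((F \ G) ∪ U) ≤ φ (F \ G) + φ U := hsub _ _
          _ ≤ ρ * s + ρ * ((T.card : ℝ) * C.card) := add_le_add (hWφ hWne) hφU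
          _ = ρ * s₁ := by rw [hs₁def]; ring
    -- bad-set bound for remaining tiles
    have hbad₁ : ∀ T' ∈ L',
        (((T'⁻¹ * (F \ G₁) : Finset Γ) \ (F \ G₁)).card : ℝ) ≤ β * s₁ := by
      intro T' hT'
      have h1T' : (1:Γ) ∈ T' := hones T' (List.mem_cons_of_mem _ hT')
      have hTsub : T ⊆ T'⁻¹ * T := by
        intro t ht
        have : (1:Γ)⁻¹ * t ∈ T'⁻¹ * T := Finset.mul_mem_mul (Finset.inv_mem_inv h1T') ht
        simpa using this
      have hpwT : ((T'⁻¹ * T : Finset Γ).card : ℝ) ≤ (1+β) * T.card :=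
        (List.pairwise_cons.mp hpw).1 T' hT'
      have hincl2 : (T'⁻¹ * (F \ G₁)) \ (F \ G₁) ⊆
          ((T'⁻¹ * (F \ G)) \ (F \ G)) ∪ C.biUnion (fun c => rt (T'⁻¹ * T) c \ rt T c) := by
        intro x hx
        obtain ⟨hx1, hx2⟩ := Finset.mem_sdiff.mp hx
        obtain ⟨a, ha, w, hw, rfl⟩ := Finset.mem_mul.mp hx1
        rw [hFG₁] at hw hx2
        rcases Finset.mem_union.mp hw with hwW | hwU
        · refine Finset.mem_union_left _ (Finset.mem_sdiff.mpr ⟨Finset.mul_mem_mul ha hwW, ?_⟩)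
          intro h
          exact hx2 (Finset.mem_union_left _ h)
        · obtain ⟨c, hc, hwc⟩ := Finset.mem_biUnion.mp hwU
          obtain ⟨k, hk, rfl⟩ := mem_rt.mp hwc
          refine Finset.mem_union_right _ (Finset.mem_biUnion.mpr ⟨c, hc, Finset.mem_sdiff.mpr ⟨?_, ?_⟩⟩)
          · exact mem_rt.mpr ⟨a * k, Finset.mul_mem_mul ha hk, by group⟩
          · intro h
            exact hx2 (Finset.mem_union_right _ (Finset.mem_biUnion.mpr ⟨c, hc, h⟩))
      have hterm : ∀ c ∈ C, ((rt (T'⁻¹ * T) c \ rt T c).card : ℝ) ≤ β * T.card := by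
        intro c _
        have hsub2 : rt T c ⊆ rt (T'⁻¹ * T) c := rt_mono hTsub c
        have hcc : ((rt (T'⁻¹ * T) c \ rt T c).card : ℝ)
            = ((rt (T'⁻¹ * T) c).card : ℝ) - ((rt T c).card : ℝ) := Finset.cast_card_sdiff hsub2
        rw [card_rt, card_rt] at hcc
        rw [hcc]
        linarith
      have hcard2 : (((T'⁻¹ * (F \ G₁)) \ (F \ G₁)).card : ℝ) ≤
          (((T'⁻¹ * (F \ G)) \ (F \ G)).card : ℝ) + ∑ c ∈ C, ((rt (T'⁻¹ * T) c \ rt T c).card : ℝ) := by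
        have h1 := Finset.card_le_card hincl2
        have h2 := Finset.card_union_le ((T'⁻¹ * (F \ G)) \ (F \ G))
          (C.biUnion (fun c => rt (T'⁻¹ * T) c \ rt T c))
        have h3 := Finset.card_biUnion_le (s := C) (t := fun c => rt (T'⁻¹ * T) c \ rt T c)
        have : ((T'⁻¹ * (F \ G₁)) \ (F \ G₁)).card ≤
            ((T'⁻¹ * (F \ G)) \ (F \ G)).card + ∑ c ∈ C, (rt (T'⁻¹ * T) c \ rt T c).card := by
          omega
        exact_mod_cast this
      have hsumterm : ∑ c ∈ C, ((rt (T'⁻¹ * T) c \ rt T c).card : ℝ) ≤ (C.card : ℝ) * (β * T.card) := by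
        calc ∑ c ∈ C, ((rt (T'⁻¹ * T) c \ rt T c).card : ℝ) ≤ ∑ _c ∈ C, β * (T.card:ℝ) :=
              Finset.sum_le_sum hterm
          _ = (C.card : ℝ) * (β * T.card) := by rw [Finset.sum_const]; push_cast; ring
      have hbadold := hWbad T' (List.mem_cons_of_mem _ hT')
      rw [hs₁def]
      nlinarith
    -- recurse
    obtain ⟨G', s', hG'G₁, hs'0, hs'W, hφ', hG'card⟩ :=
      ih G₁ s₁ (fun T' h => hones T' (List.mem_cons_of_mem _ h))
        (fun T' h => hφT T' (List.mem_cons_of_mem _ h))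
        (List.pairwise_cons.mp hpw).2
        (fun T' h => hint T' (List.mem_cons_of_mem _ h))
        hG₁F hs₁0 hs₁W hbad₁ hφ₁
    refine ⟨G', s', hG'G₁.trans hG₁G, hs'0, hs'W, hφ', ?_⟩
    have hG₁card : ((G₁.card : ℝ)) ≤ (1 - ε/2) * G.card := by
      have h1 : ((G₁.card : ℝ)) = G.card - U.card := Finset.cast_card_sdiff hUG
      rw [h1]
      nlinarith
    have hpow0 : (0:ℝ) ≤ (1-ε/2)^(L'.length) := pow_nonneg (by linarith) _
    calc (G'.card : ℝ) ≤ max (ε * F.card) ((1-ε/2)^(L'.length) * G₁.card) := hG'card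
      _ ≤ max (ε * F.card) ((1-ε/2)^((T :: L').length) * G.card) := by
          apply max_le_max (le_refl _)
          rw [List.length_cons, pow_succ]
          calc (1-ε/2)^(L'.length) * (G₁.card : ℝ) ≤ (1-ε/2)^(L'.length) * ((1-ε/2) * G.card) :=
                mul_le_mul_of_nonneg_left hG₁card hpow0
            _ = (1-ε/2)^(L'.length) * (1-ε/2) * G.card := by ring

lemma QT (φ : Finset Γ → ℝ)
    (hpos : ∀ F, 0 ≤ φ F)
    (hsub : ∀ F₁ F₂ : Finset Γ, φ (F₁ ∪ F₂) ≤ φ F₁ + φ F₂)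
    (hinv : ∀ (F : Finset Γ) (s : Γ), φ (F.image fun t => t * s) = φ F)
    {ε δ β ρ : ℝ} (hε : 0 < ε) (hε2 : ε ≤ 1/2) (hδ : 0 ≤ δ) (hβ : 0 ≤ β)
    (hη : δ + 2*β ≤ ε/2) (hρ : 0 ≤ ρ)
    (L : List (Finset Γ)) (hones : ∀ T ∈ L, (1:Γ) ∈ T)
    (hφT : ∀ T ∈ L, φ T ≤ ρ * T.card)
    (hpw : List.Pairwise (fun A B => (((B⁻¹ * A : Finset Γ)).card : ℝ) ≤ (1+β) * A.card) L)
    (hlen : (1-ε/2)^(L.length) ≤ ε)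
    (F : Finset Γ) (hF : F.Nonempty)
    (hint : ∀ T ∈ L, (1-δ) * F.card ≤ ((intr T F).card : ℝ)) :
    φ F ≤ (ρ/(1-ε) + ε * φ {1}) * F.card := by
  have hFF : F \ F = (∅ : Finset Γ) := Finset.sdiff_self F
  obtain ⟨G', s', hG'F, hs'0, hs'W, hφ', hG'card⟩ :=
    QTind φ hpos hsub hinv hε hε2 hδ hβ hη hρ F L F 0 hones hφT hpw hint
      (Finset.Subset.refl F) le_rfl (by rw [hFF]; simp)
      (by intro T _; rw [hFF]; simp) (by rw [hFF]; rintro ⟨x, hx⟩; simp at hx)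
  have hFc0 : (0:ℝ) < F.card := by exact_mod_cast Finset.card_pos.mpr hF
  have hG'le : (G'.card : ℝ) ≤ ε * F.card := by
    refine le_trans hG'card (max_le le_rfl ?_)
    exact mul_le_mul_of_nonneg_right hlen (le_of_lt hFc0)
  have hW'card : ((F \ G').card : ℝ) = F.card - G'.card := Finset.cast_card_sdiff hG'F
  have hW'ne : (F \ G').Nonempty := by
    rw [← Finset.card_pos]
    have : (0:ℝ) < ((F \ G').card : ℝ) := by rw [hW'card]; nlinarith
    exact_mod_cast this
  have hM0 : 0 ≤ φ {1} := hpos _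
  have h1 : φ F ≤ φ (F \ G') + (F \ (F \ G')).card * φ {1} :=
    phi_diff φ hpos hsub hinv Finset.sdiff_subset hW'ne
  have h2 : F \ (F \ G') = G' := Finset.sdiff_sdiff_eq_self hG'F
  rw [h2] at h1
  have h3 : φ (F \ G') ≤ ρ * s' := hφ' hW'ne
  have h4 : (1-ε) * s' ≤ (F.card : ℝ) := by
    refine le_trans hs'W ?_
    rw [hW'card]
    have : (0:ℝ) ≤ G'.card := Nat.cast_nonneg _
    linarith
  have h5 : ρ * s' ≤ ρ / (1-ε) * F.card := by
    have h1e : (0:ℝ) < 1 - ε := by linarith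
    rw [div_mul_eq_mul_div, le_div_iff₀ h1e]
    nlinarith
  calc φ F ≤ φ (F \ G') + (G'.card : ℝ) * φ {1} := h1
    _ ≤ ρ / (1-ε) * F.card + (ε * F.card) * φ {1} := by
        have := mul_le_mul_of_nonneg_right hG'le hM0
        linarith
    _ = (ρ/(1-ε) + ε * φ {1}) * F.card := by ring

lemma foldr_subset : ∀ (L : List (Finset Γ)) (T : Finset Γ), T ∈ L →
    T⁻¹ ⊆ L.foldr (fun T acc => T⁻¹ ∪ acc) ∅ := by
  intro L
  induction L with
  | nil => simp
  | cons A L ih =>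
    intro T hT
    rcases List.mem_cons.mp hT with rfl | h
    · exact Finset.subset_union_left
    · exact (ih T h).trans Finset.subset_union_right

lemma tiles_exist (φ : Finset Γ → ℝ)
    (hinv : ∀ (F : Finset Γ) (s : Γ), φ (F.image fun t => t * s) = φ F)
    {ρ β : ℝ} (hβ : 0 < β)
    (hex : ∀ (K : Finset Γ) (δ : ℝ), 0 < δ → ∃ F, memB K δ F ∧ φ F ≤ ρ * F.card) :
    ∀ n : ℕ, ∃ L : List (Finset Γ), L.length = n ∧ (∀ T ∈ L, (1:Γ) ∈ T) ∧
      (∀ T ∈ L, φ T ≤ ρ * T.card) ∧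
      List.Pairwise (fun A B => (((B⁻¹ * A : Finset Γ)).card : ℝ) ≤ (1+β) * A.card) L := by
  intro n
  induction n with
  | zero => exact ⟨[], by simp⟩
  | succ n ih =>
    obtain ⟨L, hlen, hone, hφ, hpw⟩ := ih
    set K := L.foldr (fun T acc => T⁻¹ ∪ acc) ∅ with hK
    have hδ' : (0:ℝ) < β / (K.card + 1) := by positivity
    obtain ⟨F0, hF0B, hF0φ⟩ := hex K _ hδ'
    obtain ⟨t, ht⟩ := hF0B.1
    set A := rt F0 t⁻¹ with hA
    have hA1 : (1:Γ) ∈ A := mem_rt.mpr ⟨t, ht, mul_inv_cancel t⟩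
    have hAB : memB K (β / (K.card + 1)) A := memB_rt hF0B t⁻¹
    have hAφ : φ A ≤ ρ * A.card := by
      have h1 : φ A = φ F0 := hinv F0 t⁻¹
      have h2 : (A.card : ℝ) = F0.card := by exact_mod_cast card_rt F0 t⁻¹
      rw [h1, h2]; exact hF0φ
    have key : ∀ T ∈ L, ((T⁻¹ * A : Finset Γ).card : ℝ) ≤ (1+β) * A.card := by
      intro T hT
      have hmem : T⁻¹ ⊆ K := foldr_subset L T hT
      have hsub1 : T⁻¹ * A ⊆ K * A := Finset.mul_subset_mul_right hmem
      have hsub2 : K * A ⊆ A ∪ (K * (A \ intr K A)) := by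
        intro x hx
        obtain ⟨k, hk, a, ha, rfl⟩ := Finset.mem_mul.mp hx
        by_cases hai : a ∈ intr K A
        · exact Finset.mem_union_left _ ((mem_intr.mp hai).2 k hk)
        · exact Finset.mem_union_right _
            (Finset.mul_mem_mul hk (Finset.mem_sdiff.mpr ⟨ha, hai⟩))
      have h3 : (T⁻¹ * A).card ≤ A.card + K.card * (A \ intr K A).card := by
        calc (T⁻¹ * A).card ≤ (A ∪ (K * (A \ intr K A))).card :=
              Finset.card_le_card (hsub1.trans hsub2)
          _ ≤ A.card + (K * (A \ intr K A)).card := Finset.card_union_le _ _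
          _ ≤ A.card + K.card * (A \ intr K A).card := by
              have := Finset.card_mul_le (s := K) (t := A \ intr K A)
              omega
      have h3' : ((T⁻¹ * A : Finset Γ).card : ℝ) ≤ (A.card : ℝ) + (K.card : ℝ) * (A \ intr K A).card := by
        exact_mod_cast h3
      have h4 : ((A \ intr K A).card : ℝ) = (A.card : ℝ) - (intr K A).card :=
        Finset.cast_card_sdiff (intr_subset K A)
      have h5 := hAB.2
      rw [memB_def] at hAB
      have h6 : ((A \ intr K A).card : ℝ) ≤ (β / (K.card + 1)) * A.card := by
        rw [h4]; nlinarith [hAB.2]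
      have h7 : (K.card : ℝ) * ((β / (K.card + 1)) * A.card) ≤ β * A.card := by
        have hK0 : (0:ℝ) ≤ K.card := Nat.cast_nonneg _
        have hA0 : (0:ℝ) ≤ A.card := Nat.cast_nonneg _
        have : (K.card : ℝ) * (β / (K.card + 1)) ≤ β := by
          rw [div_eq_mul_inv]
          have h8 : (0:ℝ) < (K.card : ℝ) + 1 := by positivity
          rw [mul_comm (β) _, ← mul_assoc]
          have : (K.card : ℝ) * ((K.card : ℝ) + 1)⁻¹ ≤ 1 := by
            rw [mul_inv_le_iff₀ h8]; linarith
          nlinarith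
        nlinarith
      have hKA0 : (0:ℝ) ≤ (K.card : ℝ) := Nat.cast_nonneg _
      have h9 : (K.card : ℝ) * ((A \ intr K A).card : ℝ) ≤ β * A.card :=
        le_trans (mul_le_mul_of_nonneg_left h6 hKA0) h7
      nlinarith
    exact ⟨A :: L, by simp [hlen], by
        intro T hT
        rcases List.mem_cons.mp hT with rfl | h
        · exact hA1
        · exact hone T h, by
        intro T hT
        rcases List.mem_cons.mp hT with rfl | h
        · exact hAφ
        · exact hφ T h,
      List.pairwise_cons.mpr ⟨key, hpw⟩⟩

end OWAux

/-- Ornstein–Weiss lemma: for a right-invariant, monotone, subadditive nonnegative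
function `φ` on finite subsets of a countable amenable group `Γ`, the averages
`φ(F)/|F|` converge as `F` becomes more and more invariant. -/
theorem stmt12 {Γ : Type*} [Group Γ] [Countable Γ]
    (hamen : ∀ (K : Finset Γ) (δ : ℝ), 0 < δ → ∃ F : Finset Γ, memB K δ F)
    (φ : Finset Γ → ℝ) (hpos : ∀ F, 0 ≤ φ F)
    (hinv : ∀ (F : Finset Γ) (s : Γ), φ (F.image fun t => t * s) = φ F)
    (hmono : ∀ E F : Finset Γ, E ⊆ F → φ E ≤ φ F)
    (hsub : ∀ F₁ F₂ : Finset Γ, φ (F₁ ∪ F₂) ≤ φ F₁ + φ F₂) :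
    ∃ c : ℝ, ∀ ε : ℝ, 0 < ε → ∃ (K : Finset Γ) (δ : ℝ), 0 < δ ∧
      ∀ F : Finset Γ, memB K δ F → |φ F / F.card - c| < ε := by
  classical
  set M := φ ({1} : Finset Γ) with hMdef
  have hM0 : 0 ≤ M := hpos _
  set S : Set ℝ :=
    {b | ∃ (K : Finset Γ) (δ : ℝ), 0 < δ ∧ ∀ F, memB K δ F → φ F ≤ b * F.card} with hSdef
  have hcard_pos : ∀ {F : Finset Γ}, F.Nonempty → (0:ℝ) < F.card := fun h => by
    exact_mod_cast Finset.card_pos.mpr h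
  have hMS : M ∈ S := by
    refine ⟨∅, 1, one_pos, fun F hF => ?_⟩
    have := phi_le_card φ hpos hsub hinv hF.1
    linarith [this, mul_comm (F.card : ℝ) M]
  have hSne : S.Nonempty := ⟨M, hMS⟩
  have hlb : ∀ b ∈ S, (0:ℝ) ≤ b := by
    rintro b ⟨K, δ, hδ, hb⟩
    obtain ⟨F, hF⟩ := hamen K δ hδ
    have h1 := hb F hF
    have h2 := hpos F
    have h3 := hcard_pos hF.1
    nlinarith
  have hSbdd : BddBelow S := ⟨0, hlb⟩
  set c := sInf S with hcdef
  have hc0 : 0 ≤ c := le_csInf hSne hlb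
  have hcM : c ≤ M := csInf_le hSbdd hMS
  refine ⟨c, ?_⟩
  intro ε hε
  obtain ⟨b, hbS, hbc⟩ := exists_lt_of_csInf_lt hSne (show sInf S < c + ε/2 by
    rw [← hcdef]; linarith)
  obtain ⟨K₁, δ₁, hδ₁, hK₁⟩ := hbS
  have lower : ∃ (K₂ : Finset Γ) (δ₂ : ℝ), 0 < δ₂ ∧
      ∀ F, memB K₂ δ₂ F → (c - ε/2) * F.card ≤ φ F := by
    by_contra hcon
    push_neg at hcon
    set ρ := c - ε/2 with hρdef
    have hρ0 : 0 ≤ ρ := by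
      by_contra hneg
      push_neg at hneg
      obtain ⟨F, hFB, hFlt⟩ := hcon ∅ 1 one_pos
      have h1 := hpos F
      have h2 := hcard_pos hFB.1
      nlinarith
    set ε' := min (1/2 : ℝ) (ε / (12 * (M+1))) with hε'def
    have hε'0 : 0 < ε' := lt_min (by norm_num) (by positivity)
    have hε'2 : ε' ≤ 1/2 := min_le_left _ _
    have hε'M : ε' ≤ ε / (12*(M+1)) := min_le_right _ _
    have hδ0 : (0:ℝ) < ε'^2/8 := by positivity
    have hβ0 : (0:ℝ) < ε'^2/16 := by positivity
    have hη : ε'^2/8 + 2*(ε'^2/16) ≤ ε'/2 := by nlinarith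
    obtain ⟨n, hn⟩ := exists_pow_lt_of_lt_one hε'0 (show 1 - ε'/2 < 1 by linarith)
    obtain ⟨L, hlen, hones, hφT, hpw⟩ := tiles_exist φ hinv hβ0
      (fun K δ hδ => by
        obtain ⟨F, h1, h2⟩ := hcon K δ hδ
        exact ⟨F, h1, le_of_lt h2⟩) n
    set K₂ := L.foldr (fun T acc => T ∪ acc) ∅ with hK₂def
    have hcS : (c - ε/4) ∈ S := by
      refine ⟨K₂, ε'^2/8, hδ0, ?_⟩
      intro F hFB
      have hint : ∀ T ∈ L, (1-(ε'^2/8)) * F.card ≤ ((intr T F).card : ℝ) := by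
        intro T hT
        refine le_trans hFB.2 ?_
        have : intr K₂ F ⊆ intr T F := intr_anti (foldr_union_subset L T hT) F
        exact_mod_cast Nat.cast_le.mpr (Finset.card_le_card this)
      have hQT := QT φ hpos hsub hinv hε'0 hε'2 (le_of_lt hδ0) (le_of_lt hβ0) hη hρ0
        L hones hφT hpw (by rw [hlen]; exact le_of_lt hn) F hFB.1 hint
      have hbound : ρ/(1-ε') + ε' * M ≤ c - ε/4 := by
        have h1e : (0:ℝ) < 1 - ε' := by linarith
        have h1 : ρ/(1-ε') ≤ ρ * (1 + 2*ε') := by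
          rw [div_le_iff₀ h1e]
          nlinarith [mul_nonneg (mul_nonneg hρ0 (le_of_lt hε'0))
            (show (0:ℝ) ≤ 1 - 2*ε' by linarith)]
        have h2 : ρ ≤ M := by rw [hρdef]; linarith
        have h3 : ρ * (1+2*ε') ≤ ρ + 2*ε'*M := by
          have := mul_le_mul_of_nonneg_left h2 (show (0:ℝ) ≤ 2*ε' by linarith)
          nlinarith
        have hM1 : (0:ℝ) < M + 1 := by linarith
        have h4 : 3 * (ε' * M) ≤ ε/4 := by
          have h5 : ε' * M ≤ (ε / (12*(M+1))) * M :=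
            mul_le_mul_of_nonneg_right hε'M hM0
          have h6 : (ε / (12*(M+1))) * M ≤ ε/12 := by
            rw [div_mul_eq_mul_div, div_le_div_iff₀ (by positivity) (by norm_num)]
            nlinarith [hε.le, hM0]
          linarith
        calc ρ/(1-ε') + ε' * M ≤ ρ * (1+2*ε') + ε' * M := by linarith
          _ ≤ (ρ + 2*ε'*M) + ε' * M := by linarith
          _ = ρ + 3 * (ε' * M) := by ring
          _ ≤ ρ + ε/4 := by linarith
          _ = c - ε/4 := by rw [hρdef]; ring
      have hFc := hcard_pos hFB.1
      have : (ρ/(1-ε') + ε' * M) * F.card ≤ (c - ε/4) * F.card :=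
        mul_le_mul_of_nonneg_right hbound (le_of_lt hFc)
      calc φ F ≤ (ρ/(1-ε') + ε' * φ {1}) * F.card := hQT
        _ = (ρ/(1-ε') + ε' * M) * F.card := by rw [← hMdef]
        _ ≤ (c - ε/4) * F.card := this
    have : c ≤ c - ε/4 := csInf_le hSbdd hcS
    linarith
  obtain ⟨K₂, δ₂, hδ₂, hK₂⟩ := lower
  refine ⟨K₁ ∪ K₂, min δ₁ δ₂, lt_min hδ₁ hδ₂, ?_⟩
  intro F hFB
  have hF1 : memB K₁ δ₁ F := memB_mono Finset.subset_union_left (min_le_left _ _) hFB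
  have hF2 : memB K₂ δ₂ F := memB_mono Finset.subset_union_right (min_le_right _ _) hFB
  have hFc := hcard_pos hFB.1
  have h1 : φ F ≤ b * F.card := hK₁ F hF1
  have h2 : (c - ε/2) * F.card ≤ φ F := hK₂ F hF2
  rw [abs_lt]
  constructor
  · have : c - ε/2 ≤ φ F / F.card := by
      rw [le_div_iff₀ hFc]; linarith
    linarith
  · have : φ F / F.card ≤ b := by
      rw [div_le_iff₀ hFc]; linarith
    linarith
end

section
/- Let X be a compact metric space, π : X → Y continuous with a continuous section τ : Y → X (π ∘ τ = id_Y), and suppose X × G → X is a G-extension structure (π⁻¹(π(x)) = xG and g ↦ xg injective). Then for every x ∈ X there is a unique g_x ∈ G with x = τ(π(x)) g_x, and the map X → G, x ↦ g_x, is continuous. -/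
/-- For a `G`-extension `π : X → Y` admitting a continuous section `τ`, every `x ∈ X`
can be written uniquely as `x = τ(π(x)) g_x`, and `x ↦ g_x` is continuous. -/
theorem stmt18 {X Y G : Type*} [MetricSpace X] [CompactSpace X]
    [MetricSpace G] [CompactSpace G] [TopologicalSpace Y]
    (π : X → Y) (hπ : Continuous π) (hπs : Function.Surjective π)
    (τ : Y → X) (hτ : Continuous τ) (hsec : ∀ y : Y, π (τ y) = y)
    (act : X → G → X) (hcont : Continuous fun p : X × G => act p.1 p.2)
    (hfiber : ∀ x : X, π ⁻¹' {π x} = Set.range (act x))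
    (hinj : ∀ (x : X) (g g' : G), act x g = act x g' → g = g') :
    ∃ gmap : X → G, Continuous gmap ∧
      (∀ x : X, x = act (τ (π x)) (gmap x)) ∧
      ∀ (x : X) (g : G), x = act (τ (π x)) g → g = gmap x := by
  -- The map `e : X × G → X × X`, `(x,g) ↦ (x, x·g)` is a closed embedding.
  set e : X × G → X × X := fun p => (p.1, act p.1 p.2) with he_def
  have he_cont : Continuous e := continuous_fst.prodMk hcont
  have he_inj : Function.Injective e := by
    rintro ⟨x, g⟩ ⟨x', g'⟩ h
    have h1 : x = x' := congrArg Prod.fst h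
    subst h1
    have h2 : act x g = act x g' := congrArg Prod.snd h
    exact Prod.ext rfl (hinj x g g' h2)
  have hce := he_cont.isClosedEmbedding he_inj
  let h : (X × G) ≃ₜ Set.range e := hce.toIsEmbedding.toHomeomorph
  -- The map sending `x` to `(τ(π x), x)`, which lies in the range of `e`.
  have hmem : ∀ x : X, (τ (π x), x) ∈ Set.range e := by
    intro x
    have hx : x ∈ π ⁻¹' {π (τ (π x))} := by
      simp [hsec]
    rw [hfiber (τ (π x))] at hx
    obtain ⟨g, hg⟩ := hx
    exact ⟨(τ (π x), g), by simp [he_def, hg]⟩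
  let s : X → Set.range e := fun x => ⟨(τ (π x), x), hmem x⟩
  have hs_cont : Continuous s :=
    Continuous.subtype_mk ((hτ.comp hπ).prodMk continuous_id) _
  refine ⟨fun x => (h.symm (s x)).2, ?_, ?_, ?_⟩
  · exact continuous_snd.comp (h.symm.continuous.comp hs_cont)
  · intro x
    have key : e (h.symm (s x)) = (τ (π x), x) := by
      exact congrArg Subtype.val (h.apply_symm_apply (s x))
    have h1 : (h.symm (s x)).1 = τ (π x) := congrArg Prod.fst key
    have h2 : act (h.symm (s x)).1 (h.symm (s x)).2 = x := congrArg Prod.snd key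
    rw [h1] at h2
    exact h2.symm
  · intro x g hg
    have key : e (h.symm (s x)) = (τ (π x), x) := by
      exact congrArg Subtype.val (h.apply_symm_apply (s x))
    have h1 : (h.symm (s x)).1 = τ (π x) := congrArg Prod.fst key
    have h2 : act (h.symm (s x)).1 (h.symm (s x)).2 = x := congrArg Prod.snd key
    rw [h1] at h2
    exact hinj (τ (π x)) g _ (hg.symm.trans h2.symm)
end
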